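/- arXiv:2107.12015 — 6 statements merged into one kernel-verified Lean document; each statement's English description precedes it below -/
import Mathlib

section
/- Let V : (0,∞) → ℝ be continuous and strictly increasing, w : (0,∞) → ℝ continuous, and let u ∈ C²((0,∞);ℝ) solve −u″ + Vu = w on (0,∞) with u(x) → 0 as x → +∞. Let 0 ≤ A < B < C be values of V, let x_B ∈ (0,∞) be the point with V(x_B) = B, and let ε, γ ∈ (0,1). Set, for j = 0,1, 𝔠_j = ∫_{{V>C}} exp(−2ε∫_{x_B}^y V^{1/2}) V(y)^j dy, and 𝔇 = ∫_{{V>B}} exp(2γ∫_{x_B}^y V^{1/2}) w(y)²/V(y) dy + ∫_{{A<V<B}} w²/V + |{A<V<B}|^{−2} ∫_{{A<V<B}} u². Then there exists K = K(γ), independent of all other data, such that for every x with V(x) > C and every β ≥ 0: if β + ε ≤ γ then |u′(x)| ≤ K (𝔠₁𝔇)^{1/2} exp(−β∫_{x_B}^x V^{1/2}); if moreover β + 3ε ≤ γ then |u(x)| ≤ K 𝔠₀ (𝔠₁𝔇)^{1/2} exp(−β∫_{x_B}^x V^{1/2}). -/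
set_option maxHeartbeats 1000000

open MeasureTheory Filter Set intervalIntegral

namespace PAgmon

/-- Cauchy–Schwarz for interval integrals of continuous functions. -/
lemma cs_interval {f g : ℝ → ℝ} {p q : ℝ} (hpq : p ≤ q)
    (hf : ContinuousOn f (Icc p q)) (hg : ContinuousOn g (Icc p q)) :
    ∫ y in p..q, f y * g y ≤
      Real.sqrt (∫ y in p..q, f y ^ 2) * Real.sqrt (∫ y in p..q, g y ^ 2) := by
  have huIcc : uIcc p q = Icc p q := uIcc_of_le hpq
  have hfi : IntervalIntegrable f volume p q := by
    apply ContinuousOn.intervalIntegrable; rwa [huIcc]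
  have hgi : IntervalIntegrable g volume p q := by
    apply ContinuousOn.intervalIntegrable; rwa [huIcc]
  have hf2 : IntervalIntegrable (fun y => f y ^ 2) volume p q := by
    apply ContinuousOn.intervalIntegrable; rw [huIcc]; exact (hf.pow 2)
  have hg2 : IntervalIntegrable (fun y => g y ^ 2) volume p q := by
    apply ContinuousOn.intervalIntegrable; rw [huIcc]; exact (hg.pow 2)
  have hfg : IntervalIntegrable (fun y => f y * g y) volume p q := by
    apply ContinuousOn.intervalIntegrable; rw [huIcc]; exact hf.mul hg
  set P := ∫ y in p..q, f y ^ 2 with hP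
  set Q := ∫ y in p..q, g y ^ 2 with hQ
  set I := ∫ y in p..q, f y * g y with hI
  have hPnn : 0 ≤ P := intervalIntegral.integral_nonneg hpq (fun y _ => sq_nonneg _)
  have hQnn : 0 ≤ Q := intervalIntegral.integral_nonneg hpq (fun y _ => sq_nonneg _)
  have key : ∀ t : ℝ, 0 ≤ P * (t * t) + (2 * I) * t + Q := by
    intro t
    have h1 : ∀ y, (t * f y + g y) ^ 2
        = t * t * f y ^ 2 + 2 * t * (f y * g y) + g y ^ 2 := by intro y; ring
    have h2 : (0:ℝ) ≤ ∫ y in p..q, (t * f y + g y) ^ 2 :=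
      intervalIntegral.integral_nonneg hpq (fun y _ => sq_nonneg _)
    have h3 : (∫ y in p..q, (t * f y + g y) ^ 2)
        = t * t * P + 2 * t * I + Q := by
      rw [intervalIntegral.integral_congr (g := fun y =>
        t * t * f y ^ 2 + 2 * t * (f y * g y) + g y ^ 2) (fun y _ => h1 y)]
      rw [intervalIntegral.integral_add ((hf2.const_mul _).add (hfg.const_mul _)) hg2,
        intervalIntegral.integral_add (hf2.const_mul _) (hfg.const_mul _),
        intervalIntegral.integral_const_mul, intervalIntegral.integral_const_mul]
    nlinarith [h2, h3]
  have hdisc : discrim P (2 * I) Q ≤ 0 := discrim_le_zero key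
  rw [discrim] at hdisc
  have hIQ : I ^ 2 ≤ P * Q := by nlinarith
  calc I ≤ |I| := le_abs_self I
    _ = Real.sqrt (I ^ 2) := (Real.sqrt_sq_eq_abs I).symm
    _ ≤ Real.sqrt (P * Q) := Real.sqrt_le_sqrt hIQ
    _ = Real.sqrt P * Real.sqrt Q := Real.sqrt_mul hPnn _

section Cutoff

variable {p r : ℝ}

/-- bump used to build the cutoff -/
noncomputable def bump (p r t : ℝ) : ℝ := max 0 ((t - p) * (r - t))

lemma bump_cont : Continuous (bump p r) := by
  unfold bump; fun_prop

lemma bump_nonneg (t : ℝ) : 0 ≤ bump p r t := le_max_left _ _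

lemma bump_eq_zero_left (hpr : p < r) {t : ℝ} (ht : t ≤ p) : bump p r t = 0 := by
  unfold bump
  apply max_eq_left
  apply mul_nonpos_of_nonpos_of_nonneg <;> linarith

lemma bump_eq_zero_right (hpr : p < r) {t : ℝ} (ht : r ≤ t) : bump p r t = 0 := by
  unfold bump
  apply max_eq_left
  apply mul_nonpos_of_nonneg_of_nonpos <;> linarith

lemma bump_le (t : ℝ) : bump p r t ≤ (r - p) ^ 2 / 4 := by
  unfold bump
  apply max_le
  · positivity
  · nlinarith [sq_nonneg (t - p - (r - t))]

/-- normalization -/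
noncomputable def bumpN (p r : ℝ) : ℝ := ∫ t in p..r, bump p r t

lemma bumpN_ge (hpr : p < r) : (r - p) ^ 3 / 32 ≤ bumpN p r := by
  have h := hpr
  set h4 := (r - p) / 4 with hh4
  have h40 : 0 < h4 := by rw [hh4]; linarith
  have hsplit : bumpN p r = (∫ t in p..(p + h4), bump p r t)
      + (∫ t in (p + h4)..(r - h4), bump p r t) + (∫ t in (r - h4)..r, bump p r t) := by
    unfold bumpN
    rw [intervalIntegral.integral_add_adjacent_intervals,
      intervalIntegral.integral_add_adjacent_intervals] <;>
    · apply Continuous.intervalIntegrable; exact bump_cont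
  have h1 : (0:ℝ) ≤ ∫ t in p..(p + h4), bump p r t :=
    intervalIntegral.integral_nonneg (by linarith) (fun t _ => bump_nonneg t)
  have h3 : (0:ℝ) ≤ ∫ t in (r - h4)..r, bump p r t :=
    intervalIntegral.integral_nonneg (by linarith) (fun t _ => bump_nonneg t)
  have h2 : (r - p)/2 * ((r - p)^2/16) ≤ ∫ t in (p + h4)..(r - h4), bump p r t := by
    have hle : p + h4 ≤ r - h4 := by rw [hh4]; linarith
    have hconst : ((r - h4) - (p + h4)) * ((r-p)^2/16)
        = ∫ _ in (p + h4)..(r - h4), ((r-p)^2/16 : ℝ) := by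
      rw [intervalIntegral.integral_const, smul_eq_mul]
    have hmono : (∫ _ in (p + h4)..(r - h4), ((r-p)^2/16 : ℝ))
        ≤ ∫ t in (p + h4)..(r - h4), bump p r t := by
      apply intervalIntegral.integral_mono_on hle
        intervalIntegrable_const (Continuous.intervalIntegrable bump_cont _ _)
      intro t ht
      have ht1 : p + h4 ≤ t := ht.1
      have ht2 : t ≤ r - h4 := ht.2
      unfold bump
      have : (r-p)^2/16 ≤ (t - p) * (r - t) := by nlinarith
      exact le_trans this (le_max_right _ _)
    have : (r - h4) - (p + h4) = (r - p)/2 := by rw [hh4]; ring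
    nlinarith [hmono, hconst]
  nlinarith

lemma bumpN_pos (hpr : p < r) : 0 < bumpN p r := by
  have := bumpN_ge hpr
  have hrp : 0 < r - p := by linarith
  have h3 : 0 < (r - p)^3/32 := by positivity
  linarith

/-- the cutoff function -/
noncomputable def cutoff (p r y : ℝ) : ℝ := (∫ t in p..y, bump p r t) / bumpN p r

lemma cutoff_hasDerivAt (y : ℝ) :
    HasDerivAt (cutoff p r) (bump p r y / bumpN p r) y := by
  unfold cutoff
  exact ((bump_cont.integral_hasStrictDerivAt p y).hasDerivAt).div_const _

lemma cutoff_eq_zero (hpr : p < r) {y : ℝ} (hy : y ≤ p) : cutoff p r y = 0 := by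
  unfold cutoff
  rw [intervalIntegral.integral_congr (g := fun _ => (0:ℝ)), intervalIntegral.integral_zero,
    zero_div]
  intro t ht
  rw [uIcc_of_ge hy] at ht
  exact bump_eq_zero_left hpr ht.2

lemma cutoff_eq_one (hpr : p < r) {y : ℝ} (hy : r ≤ y) : cutoff p r y = 1 := by
  have hN := bumpN_pos hpr
  unfold cutoff
  have : (∫ t in p..y, bump p r t) = bumpN p r + ∫ t in r..y, bump p r t := by
    unfold bumpN
    rw [intervalIntegral.integral_add_adjacent_intervals] <;>
    · apply Continuous.intervalIntegrable; exact bump_cont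
  rw [this]
  have : (∫ t in r..y, bump p r t) = 0 := by
    rw [intervalIntegral.integral_congr (g := fun _ => (0:ℝ)), intervalIntegral.integral_zero]
    intro t ht
    rw [uIcc_of_le hy] at ht
    exact bump_eq_zero_right hpr ht.1
  rw [this]
  field_simp
  ring

lemma cutoff_nonneg (hpr : p < r) (y : ℝ) : 0 ≤ cutoff p r y := by
  have hN := bumpN_pos hpr
  rcases le_or_gt y p with hy | hy
  · rw [cutoff_eq_zero hpr hy]
  · apply div_nonneg _ hN.le
    exact intervalIntegral.integral_nonneg hy.le (fun t _ => bump_nonneg t)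

lemma cutoff_le_one (hpr : p < r) (y : ℝ) : cutoff p r y ≤ 1 := by
  have hN := bumpN_pos hpr
  rcases le_or_gt y p with hy | hy
  · rw [cutoff_eq_zero hpr hy]; norm_num
  · rcases le_or_gt r y with hy2 | hy2
    · rw [cutoff_eq_one hpr hy2]
    · unfold cutoff
      rw [div_le_one hN]
      unfold bumpN
      have : (∫ t in p..r, bump p r t) = (∫ t in p..y, bump p r t)
          + ∫ t in y..r, bump p r t := by
        rw [intervalIntegral.integral_add_adjacent_intervals] <;>
        · apply Continuous.intervalIntegrable; exact bump_cont
      rw [this]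
      have : (0:ℝ) ≤ ∫ t in y..r, bump p r t :=
        intervalIntegral.integral_nonneg hy2.le (fun t _ => bump_nonneg t)
      linarith

lemma cutoff_deriv_nonneg (hpr : p < r) (y : ℝ) : 0 ≤ bump p r y / bumpN p r :=
  div_nonneg (bump_nonneg y) (bumpN_pos hpr).le

lemma cutoff_deriv_le (hpr : p < r) (y : ℝ) : bump p r y / bumpN p r ≤ 16 / (r - p) := by
  have hN := bumpN_ge hpr
  have hNpos := bumpN_pos hpr
  have hb := bump_le (p := p) (r := r) y
  have hrp : 0 < r - p := by linarith
  rw [div_le_div_iff₀ hNpos hrp]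
  calc bump p r y * (r - p) ≤ (r-p)^2/4 * (r - p) := by nlinarith [bump_nonneg (p := p) (r := r) y]
    _ ≤ 16 * ((r-p)^3/32) := by nlinarith
    _ ≤ 16 * bumpN p r := by nlinarith

lemma cutoff_deriv_eq_zero_right (hpr : p < r) {y : ℝ} (hy : r ≤ y) : bump p r y / bumpN p r = 0 := by
  rw [bump_eq_zero_right hpr hy, zero_div]

end Cutoff

end PAgmon

open MeasureTheory Filter Set intervalIntegral

namespace PAgmon

structure Ctx where
  V : ℝ → ℝ
  w : ℝ → ℝ
  u : ℝ → ℝ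
  u' : ℝ → ℝ
  u'' : ℝ → ℝ
  A : ℝ
  B : ℝ
  Cl : ℝ
  xA : ℝ
  xB : ℝ
  xC : ℝ
  ε : ℝ
  γ : ℝ
  hV : ContinuousOn V (Ioi 0)
  hVmono : StrictMonoOn V (Ioi 0)
  hw : ContinuousOn w (Ioi 0)
  hu : ∀ x ∈ Ioi (0:ℝ), HasDerivAt u (u' x) x
  hu' : ∀ x ∈ Ioi (0:ℝ), HasDerivAt u' (u'' x) x
  hu'' : ContinuousOn u'' (Ioi 0)
  heq : ∀ x ∈ Ioi (0:ℝ), -u'' x + V x * u x = w x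
  hlim : Tendsto u atTop (nhds 0)
  hA0 : 0 ≤ A
  hAB : A < B
  hBC : B < Cl
  hxA : xA ∈ Ioi (0:ℝ)
  hVxA : V xA = A
  hxC : xC ∈ Ioi (0:ℝ)
  hVxC : V xC = Cl
  hxB : xB ∈ Ioi (0:ℝ)
  hVxB : V xB = B
  hε0 : 0 < ε
  hε1 : ε < 1
  hγ0 : 0 < γ
  hγ1 : γ < 1

namespace Ctx
variable (c : Ctx)

lemma hxA0 : (0:ℝ) < c.xA := c.hxA
lemma hxB0 : (0:ℝ) < c.xB := c.hxB
lemma hxC0 : (0:ℝ) < c.xC := c.hxC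

lemma hxAB : c.xA < c.xB := by
  have := (c.hVmono.lt_iff_lt c.hxA c.hxB).mp (by rw [c.hVxA, c.hVxB]; exact c.hAB)
  exact this

lemma hxBC : c.xB < c.xC := by
  exact (c.hVmono.lt_iff_lt c.hxB c.hxC).mp (by rw [c.hVxB, c.hVxC]; exact c.hBC)

/-- left endpoint of the cutoff transition -/
noncomputable def a : ℝ := (c.xA + c.xB) / 2

lemma haA : c.xA < c.a := by have := c.hxAB; unfold a; linarith
lemma haB : c.a < c.xB := by have := c.hxAB; unfold a; linarith
lemma ha0 : (0:ℝ) < c.a := lt_trans c.hxA0 c.haA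

lemma mem_Ioi_of_ge {y : ℝ} (hy : c.a ≤ y) : y ∈ Ioi (0:ℝ) := lt_of_lt_of_le c.ha0 hy

lemma hVpos {y : ℝ} (hy : c.a ≤ y) : 0 < c.V y := by
  have h1 : c.V c.xA < c.V c.a := c.hVmono c.hxA (c.mem_Ioi_of_ge le_rfl) c.haA
  have h2 : c.V c.a ≤ c.V y :=
    c.hVmono.monotoneOn (c.mem_Ioi_of_ge le_rfl) (c.mem_Ioi_of_ge hy) hy
  have := c.hA0; rw [c.hVxA] at h1; linarith

lemma hVgeB {y : ℝ} (hy : c.xB ≤ y) : c.B ≤ c.V y := by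
  have h2 : c.V c.xB ≤ c.V y :=
    c.hVmono.monotoneOn c.hxB (lt_of_lt_of_le c.hxB0 hy) hy
  rwa [c.hVxB] at h2

lemma setC_eq : {y : ℝ | 0 < y ∧ c.Cl < c.V y} = Ioi c.xC := by
  ext y
  simp only [mem_setOf_eq, mem_Ioi]
  constructor
  · rintro ⟨hy0, hyC⟩
    by_contra h
    push_neg at h
    have : c.V y ≤ c.V c.xC := c.hVmono.monotoneOn (mem_Ioi.mpr hy0) c.hxC h
    rw [c.hVxC] at this; linarith
  · intro hy
    have hy0 : 0 < y := lt_trans c.hxC0 hy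
    refine ⟨hy0, ?_⟩
    have := c.hVmono c.hxC (mem_Ioi.mpr hy0) hy
    rwa [c.hVxC] at this

lemma setB_eq : {y : ℝ | 0 < y ∧ c.B < c.V y} = Ioi c.xB := by
  ext y
  simp only [mem_setOf_eq, mem_Ioi]
  constructor
  · rintro ⟨hy0, hyB⟩
    by_contra h
    push_neg at h
    have : c.V y ≤ c.V c.xB := c.hVmono.monotoneOn (mem_Ioi.mpr hy0) c.hxB h
    rw [c.hVxB] at this; linarith
  · intro hy
    have hy0 : 0 < y := lt_trans c.hxB0 hy
    refine ⟨hy0, ?_⟩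
    have := c.hVmono c.hxB (mem_Ioi.mpr hy0) hy
    rwa [c.hVxB] at this

lemma setS_eq : {y : ℝ | 0 < y ∧ c.A < c.V y ∧ c.V y < c.B} = Ioo c.xA c.xB := by
  ext y
  simp only [mem_setOf_eq, mem_Ioo]
  constructor
  · rintro ⟨hy0, hyA, hyB⟩
    constructor
    · by_contra h
      push_neg at h
      have : c.V y ≤ c.V c.xA := c.hVmono.monotoneOn (mem_Ioi.mpr hy0) c.hxA h
      rw [c.hVxA] at this; linarith
    · by_contra h
      push_neg at h
      have : c.V c.xB ≤ c.V y := c.hVmono.monotoneOn c.hxB (mem_Ioi.mpr hy0) h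
      rw [c.hVxB] at this; linarith
  · rintro ⟨h1, h2⟩
    have hy0 : 0 < y := lt_trans c.hxA0 h1
    refine ⟨hy0, ?_, ?_⟩
    · have := c.hVmono c.hxA (mem_Ioi.mpr hy0) h1
      rwa [c.hVxA] at this
    · have := c.hVmono (mem_Ioi.mpr hy0) c.hxB h2
      rwa [c.hVxB] at this

lemma hucont : ContinuousOn c.u (Ioi 0) := fun x hx =>
  ((c.hu x hx).continuousAt).continuousWithinAt

lemma hu'cont : ContinuousOn c.u' (Ioi 0) := fun x hx =>
  ((c.hu' x hx).continuousAt).continuousWithinAt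

lemma sqrtV_cont : ContinuousOn (fun t => Real.sqrt (c.V t)) (Ioi 0) :=
  Real.continuous_sqrt.comp_continuousOn c.hV

lemma sqrtV_intervalIntegrable {x y : ℝ} (hx : 0 < x) (hy : 0 < y) :
    IntervalIntegrable (fun t => Real.sqrt (c.V t)) volume x y := by
  apply ContinuousOn.intervalIntegrable
  apply c.sqrtV_cont.mono
  intro t ht
  rcases le_total x y with h | h
  · rw [uIcc_of_le h] at ht; exact lt_of_lt_of_le hx ht.1
  · rw [uIcc_of_ge h] at ht; exact lt_of_lt_of_le hy ht.1

/-- the phase -/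
noncomputable def φ (y : ℝ) : ℝ := ∫ t in c.xB..y, Real.sqrt (c.V t)

lemma hφderiv {y : ℝ} (hy : y ∈ Ioi (0:ℝ)) :
    HasDerivAt c.φ (Real.sqrt (c.V y)) y := by
  apply intervalIntegral.integral_hasDerivAt_right
    (c.sqrtV_intervalIntegrable c.hxB0 hy)
  · exact ContinuousOn.stronglyMeasurableAtFilter isOpen_Ioi c.sqrtV_cont y hy
  · exact (c.sqrtV_cont y hy).continuousAt (Ioi_mem_nhds hy)

lemma hφcont : ContinuousOn c.φ (Ioi 0) := fun y hy =>
  ((c.hφderiv hy).continuousAt).continuousWithinAt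

lemma hφ_add {x y : ℝ} (hx : 0 < x) (hy : 0 < y) :
    c.φ y = c.φ x + ∫ t in x..y, Real.sqrt (c.V t) := by
  unfold φ
  rw [intervalIntegral.integral_add_adjacent_intervals
    (c.sqrtV_intervalIntegrable c.hxB0 hx) (c.sqrtV_intervalIntegrable hx hy)]

lemma hφmono {x y : ℝ} (hx : 0 < x) (hxy : x ≤ y) : c.φ x ≤ c.φ y := by
  have hy : 0 < y := lt_of_lt_of_le hx hxy
  rw [c.hφ_add hx hy]
  have : 0 ≤ ∫ t in x..y, Real.sqrt (c.V t) :=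
    intervalIntegral.integral_nonneg hxy (fun t _ => Real.sqrt_nonneg _)
  linarith

lemma hφ_xB : c.φ c.xB = 0 := intervalIntegral.integral_same

lemma hφ_nonneg {y : ℝ} (hy : c.xB ≤ y) : 0 ≤ c.φ y := by
  rw [← c.hφ_xB]; exact c.hφmono c.hxB0 hy

lemma hφ_nonpos {y : ℝ} (hy0 : 0 < y) (hy : y ≤ c.xB) : c.φ y ≤ 0 := by
  rw [← c.hφ_xB]; exact c.hφmono hy0 hy

/-- the weight -/
noncomputable def W (y : ℝ) : ℝ := Real.exp (2 * c.γ * c.φ y)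

lemma Wpos (y : ℝ) : 0 < c.W y := Real.exp_pos _

lemma hWderiv {y : ℝ} (hy : y ∈ Ioi (0:ℝ)) :
    HasDerivAt c.W (2 * c.γ * Real.sqrt (c.V y) * c.W y) y := by
  have h := ((c.hφderiv hy).const_mul (2 * c.γ)).exp
  unfold W
  convert h using 1
  ring

lemma hWcont : ContinuousOn c.W (Ioi 0) :=
  Real.continuous_exp.comp_continuousOn ((continuous_const.continuousOn).mul c.hφcont)

lemma hWle_one {y : ℝ} (hy0 : 0 < y) (hy : y ≤ c.xB) : c.W y ≤ 1 := by
  unfold W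
  rw [← Real.exp_zero]
  apply Real.exp_le_exp.mpr
  have := c.hφ_nonpos hy0 hy
  have := c.hγ0
  nlinarith

/-- the cutoff specialized to this context -/
noncomputable def χ (y : ℝ) : ℝ := cutoff c.a c.xB y

noncomputable def χ' (y : ℝ) : ℝ := bump c.a c.xB y / bumpN c.a c.xB

lemma hχderiv (y : ℝ) : HasDerivAt c.χ (c.χ' y) y := cutoff_hasDerivAt y

lemma hχ0 : c.χ c.a = 0 := cutoff_eq_zero c.haB le_rfl

lemma hχ1 {y : ℝ} (hy : c.xB ≤ y) : c.χ y = 1 := cutoff_eq_one c.haB hy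

lemma hχmem (y : ℝ) : 0 ≤ c.χ y ∧ c.χ y ≤ 1 :=
  ⟨cutoff_nonneg c.haB y, cutoff_le_one c.haB y⟩

lemma hχ'_nonneg (y : ℝ) : 0 ≤ c.χ' y := cutoff_deriv_nonneg c.haB y

lemma hχ'_le (y : ℝ) : c.χ' y ≤ 16 / (c.xB - c.a) := cutoff_deriv_le c.haB y

lemma hχ'_zero_right {y : ℝ} (hy : c.xB ≤ y) : c.χ' y = 0 :=
  cutoff_deriv_eq_zero_right c.haB hy

lemma hχ'_cont : Continuous c.χ' := by
  unfold χ'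
  exact bump_cont.div_const _

lemma hχcont : Continuous c.χ := by
  have : ∀ y, HasDerivAt c.χ (c.χ' y) y := c.hχderiv
  exact continuous_iff_continuousAt.mpr (fun y => (this y).continuousAt)

end Ctx
end PAgmon

open MeasureTheory Filter Set intervalIntegral

namespace PAgmon

/-- The key pointwise algebraic inequality. -/
lemma pointwise_key (γ W X Xp s uu up ww : ℝ) (hγ0 : 0 < γ) (hγ1 : γ < 1)
    (hW : 0 < W) (hX0 : 0 ≤ X) (hX1 : X ≤ 1) (hs : 0 < s) :
    3/4*(1-γ) * (W*X^2*(up^2 + s^2*uu^2))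
      - (4/(1-γ)*(W*Xp^2*uu^2) + 1/(1-γ)*(W*ww^2/s^2))
    ≤ W*X^2*(up^2 + s^2*uu^2) - W*X^2*(ww*uu)
      + 2*γ*s*W*X^2*(uu*up) + 2*W*X*Xp*(uu*up) := by
  set κ := 1 - γ with hκ
  have hκ0 : 0 < κ := by rw [hκ]; linarith
  have hS1 : 0 ≤ γ*W*X^2*(s*uu+up)^2 := by positivity
  have hS2 : 0 ≤ W*(κ/4)*(X*up + (4/κ)*(Xp*uu))^2 := by positivity
  have hS3 : 0 ≤ W*X^2*(κ/4)*(s*uu - (2/κ)*(ww/s))^2 := by positivity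
  have hS4 : 0 ≤ (1/κ)*W*(1-X^2)*(ww^2/s^2) := by
    have h1 : 0 ≤ 1 - X^2 := by nlinarith
    positivity
  have hID : (W*X^2*(up^2 + s^2*uu^2) - W*X^2*(ww*uu)
      + 2*γ*s*W*X^2*(uu*up) + 2*W*X*Xp*(uu*up))
      - (3/4*(1-γ) * (W*X^2*(up^2 + s^2*uu^2))
      - (4/(1-γ)*(W*Xp^2*uu^2) + 1/(1-γ)*(W*ww^2/s^2)))
      = γ*W*X^2*(s*uu+up)^2 + W*(κ/4)*(X*up + (4/κ)*(Xp*uu))^2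
        + W*X^2*(κ/4)*(s*uu - (2/κ)*(ww/s))^2 + (1/κ)*W*(1-X^2)*(ww^2/s^2) := by
    have hne : 1 - γ ≠ 0 := by linarith
    rw [hκ]
    field_simp
    ring
  linarith

namespace Ctx
variable (c : Ctx)

/-- energy density -/
noncomputable def G (y : ℝ) : ℝ := c.W y * c.χ y^2 * (c.u' y^2 + c.V y * c.u y^2)

/-- error density -/
noncomputable def EE (y : ℝ) : ℝ :=
  4/(1-c.γ)*(c.W y * c.χ' y^2 * c.u y^2) + 1/(1-c.γ)*(c.W y * c.w y^2 / c.V y)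

/-- derivative density -/
noncomputable def PP (y : ℝ) : ℝ :=
  c.W y * c.χ y^2 * (c.u' y^2 + c.V y * c.u y^2) - c.W y * c.χ y^2 * (c.w y * c.u y)
    + 2*c.γ*Real.sqrt (c.V y)*c.W y*c.χ y^2*(c.u y*c.u' y)
    + 2*c.W y*c.χ y*c.χ' y*(c.u y*c.u' y)

/-- boundary functional -/
noncomputable def F (y : ℝ) : ℝ := c.u' y * (c.W y * c.χ y^2 * c.u y)

lemma hGcont : ContinuousOn c.G (Ioi 0) := by
  unfold G
  exact ((c.hWcont.mul ((c.hχcont.continuousOn).pow 2)).mul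
    (((c.hu'cont.pow 2)).add (c.hV.mul (c.hucont.pow 2))))

lemma hGnonneg {y : ℝ} (hy : c.a ≤ y) : 0 ≤ c.G y := by
  unfold G
  have h1 := c.Wpos y
  have h2 := (c.hχmem y).1
  have h3 := (c.hVpos hy).le
  positivity


lemma hFderiv {y : ℝ} (hy : y ∈ Ioi (0:ℝ)) : HasDerivAt c.F (c.PP y) y := by
  have hχ2 : HasDerivAt (fun z => c.χ z ^ 2) (2 * c.χ y * c.χ' y) y := by
    have := (c.hχderiv y).pow 2
    refine this.congr_deriv ?_
    push_cast
    ring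
  have hWχ2 := (c.hWderiv hy).mul hχ2
  have hInner := hWχ2.mul (c.hu y hy)
  have hF := (c.hu' y hy).mul hInner
  have heqy := c.heq y hy
  unfold F PP
  refine hF.congr_deriv (Eq.symm ?_)
  simp only [Pi.mul_apply]
  linear_combination (c.W y * c.χ y^2 * c.u y) * heqy


lemma hIccSub {R : ℝ} (hRa : c.a ≤ R) : Icc c.a R ⊆ Ioi (0:ℝ) :=
  fun y hy => lt_of_lt_of_le c.ha0 hy.1

lemma energy (D1 D2 D3 : ℝ)
    (hD1 : ∀ R, c.xB ≤ R → (∫ y in c.xB..R, c.W y * c.w y^2 / c.V y) ≤ D1)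
    (hD2 : (∫ y in c.a..c.xB, c.w y^2 / c.V y) ≤ D2)
    (hD3 : (∫ y in c.a..c.xB, c.u y^2) / (c.xB - c.xA)^2 ≤ D3)
    {R : ℝ} (hR : c.xB ≤ R) (hsign : c.u' R * c.u R ≤ 0) :
    ∫ y in c.a..R, c.G y ≤ 16384/(3*(1-c.γ)^2) * (D1 + D2 + D3) := by
  have haR : c.a ≤ R := c.haB.le.trans hR
  have haB' : c.a ≤ c.xB := c.haB.le
  have hsub : Icc c.a R ⊆ Ioi (0:ℝ) := c.hIccSub haR
  have hsubB : Icc c.a c.xB ⊆ Ioi (0:ℝ) := c.hIccSub haB'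
  have hsubBR : Icc c.xB R ⊆ Ioi (0:ℝ) := fun y hy =>
    lt_of_lt_of_le c.ha0 (le_trans haB' hy.1)
  have hκ0 : (0:ℝ) < 1 - c.γ := by have := c.hγ1; linarith
  have hd0 : (0:ℝ) < c.xB - c.xA := by have := c.hxAB; linarith
  -- continuity facts
  have hGc : ContinuousOn c.G (Icc c.a R) := c.hGcont.mono hsub
  have hVne : ∀ y ∈ Icc c.a R, c.V y ≠ 0 := fun y hy => (c.hVpos hy.1).ne'
  have hWwVc : ContinuousOn (fun y => c.W y * c.w y^2 / c.V y) (Icc c.a R) :=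
    ((c.hWcont.mono hsub).mul ((c.hw.mono hsub).pow 2)).div (c.hV.mono hsub) hVne
  have hWχuc : ContinuousOn (fun y => c.W y * c.χ' y^2 * c.u y^2) (Icc c.a R) :=
    ((c.hWcont.mono hsub).mul ((c.hχ'_cont.continuousOn).pow 2)).mul
      ((c.hucont.mono hsub).pow 2)
  have hEEc : ContinuousOn c.EE (Icc c.a R) := by
    unfold EE
    exact (continuousOn_const.mul hWχuc).add (continuousOn_const.mul hWwVc)
  have hPPc : ContinuousOn c.PP (Icc c.a R) := by
    unfold PP
    have hsq : ContinuousOn (fun y => Real.sqrt (c.V y)) (Icc c.a R) :=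
      Real.continuous_sqrt.comp_continuousOn (c.hV.mono hsub)
    have hWc := c.hWcont.mono hsub
    have hχc := c.hχcont.continuousOn (s := Icc c.a R)
    have hχ'c := c.hχ'_cont.continuousOn (s := Icc c.a R)
    have huc := c.hucont.mono hsub
    have hu'c := c.hu'cont.mono hsub
    have hwc := c.hw.mono hsub
    have hVc := c.hV.mono hsub
    fun_prop
  -- FTC
  have hFTC : ∫ y in c.a..R, c.PP y = c.F R := by
    have h := intervalIntegral.integral_eq_sub_of_hasDerivAt (f := c.F) (f' := c.PP)
      (a := c.a) (b := R)
      (by rw [uIcc_of_le haR]; exact fun y hy => c.hFderiv (hsub hy))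
      (by apply ContinuousOn.intervalIntegrable; rwa [uIcc_of_le haR])
    rw [h]
    have : c.F c.a = 0 := by unfold F; rw [c.hχ0]; ring
    rw [this]; ring
  -- pointwise bound
  have hpt : ∀ y ∈ Icc c.a R, 3/4*(1-c.γ) * c.G y - c.EE y ≤ c.PP y := by
    intro y hy
    have hV := c.hVpos hy.1
    have hs : 0 < Real.sqrt (c.V y) := Real.sqrt_pos.mpr hV
    have hs2 : Real.sqrt (c.V y)^2 = c.V y := Real.sq_sqrt hV.le
    have key := pointwise_key c.γ (c.W y) (c.χ y) (c.χ' y) (Real.sqrt (c.V y))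
      (c.u y) (c.u' y) (c.w y) c.hγ0 c.hγ1 (c.Wpos y) (c.hχmem y).1 (c.hχmem y).2 hs
    rw [hs2] at key
    unfold G EE PP
    linarith
  have hmono : (∫ y in c.a..R, (3/4*(1-c.γ) * c.G y - c.EE y)) ≤ ∫ y in c.a..R, c.PP y := by
    apply intervalIntegral.integral_mono_on haR
    · apply ContinuousOn.intervalIntegrable
      rw [uIcc_of_le haR]
      exact (continuousOn_const.mul hGc).sub hEEc
    · apply ContinuousOn.intervalIntegrable; rwa [uIcc_of_le haR]
    · exact hpt
  have hFR : c.F R ≤ 0 := by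
    have hFeq : c.F R = c.W R * (c.u' R * c.u R) := by
      unfold F; rw [c.hχ1 hR]; ring
    rw [hFeq]
    exact mul_nonpos_of_nonneg_of_nonpos (c.Wpos R).le hsign
  have hsplit : (∫ y in c.a..R, (3/4*(1-c.γ) * c.G y - c.EE y))
      = 3/4*(1-c.γ) * (∫ y in c.a..R, c.G y) - ∫ y in c.a..R, c.EE y := by
    rw [intervalIntegral.integral_sub, intervalIntegral.integral_const_mul]
    · apply ContinuousOn.intervalIntegrable
      rw [uIcc_of_le haR]
      exact continuousOn_const.mul hGc
    · apply ContinuousOn.intervalIntegrable; rwa [uIcc_of_le haR]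
  -- bound ∫ EE
  have hEEsplit : (∫ y in c.a..R, c.EE y)
      = 4/(1-c.γ) * (∫ y in c.a..R, c.W y * c.χ' y^2 * c.u y^2)
        + 1/(1-c.γ) * (∫ y in c.a..R, c.W y * c.w y^2 / c.V y) := by
    unfold EE
    rw [intervalIntegral.integral_add, intervalIntegral.integral_const_mul,
      intervalIntegral.integral_const_mul]
    · apply ContinuousOn.intervalIntegrable
      rw [uIcc_of_le haR]
      exact continuousOn_const.mul hWχuc
    · apply ContinuousOn.intervalIntegrable
      rw [uIcc_of_le haR]
      exact continuousOn_const.mul hWwVc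
  -- first error piece
  have hJ1 : (∫ y in c.a..R, c.W y * c.χ' y^2 * c.u y^2) ≤ 1024 * D3 := by
    have hsplit1 : (∫ y in c.a..R, c.W y * c.χ' y^2 * c.u y^2)
        = (∫ y in c.a..c.xB, c.W y * c.χ' y^2 * c.u y^2)
          + ∫ y in c.xB..R, c.W y * c.χ' y^2 * c.u y^2 := by
      rw [intervalIntegral.integral_add_adjacent_intervals]
      · apply ContinuousOn.intervalIntegrable
        rw [uIcc_of_le haB']
        exact hWχuc.mono (Icc_subset_Icc le_rfl hR)
      · apply ContinuousOn.intervalIntegrable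
        rw [uIcc_of_le hR]
        exact hWχuc.mono (Icc_subset_Icc haB' le_rfl)
    have hzero : (∫ y in c.xB..R, c.W y * c.χ' y^2 * c.u y^2) = 0 := by
      rw [intervalIntegral.integral_congr (g := fun _ => (0:ℝ)),
        intervalIntegral.integral_zero]
      intro y hy
      rw [uIcc_of_le hR] at hy
      simp [c.hχ'_zero_right hy.1]
    have hbd : (∫ y in c.a..c.xB, c.W y * c.χ' y^2 * c.u y^2)
        ≤ ∫ y in c.a..c.xB, 1024/(c.xB - c.xA)^2 * c.u y^2 := by
      apply intervalIntegral.integral_mono_on haB'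
      · apply ContinuousOn.intervalIntegrable
        rw [uIcc_of_le haB']
        exact hWχuc.mono (Icc_subset_Icc le_rfl hR)
      · apply ContinuousOn.intervalIntegrable
        rw [uIcc_of_le haB']
        exact continuousOn_const.mul ((c.hucont.mono hsubB).pow 2)
      · intro y hy
        have hW1 : c.W y ≤ 1 := c.hWle_one (hsubB hy) hy.2
        have hW0 : 0 < c.W y := c.Wpos y
        have hχ'0 : 0 ≤ c.χ' y := c.hχ'_nonneg y
        have hχ'le : c.χ' y ≤ 32/(c.xB - c.xA) := by
          have h1 := c.hχ'_le y
          have h2 : c.xB - c.a = (c.xB - c.xA)/2 := by unfold a; ring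
          rw [h2] at h1
          have h3 : (16:ℝ)/((c.xB - c.xA)/2) = 32/(c.xB - c.xA) := by
            field_simp; ring
          linarith [h3 ▸ h1]
        have hu2 : 0 ≤ c.u y^2 := sq_nonneg _
        have hq : c.χ' y^2 ≤ (32/(c.xB - c.xA))^2 := by nlinarith
        have h32 : ((32:ℝ)/(c.xB - c.xA))^2 = 1024/(c.xB - c.xA)^2 := by
          rw [div_pow]; norm_num
        have h0 : 0 ≤ c.χ' y ^ 2 * c.u y ^ 2 := by positivity
        have step1 : c.W y * c.χ' y ^ 2 * c.u y ^ 2 ≤ c.χ' y ^ 2 * c.u y ^ 2 := by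
          have := mul_nonneg (by linarith : (0:ℝ) ≤ 1 - c.W y) h0
          nlinarith
        have step2 : c.χ' y ^ 2 * c.u y ^ 2 ≤ 1024/(c.xB - c.xA)^2 * c.u y ^ 2 := by
          rw [← h32]
          exact mul_le_mul_of_nonneg_right hq hu2
        linarith
    have hconst : (∫ y in c.a..c.xB, 1024/(c.xB - c.xA)^2 * c.u y^2)
        = 1024 * ((∫ y in c.a..c.xB, c.u y^2) / (c.xB - c.xA)^2) := by
      rw [intervalIntegral.integral_const_mul]
      field_simp
    have : 1024 * ((∫ y in c.a..c.xB, c.u y^2) / (c.xB - c.xA)^2) ≤ 1024 * D3 := by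
      nlinarith [hD3]
    linarith [hsplit1, hzero, hbd, hconst, this]
  -- second error piece
  have hJ2 : (∫ y in c.a..R, c.W y * c.w y^2 / c.V y) ≤ D2 + D1 := by
    have hsplit2 : (∫ y in c.a..R, c.W y * c.w y^2 / c.V y)
        = (∫ y in c.a..c.xB, c.W y * c.w y^2 / c.V y)
          + ∫ y in c.xB..R, c.W y * c.w y^2 / c.V y := by
      rw [intervalIntegral.integral_add_adjacent_intervals]
      · apply ContinuousOn.intervalIntegrable
        rw [uIcc_of_le haB']
        exact hWwVc.mono (Icc_subset_Icc le_rfl hR)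
      · apply ContinuousOn.intervalIntegrable
        rw [uIcc_of_le hR]
        exact hWwVc.mono (Icc_subset_Icc haB' le_rfl)
    have hb1 : (∫ y in c.a..c.xB, c.W y * c.w y^2 / c.V y)
        ≤ ∫ y in c.a..c.xB, c.w y^2 / c.V y := by
      apply intervalIntegral.integral_mono_on haB'
      · apply ContinuousOn.intervalIntegrable
        rw [uIcc_of_le haB']
        exact hWwVc.mono (Icc_subset_Icc le_rfl hR)
      · apply ContinuousOn.intervalIntegrable
        rw [uIcc_of_le haB']
        exact ((c.hw.mono hsubB).pow 2).div (c.hV.mono hsubB)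
          (fun y hy => (c.hVpos hy.1).ne')
      · intro y hy
        have hW1 : c.W y ≤ 1 := c.hWle_one (hsubB hy) hy.2
        have hW0 : 0 < c.W y := c.Wpos y
        have hV0 : 0 < c.V y := c.hVpos hy.1
        have hw2 : 0 ≤ c.w y^2 / c.V y := by positivity
        have step : c.W y * (c.w y^2 / c.V y) ≤ 1 * (c.w y^2 / c.V y) :=
          mul_le_mul_of_nonneg_right hW1 hw2
        calc c.W y * c.w y^2 / c.V y = c.W y * (c.w y^2 / c.V y) := by ring
          _ ≤ 1 * (c.w y^2 / c.V y) := step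
          _ = c.w y^2 / c.V y := by ring
    linarith [hsplit2, hb1, hD1 R hR, hD2]
  -- nonnegativity of the D's
  have hD1nn : 0 ≤ D1 := by
    have := hD1 c.xB le_rfl
    rwa [intervalIntegral.integral_same] at this
  have hD2nn : 0 ≤ D2 := by
    refine le_trans ?_ hD2
    apply intervalIntegral.integral_nonneg haB'
    intro y hy
    have := c.hVpos hy.1
    positivity
  have hD3nn : 0 ≤ D3 := by
    refine le_trans ?_ hD3
    apply div_nonneg _ (sq_nonneg _)
    exact intervalIntegral.integral_nonneg haB' (fun y _ => sq_nonneg _)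
  -- assemble
  have hμ : 3/4*(1-c.γ) * (∫ y in c.a..R, c.G y)
      ≤ 4096/(1-c.γ) * (D1 + D2 + D3) := by
    have h1 := hmono
    rw [hsplit, hFTC] at h1
    have h2 : (∫ y in c.a..R, c.EE y) ≤ 4/(1-c.γ) * (1024 * D3) + 1/(1-c.γ) * (D2 + D1) := by
      rw [hEEsplit]
      have ha4 : (0:ℝ) < 4/(1-c.γ) := by positivity
      have ha1 : (0:ℝ) < 1/(1-c.γ) := by positivity
      nlinarith [hJ1, hJ2]
    have h3 : 4/(1-c.γ) * (1024 * D3) + 1/(1-c.γ) * (D2 + D1)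
        ≤ 4096/(1-c.γ) * (D1 + D2 + D3) := by
      rw [div_mul_eq_mul_div, div_mul_eq_mul_div, div_mul_eq_mul_div,
        ← add_div, div_le_div_iff₀ hκ0 hκ0]
      nlinarith
    linarith
  have hfin : (∫ y in c.a..R, c.G y)
      ≤ (4096/(1-c.γ) * (D1 + D2 + D3)) / (3/4*(1-c.γ)) := by
    rw [le_div_iff₀ (by positivity)]
    linarith [hμ]
  have heq2 : (4096/(1-c.γ) * (D1 + D2 + D3)) / (3/4*(1-c.γ))
      = 16384/(3*(1-c.γ)^2) * (D1 + D2 + D3) := by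
    field_simp
    ring
  rw [heq2] at hfin
  exact hfin

end Ctx
end PAgmon

open MeasureTheory Filter Set intervalIntegral

namespace PAgmon
namespace Ctx
variable (c : Ctx)

lemma exists_sign (R0 : ℝ) : ∃ R, R0 ≤ R ∧ c.xB ≤ R ∧ c.u' R * c.u R ≤ 0 := by
  by_contra h
  push_neg at h
  set T := max R0 c.xB with hT
  have hTB : c.xB ≤ T := le_max_right _ _
  have hT0 : (0:ℝ) < T := lt_of_lt_of_le c.hxB0 hTB
  have hpos : ∀ y, T ≤ y → 0 < c.u' y * c.u y := by
    intro y hy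
    exact h y (le_trans (le_max_left _ _) hy) (le_trans hTB hy)
  set g := fun y => c.u y * c.u y with hg
  have hgderiv : ∀ y, T ≤ y → HasDerivAt g (c.u' y * c.u y + c.u y * c.u' y) y := by
    intro y hy
    have hy0 : y ∈ Ioi (0:ℝ) := lt_of_lt_of_le hT0 hy
    exact (c.hu y hy0).mul (c.hu y hy0)
  have hmvt : ∀ p q, T ≤ p → p < q → g p < g q := by
    intro p q hp hpq
    have hcont : ContinuousOn g (Icc p q) := by
      intro y hy
      exact ((hgderiv y (le_trans hp hy.1)).continuousAt).continuousWithinAt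
    obtain ⟨ζ, hζ, hζeq⟩ := exists_hasDerivAt_eq_slope g
      (fun y => c.u' y * c.u y + c.u y * c.u' y) hpq hcont
      (fun y hy => hgderiv y (le_trans hp hy.1.le))
    have hζpos : 0 < c.u' ζ * c.u ζ := hpos ζ (le_trans hp hζ.1.le)
    have hslope : 0 < (g q - g p) / (q - p) := by
      rw [← hζeq]; linarith
    have hqp : 0 < q - p := by linarith
    have := (div_pos_iff.mp hslope)
    rcases this with ⟨h1, _⟩ | ⟨_, h2⟩
    · linarith
    · linarith
  have hglim : Tendsto g atTop (nhds 0) := by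
    have := c.hlim.mul c.hlim
    simpa using this
  have hev : ∀ᶠ y in atTop, g (T+2) ≤ g y := by
    filter_upwards [eventually_ge_atTop (T+2)] with y hy
    rcases eq_or_lt_of_le hy with heq | hlt
    · rw [heq]
    · exact (hmvt (T+2) y (by linarith) hlt).le
  have h0 : g (T+2) ≤ 0 := ge_of_tendsto hglim hev
  have h1 : g (T+1) < g (T+2) := hmvt (T+1) (T+2) (by linarith) (by linarith)
  have h2 : 0 ≤ g (T+1) := mul_self_nonneg _
  linarith

lemma energy_mono (D1 D2 D3 : ℝ)
    (hD1 : ∀ R, c.xB ≤ R → (∫ y in c.xB..R, c.W y * c.w y^2 / c.V y) ≤ D1)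
    (hD2 : (∫ y in c.a..c.xB, c.w y^2 / c.V y) ≤ D2)
    (hD3 : (∫ y in c.a..c.xB, c.u y^2) / (c.xB - c.xA)^2 ≤ D3)
    {p q : ℝ} (hp : c.a ≤ p) (hq : p ≤ q) :
    ∫ y in p..q, c.G y ≤ 16384/(3*(1-c.γ)^2) * (D1 + D2 + D3) := by
  obtain ⟨R, hR1, hR2, hsign⟩ := c.exists_sign q
  have hmain := c.energy D1 D2 D3 hD1 hD2 hD3 hR2 hsign
  have haR : c.a ≤ R := le_trans hp (le_trans hq hR1)
  have hGcont := c.hGcont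
  have hint : ∀ s t : ℝ, c.a ≤ s → s ≤ t → t ≤ R →
      IntervalIntegrable c.G volume s t := by
    intro s t hs hst htR
    apply ContinuousOn.intervalIntegrable
    rw [uIcc_of_le hst]
    exact hGcont.mono (fun y hy => lt_of_lt_of_le c.ha0 (le_trans hs hy.1))
  have hqR : q ≤ R := hR1
  have hpq : c.a ≤ q := le_trans hp hq
  have hsplit : (∫ y in c.a..R, c.G y)
      = (∫ y in c.a..p, c.G y) + (∫ y in p..q, c.G y) + ∫ y in q..R, c.G y := by
    rw [intervalIntegral.integral_add_adjacent_intervals (hint c.a p le_rfl hp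
        (le_trans hq hqR)) (hint p q hp hq hqR),
      intervalIntegral.integral_add_adjacent_intervals (hint c.a q le_rfl hpq hqR)
        (hint q R hpq hqR le_rfl)]
  have h1 : 0 ≤ ∫ y in c.a..p, c.G y :=
    intervalIntegral.integral_nonneg hp (fun y hy => c.hGnonneg hy.1)
  have h2 : 0 ≤ ∫ y in q..R, c.G y :=
    intervalIntegral.integral_nonneg hqR (fun y hy => c.hGnonneg (le_trans hpq hy.1))
  linarith

end Ctx
end PAgmon

open MeasureTheory Filter Set intervalIntegral

namespace PAgmon

/-- If `f → 0` and `f' → L` at `+∞` then `L = 0`. -/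
lemma tendsto_deriv_zero {f f' : ℝ → ℝ}
    (hf : ∀ y ∈ Ioi (0:ℝ), HasDerivAt f (f' y) y)
    (hlim : Tendsto f atTop (nhds 0)) {L : ℝ}
    (hL : Tendsto f' atTop (nhds L)) : L = 0 := by
  have main : ∀ (g g' : ℝ → ℝ) (M : ℝ), 0 < M →
      (∀ y ∈ Ioi (0:ℝ), HasDerivAt g (g' y) y) →
      Tendsto g atTop (nhds 0) → Tendsto g' atTop (nhds M) → False := by
    intro g g' M hM hg hglim hg'lim
    have hev : ∀ᶠ y in atTop, M/2 < g' y := by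
      have := hg'lim.eventually_const_lt (show M/2 < M by linarith)
      exact this
    obtain ⟨R₁, hR₁⟩ := (hev.and (eventually_ge_atTop (1:ℝ))).exists_forall_of_atTop
    have hR₁pos : (0:ℝ) < R₁ := by
      have := (hR₁ R₁ le_rfl).2; linarith
    have hgrow : ∀ R, R₁ ≤ R → g R₁ + M/2 * (R - R₁) ≤ g R := by
      intro R hR
      rcases eq_or_lt_of_le hR with heq | hlt
      · rw [← heq]; simp
      · obtain ⟨ζ, hζ, hζeq⟩ := exists_hasDerivAt_eq_slope g g' hlt
          (fun y hy => ((hg y (lt_of_lt_of_le hR₁pos hy.1)).continuousAt).continuousWithinAt)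
          (fun y hy => hg y (lt_of_lt_of_le hR₁pos hy.1.le))
        have h1 : M/2 < g' ζ := (hR₁ ζ hζ.1.le).1
        have h2 : g' ζ = (g R - g R₁)/(R - R₁) := hζeq
        have h3 : 0 < R - R₁ := by linarith
        rw [h2, lt_div_iff₀ h3] at h1
        nlinarith
    have hatTop : Tendsto g atTop atTop := by
      apply tendsto_atTop_mono' atTop (by
        filter_upwards [eventually_ge_atTop R₁] with R hR
        exact hgrow R hR)
      apply tendsto_atTop_add_const_left
      apply Tendsto.const_mul_atTop (show (0:ℝ) < M/2 by linarith)
      exact tendsto_atTop_add_const_right atTop (-R₁) tendsto_id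
    have h1 := hatTop.eventually_ge_atTop 1
    have h2 := hglim.eventually_lt_const (show (0:ℝ) < 1 by norm_num)
    obtain ⟨y, hy1, hy2⟩ := (h1.and h2).exists
    linarith
  rcases lt_trichotomy L 0 with hL0 | hL0 | hL0
  · exfalso
    apply main (fun y => -f y) (fun y => -f' y) (-L) (by linarith)
      (fun y hy => (hf y hy).neg) (by simpa using hlim.neg) (by simpa using hL.neg)
  · exact hL0
  · exfalso
    exact main f f' L hL0 hf hlim hL

/-- Representation bound: if the interval integrals of `|f'|` from `x` are uniformly
bounded by `M`, then `f` has a limit `L` at `+∞` and `|f x - L| ≤ M`. -/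
lemma rep_bound {f f' : ℝ → ℝ} {x M : ℝ} (hx : 0 < x)
    (hf : ∀ y ∈ Ioi (0:ℝ), HasDerivAt f (f' y) y)
    (hf'c : ContinuousOn f' (Ioi 0))
    (hb : ∀ R, x ≤ R → (∫ y in x..R, |f' y|) ≤ M) :
    ∃ L, Tendsto f atTop (nhds L) ∧ |f x - L| ≤ M := by
  have hsub : ∀ {s t : ℝ}, x ≤ s → Icc s t ⊆ Ioi (0:ℝ) :=
    fun {s t} hs y hy => lt_of_lt_of_le hx (le_trans hs hy.1)
  have hfi : ∀ n : ℕ, IntegrableOn f' (Ioc x (x + n)) volume := by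
    intro n
    apply IntegrableOn.mono_set (t := Icc x (x + n)) _ Ioc_subset_Icc_self
    exact (hf'c.mono (hsub le_rfl)).integrableOn_compact isCompact_Icc
  have hbn : Tendsto (fun n : ℕ => x + n) atTop atTop :=
    tendsto_atTop_add_const_left atTop x tendsto_natCast_atTop_atTop
  have hIoi : IntegrableOn f' (Ioi x) volume := by
    apply integrableOn_Ioi_of_intervalIntegral_norm_bounded M x hfi hbn
    filter_upwards with n
    have : (∫ y in x..(x + n), ‖f' y‖) = ∫ y in x..(x + n), |f' y| := by
      simp [Real.norm_eq_abs]
    rw [this]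
    exact hb _ (by simp)
  have hFTC : ∀ R, x ≤ R → (∫ y in x..R, f' y) = f R - f x := by
    intro R hR
    apply intervalIntegral.integral_eq_sub_of_hasDerivAt
    · rw [uIcc_of_le hR]
      exact fun y hy => hf y (hsub le_rfl hy)
    · apply ContinuousOn.intervalIntegrable
      rw [uIcc_of_le hR]
      exact hf'c.mono (hsub le_rfl)
  have htendI : Tendsto (fun R => ∫ y in x..R, f' y) atTop
      (nhds (∫ y in Ioi x, f' y)) :=
    intervalIntegral_tendsto_integral_Ioi x hIoi tendsto_id
  set I := ∫ y in Ioi x, f' y with hI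
  refine ⟨f x + I, ?_, ?_⟩
  · have : Tendsto (fun R => f x + ∫ y in x..R, f' y) atTop (nhds (f x + I)) :=
      tendsto_const_nhds.add htendI
    apply this.congr'
    filter_upwards [eventually_ge_atTop x] with R hR
    rw [hFTC R hR]; ring
  · have heq : f x - (f x + I) = -I := by ring
    rw [heq, abs_neg]
    have h1 : |I| ≤ ∫ y in Ioi x, |f' y| := by
      have := norm_integral_le_integral_norm (μ := volume.restrict (Ioi x)) f'
      simpa [Real.norm_eq_abs] using this
    have h2 : (∫ y in Ioi x, |f' y|) ≤ M := by
      have htendN : Tendsto (fun R => ∫ y in x..R, |f' y|) atTop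
          (nhds (∫ y in Ioi x, |f' y|)) := by
        have := intervalIntegral_tendsto_integral_Ioi x hIoi.norm tendsto_id
        simpa [Real.norm_eq_abs] using this
      apply le_of_tendsto htendN
      filter_upwards [eventually_ge_atTop x] with R hR
      exact hb R hR
    linarith

end PAgmon

open MeasureTheory Filter Set intervalIntegral

namespace PAgmon

lemma exp_sq (t : ℝ) : Real.exp t ^ 2 = Real.exp (2*t) := by
  rw [sq, ← Real.exp_add]; ring_nf

namespace Ctx
variable (c : Ctx)

lemma hxC_lt {x : ℝ} (hx0 : 0 < x) (hx : c.Cl < c.V x) : c.xC < x := by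
  by_contra h
  push_neg at h
  have : c.V x ≤ c.V c.xC := c.hVmono.monotoneOn (mem_Ioi.mpr hx0) c.hxC h
  rw [c.hVxC] at this; linarith

lemma hVgt_of_ge {x y : ℝ} (hx0 : 0 < x) (hx : c.Cl < c.V x) (hy : x ≤ y) :
    c.Cl < c.V y := by
  have := c.hVmono.monotoneOn (mem_Ioi.mpr hx0) (mem_Ioi.mpr (lt_of_lt_of_le hx0 hy)) hy
  linarith

lemma D1_nonneg (D1 : ℝ)
    (hD1 : ∀ R, c.xB ≤ R → (∫ y in c.xB..R, c.W y * c.w y^2 / c.V y) ≤ D1) : 0 ≤ D1 := by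
  have := hD1 c.xB le_rfl
  rwa [intervalIntegral.integral_same] at this

lemma D2_nonneg (D2 : ℝ) (hD2 : (∫ y in c.a..c.xB, c.w y^2 / c.V y) ≤ D2) : 0 ≤ D2 := by
  refine le_trans ?_ hD2
  apply intervalIntegral.integral_nonneg c.haB.le
  intro y hy
  have := c.hVpos hy.1
  positivity

lemma D3_nonneg (D3 : ℝ) (hD3 : (∫ y in c.a..c.xB, c.u y^2) / (c.xB - c.xA)^2 ≤ D3) :
    0 ≤ D3 := by
  refine le_trans ?_ hD3
  apply div_nonneg _ (sq_nonneg _)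
  exact intervalIntegral.integral_nonneg c.haB.le (fun y _ => sq_nonneg _)

/-- interval integrability of `W w²/V` on intervals right of `a` -/
lemma WwV_ii {s t : ℝ} (hs : c.a ≤ s) (hst : s ≤ t) :
    IntervalIntegrable (fun y => c.W y * c.w y^2 / c.V y) volume s t := by
  apply ContinuousOn.intervalIntegrable
  rw [uIcc_of_le hst]
  have hsub : Icc s t ⊆ Ioi (0:ℝ) := fun y hy => lt_of_lt_of_le c.ha0 (le_trans hs hy.1)
  exact ((c.hWcont.mono hsub).mul ((c.hw.mono hsub).pow 2)).div (c.hV.mono hsub)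
    (fun y hy => (c.hVpos (le_trans hs hy.1)).ne')

lemma deriv_bound (D1 D2 D3 c1r : ℝ)
    (hD1 : ∀ R, c.xB ≤ R → (∫ y in c.xB..R, c.W y * c.w y^2 / c.V y) ≤ D1)
    (hD2 : (∫ y in c.a..c.xB, c.w y^2 / c.V y) ≤ D2)
    (hD3 : (∫ y in c.a..c.xB, c.u y^2) / (c.xB - c.xA)^2 ≤ D3)
    (hc1 : ∀ p q, c.xC ≤ p → p ≤ q →
      (∫ y in p..q, Real.exp (-(2*c.ε*c.φ y)) * c.V y) ≤ c1r)
    {x β : ℝ} (hx0 : 0 < x) (hx : c.Cl < c.V x) (hβ0 : 0 ≤ β) (hβε : β + c.ε ≤ c.γ) :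
    |c.u' x| ≤ (Real.sqrt (16384/(3*(1-c.γ)^2)) + 1) * Real.sqrt (c1r * (D1+D2+D3))
        * Real.exp (-(β * c.φ x)) := by
  set C2 := 16384/(3*(1-c.γ)^2) with hC2
  have hκ0 : (0:ℝ) < 1 - c.γ := by have := c.hγ1; linarith
  have hC2nn : (0:ℝ) ≤ C2 := by rw [hC2]; positivity
  have hSumnn : 0 ≤ D1 + D2 + D3 := by
    have := c.D1_nonneg D1 hD1; have := c.D2_nonneg D2 hD2; have := c.D3_nonneg D3 hD3
    linarith
  have hc1nn : 0 ≤ c1r := by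
    have := hc1 c.xC c.xC le_rfl le_rfl
    rwa [intervalIntegral.integral_same] at this
  have hxC : c.xC < x := c.hxC_lt hx0 hx
  have hxB : c.xB < x := lt_trans c.hxBC hxC
  have hax : c.a < x := lt_trans c.haB hxB
  have hφx : 0 ≤ c.φ x := c.hφ_nonneg hxB.le
  set Φ := Real.exp (-(β * c.φ x)) with hΦ
  have hΦpos : 0 < Φ := Real.exp_pos _
  set M := (Real.sqrt C2 + 1) * Real.sqrt (c1r * (D1+D2+D3)) * Φ with hM
  have hKey : ∀ R, x ≤ R → (∫ y in x..R, |c.u'' y|) ≤ M := by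
    intro R hxR
    have hsub : Icc x R ⊆ Ioi (0:ℝ) := fun y hy => lt_of_lt_of_le hx0 hy.1
    have hVpos : ∀ y ∈ Icc x R, 0 < c.V y := fun y hy => c.hVpos (le_trans hax.le hy.1)
    have hVc := c.hV.mono hsub
    have huc := c.hucont.mono hsub
    have hu''c := c.hu''.mono hsub
    have hwc := c.hw.mono hsub
    have hφc := c.hφcont.mono hsub
    have hsqVc : ContinuousOn (fun y => Real.sqrt (c.V y)) (Icc x R) :=
      Real.continuous_sqrt.comp_continuousOn hVc
    have hexpm : ContinuousOn (fun y => Real.exp (-(c.γ * c.φ y))) (Icc x R) :=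
      Real.continuous_exp.comp_continuousOn (continuousOn_const.mul hφc).neg
    have hexpp : ContinuousOn (fun y => Real.exp (c.γ * c.φ y)) (Icc x R) :=
      Real.continuous_exp.comp_continuousOn (continuousOn_const.mul hφc)
    set f1 := fun y => Real.exp (-(c.γ * c.φ y)) * Real.sqrt (c.V y) with hf1
    set g1 := fun y => Real.exp (c.γ * c.φ y) * Real.sqrt (c.V y) * |c.u y| with hg1
    set g2 := fun y => Real.exp (c.γ * c.φ y) * |c.w y| / Real.sqrt (c.V y) with hg2
    have hf1c : ContinuousOn f1 (Icc x R) := hexpm.mul hsqVc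
    have hg1c : ContinuousOn g1 (Icc x R) := (hexpp.mul hsqVc).mul huc.abs
    have hg2c : ContinuousOn g2 (Icc x R) :=
      (hexpp.mul hwc.abs).div hsqVc
        (fun y hy => (Real.sqrt_pos.mpr (hVpos y hy)).ne')
    have hecancel : ∀ y : ℝ, Real.exp (-(c.γ * c.φ y)) * Real.exp (c.γ * c.φ y) = 1 := by
      intro y; rw [← Real.exp_add]; simp
    have hid1 : ∀ y ∈ Icc x R, c.V y * |c.u y| = f1 y * g1 y := by
      intro y hy
      have hs : Real.sqrt (c.V y) * Real.sqrt (c.V y) = c.V y :=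
        Real.mul_self_sqrt (hVpos y hy).le
      symm
      calc f1 y * g1 y
          = (Real.exp (-(c.γ * c.φ y)) * Real.exp (c.γ * c.φ y))
            * (Real.sqrt (c.V y) * Real.sqrt (c.V y)) * |c.u y| := by
            simp only [hf1, hg1]; ring
        _ = c.V y * |c.u y| := by rw [hecancel, hs]; ring
    have hid2 : ∀ y ∈ Icc x R, |c.w y| = f1 y * g2 y := by
      intro y hy
      have hsne : Real.sqrt (c.V y) ≠ 0 := (Real.sqrt_pos.mpr (hVpos y hy)).ne'
      symm
      calc f1 y * g2 y
          = (Real.exp (-(c.γ * c.φ y)) * Real.exp (c.γ * c.φ y))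
            * (Real.sqrt (c.V y) / Real.sqrt (c.V y)) * |c.w y| := by
            simp only [hf1, hg2]; ring
        _ = |c.w y| := by rw [hecancel, div_self hsne]; ring
    have hptw : ∀ y ∈ Icc x R, |c.u'' y| ≤ c.V y * |c.u y| + |c.w y| := by
      intro y hy
      have heqy := c.heq y (hsub hy)
      have h2 : c.u'' y = c.V y * c.u y - c.w y := by linarith
      rw [h2]
      calc |c.V y * c.u y - c.w y| ≤ |c.V y * c.u y| + |c.w y| := abs_sub _ _
        _ = c.V y * |c.u y| + |c.w y| := by
            rw [abs_mul, abs_of_nonneg (hVpos y hy).le]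
    have hI0 : (∫ y in x..R, |c.u'' y|) ≤ ∫ y in x..R, (c.V y * |c.u y| + |c.w y|) := by
      apply intervalIntegral.integral_mono_on hxR
      · apply ContinuousOn.intervalIntegrable; rw [uIcc_of_le hxR]; exact hu''c.abs
      · apply ContinuousOn.intervalIntegrable; rw [uIcc_of_le hxR]
        exact (hVc.mul huc.abs).add hwc.abs
      · exact hptw
    have hIadd : (∫ y in x..R, (c.V y * |c.u y| + |c.w y|))
        = (∫ y in x..R, c.V y * |c.u y|) + ∫ y in x..R, |c.w y| := by
      apply intervalIntegral.integral_add
      · apply ContinuousOn.intervalIntegrable; rw [uIcc_of_le hxR]; exact hVc.mul huc.abs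
      · apply ContinuousOn.intervalIntegrable; rw [uIcc_of_le hxR]; exact hwc.abs
    have hCS1 : (∫ y in x..R, c.V y * |c.u y|)
        ≤ Real.sqrt (∫ y in x..R, f1 y ^ 2) * Real.sqrt (∫ y in x..R, g1 y ^ 2) := by
      rw [intervalIntegral.integral_congr (g := fun y => f1 y * g1 y)
        (fun y hy => hid1 y (by rwa [uIcc_of_le hxR] at hy))]
      exact cs_interval hxR hf1c hg1c
    have hCS2 : (∫ y in x..R, |c.w y|)
        ≤ Real.sqrt (∫ y in x..R, f1 y ^ 2) * Real.sqrt (∫ y in x..R, g2 y ^ 2) := by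
      rw [intervalIntegral.integral_congr (g := fun y => f1 y * g2 y)
        (fun y hy => hid2 y (by rwa [uIcc_of_le hxR] at hy))]
      exact cs_interval hxR hf1c hg2c
    -- bound ∫ f1²
    have hf1sq : (∫ y in x..R, f1 y ^ 2) ≤ Φ^2 * c1r := by
      have hpt : ∀ y ∈ Icc x R, f1 y ^ 2
          ≤ Φ^2 * (Real.exp (-(2*c.ε*c.φ y)) * c.V y) := by
        intro y hy
        have hV := hVpos y hy
        have hφy : c.φ x ≤ c.φ y := c.hφmono hx0 hy.1
        have hφy0 : 0 ≤ c.φ y := le_trans hφx hφy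
        have heq : f1 y ^ 2 = Real.exp (-(2*c.γ*c.φ y)) * c.V y := by
          simp only [hf1]
          rw [mul_pow, exp_sq, Real.sq_sqrt hV.le]
          have h2 : (2:ℝ)*(-(c.γ * c.φ y)) = -(2*c.γ*c.φ y) := by ring
          rw [h2]
        rw [heq, hΦ, exp_sq]
        have hexple : Real.exp (-(2*c.γ*c.φ y))
            ≤ Real.exp (2*(-(β * c.φ x))) * Real.exp (-(2*c.ε*c.φ y)) := by
          rw [← Real.exp_add]
          apply Real.exp_le_exp.mpr
          nlinarith [hφy, hφy0, hφx, hβ0, c.hε0.le, hβε]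
        calc Real.exp (-(2*c.γ*c.φ y)) * c.V y
            ≤ (Real.exp (2*(-(β * c.φ x))) * Real.exp (-(2*c.ε*c.φ y))) * c.V y :=
              mul_le_mul_of_nonneg_right hexple hV.le
          _ = Real.exp (2*(-(β * c.φ x))) * (Real.exp (-(2*c.ε*c.φ y)) * c.V y) := by ring
      have h1 : (∫ y in x..R, f1 y ^ 2)
          ≤ ∫ y in x..R, Φ^2 * (Real.exp (-(2*c.ε*c.φ y)) * c.V y) := by
        apply intervalIntegral.integral_mono_on hxR
        · apply ContinuousOn.intervalIntegrable; rw [uIcc_of_le hxR]; exact hf1c.pow 2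
        · apply ContinuousOn.intervalIntegrable; rw [uIcc_of_le hxR]
          apply continuousOn_const.mul
          exact (Real.continuous_exp.comp_continuousOn
            ((continuousOn_const.mul hφc).neg)).mul hVc
        · exact hpt
      rw [intervalIntegral.integral_const_mul] at h1
      have h2 : (∫ y in x..R, Real.exp (-(2*c.ε*c.φ y)) * c.V y) ≤ c1r :=
        hc1 x R hxC.le hxR
      nlinarith [sq_nonneg Φ]
    -- bound ∫ g1²
    have hg1sq : (∫ y in x..R, g1 y ^ 2) ≤ C2 * (D1+D2+D3) := by
      have hptg : ∀ y ∈ Icc x R, g1 y ^ 2 ≤ c.G y := by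
        intro y hy
        have hV := hVpos y hy
        have hχy : c.χ y = 1 := c.hχ1 (le_trans hxB.le hy.1)
        have heqg : g1 y ^ 2 = c.W y * (c.V y * c.u y^2) := by
          simp only [hg1]
          rw [mul_pow, mul_pow, exp_sq, Real.sq_sqrt hV.le, sq_abs]
          unfold W
          have h2 : (2:ℝ)*(c.γ * c.φ y) = 2*c.γ*c.φ y := by ring
          rw [h2]
          ring
        rw [heqg]
        unfold G
        rw [hχy]
        nlinarith [mul_nonneg (c.Wpos y).le (sq_nonneg (c.u' y))]
      have h1 : (∫ y in x..R, g1 y ^ 2) ≤ ∫ y in x..R, c.G y := by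
        apply intervalIntegral.integral_mono_on hxR
        · apply ContinuousOn.intervalIntegrable; rw [uIcc_of_le hxR]; exact hg1c.pow 2
        · apply ContinuousOn.intervalIntegrable; rw [uIcc_of_le hxR]
          exact c.hGcont.mono hsub
        · exact hptg
      have h2 := c.energy_mono D1 D2 D3 hD1 hD2 hD3 hax.le hxR
      rw [← hC2] at h2
      linarith
    -- bound ∫ g2²
    have hg2sq : (∫ y in x..R, g2 y ^ 2) ≤ D1 + D2 + D3 := by
      have h1 : (∫ y in x..R, g2 y ^ 2) = ∫ y in x..R, c.W y * c.w y^2 / c.V y := by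
        apply intervalIntegral.integral_congr
        intro y hy
        rw [uIcc_of_le hxR] at hy
        have hV := hVpos y hy
        simp only [hg2]
        rw [div_pow, mul_pow, exp_sq, Real.sq_sqrt hV.le, sq_abs]
        unfold W
        have h2 : (2:ℝ)*(c.γ * c.φ y) = 2*c.γ*c.φ y := by ring
        rw [h2]
      have hsplit : (∫ y in c.xB..R, c.W y * c.w y^2 / c.V y)
          = (∫ y in c.xB..x, c.W y * c.w y^2 / c.V y)
            + ∫ y in x..R, c.W y * c.w y^2 / c.V y :=
        (intervalIntegral.integral_add_adjacent_intervals
          (c.WwV_ii c.haB.le hxB.le) (c.WwV_ii hax.le hxR)).symm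
      have hnn : 0 ≤ ∫ y in c.xB..x, c.W y * c.w y^2 / c.V y := by
        apply intervalIntegral.integral_nonneg hxB.le
        intro y hy
        have hV := c.hVpos (le_trans c.haB.le hy.1)
        have hW := c.Wpos y
        positivity
      have hD1R := hD1 R (le_trans hxB.le hxR)
      have hd2 := c.D2_nonneg D2 hD2
      have hd3 := c.D3_nonneg D3 hD3
      rw [h1]
      linarith
    -- assemble
    have hsq1 : Real.sqrt (∫ y in x..R, f1 y ^ 2) ≤ Φ * Real.sqrt c1r := by
      have := Real.sqrt_le_sqrt hf1sq
      rwa [Real.sqrt_mul (sq_nonneg Φ), Real.sqrt_sq hΦpos.le] at this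
    have hsq2 : Real.sqrt (∫ y in x..R, g1 y ^ 2)
        ≤ Real.sqrt C2 * Real.sqrt (D1+D2+D3) := by
      have := Real.sqrt_le_sqrt hg1sq
      rwa [Real.sqrt_mul hC2nn] at this
    have hsq3 : Real.sqrt (∫ y in x..R, g2 y ^ 2) ≤ Real.sqrt (D1+D2+D3) :=
      Real.sqrt_le_sqrt hg2sq
    have hnn1 : 0 ≤ Real.sqrt (∫ y in x..R, f1 y ^ 2) := Real.sqrt_nonneg _
    have hnn2 : 0 ≤ Real.sqrt (∫ y in x..R, g1 y ^ 2) := Real.sqrt_nonneg _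
    have hnn3 : 0 ≤ Real.sqrt (∫ y in x..R, g2 y ^ 2) := Real.sqrt_nonneg _
    have hb1 : (∫ y in x..R, c.V y * |c.u y|)
        ≤ (Φ * Real.sqrt c1r) * (Real.sqrt C2 * Real.sqrt (D1+D2+D3)) := by
      calc (∫ y in x..R, c.V y * |c.u y|)
          ≤ Real.sqrt (∫ y in x..R, f1 y ^ 2) * Real.sqrt (∫ y in x..R, g1 y ^ 2) := hCS1
        _ ≤ (Φ * Real.sqrt c1r) * (Real.sqrt C2 * Real.sqrt (D1+D2+D3)) := by
            apply mul_le_mul hsq1 hsq2 hnn2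
            positivity
    have hb2 : (∫ y in x..R, |c.w y|)
        ≤ (Φ * Real.sqrt c1r) * Real.sqrt (D1+D2+D3) := by
      calc (∫ y in x..R, |c.w y|)
          ≤ Real.sqrt (∫ y in x..R, f1 y ^ 2) * Real.sqrt (∫ y in x..R, g2 y ^ 2) := hCS2
        _ ≤ (Φ * Real.sqrt c1r) * Real.sqrt (D1+D2+D3) := by
            apply mul_le_mul hsq1 hsq3 hnn3
            positivity
    have hMeq : M = (Φ * Real.sqrt c1r) * (Real.sqrt C2 * Real.sqrt (D1+D2+D3))
        + (Φ * Real.sqrt c1r) * Real.sqrt (D1+D2+D3) := by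
      rw [hM, Real.sqrt_mul hc1nn]
      ring
    rw [hMeq]
    linarith
  obtain ⟨L, hLt, hLb⟩ := rep_bound hx0 c.hu' c.hu'' hKey
  have hL0 : L = 0 := tendsto_deriv_zero c.hu c.hlim hLt
  rw [hL0, sub_zero] at hLb
  rw [hM] at hLb
  exact hLb

end Ctx
end PAgmon

open MeasureTheory Filter Set intervalIntegral

namespace PAgmon
namespace Ctx
variable (c : Ctx)

lemma value_bound (D1 D2 D3 c1r c0r : ℝ)
    (hD1 : ∀ R, c.xB ≤ R → (∫ y in c.xB..R, c.W y * c.w y^2 / c.V y) ≤ D1)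
    (hD2 : (∫ y in c.a..c.xB, c.w y^2 / c.V y) ≤ D2)
    (hD3 : (∫ y in c.a..c.xB, c.u y^2) / (c.xB - c.xA)^2 ≤ D3)
    (hc1 : ∀ p q, c.xC ≤ p → p ≤ q →
      (∫ y in p..q, Real.exp (-(2*c.ε*c.φ y)) * c.V y) ≤ c1r)
    (hc0 : ∀ p q, c.xC ≤ p → p ≤ q →
      (∫ y in p..q, Real.exp (-(2*c.ε*c.φ y))) ≤ c0r)
    {x β : ℝ} (hx0 : 0 < x) (hx : c.Cl < c.V x) (hβ0 : 0 ≤ β) (hβε : β + 3*c.ε ≤ c.γ) :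
    |c.u x| ≤ (Real.sqrt (16384/(3*(1-c.γ)^2)) + 1) * Real.sqrt (c1r * (D1+D2+D3))
        * c0r * Real.exp (-(β * c.φ x)) := by
  set C2 := 16384/(3*(1-c.γ)^2) with hC2
  set KD := (Real.sqrt C2 + 1) * Real.sqrt (c1r * (D1+D2+D3)) with hKD
  have hc1nn : 0 ≤ c1r := by
    have := hc1 c.xC c.xC le_rfl le_rfl
    rwa [intervalIntegral.integral_same] at this
  have hKDnn : 0 ≤ KD := by
    rw [hKD]; positivity
  have hxC : c.xC < x := c.hxC_lt hx0 hx
  have hxB : c.xB < x := lt_trans c.hxBC hxC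
  have hax : c.a < x := lt_trans c.haB hxB
  have hφx : 0 ≤ c.φ x := c.hφ_nonneg hxB.le
  set Φ := Real.exp (-(β * c.φ x)) with hΦ
  have hΦpos : 0 < Φ := Real.exp_pos _
  have hβ'0 : 0 ≤ c.γ - c.ε := by have := c.hε0; linarith
  have hβ'ε : (c.γ - c.ε) + c.ε ≤ c.γ := by linarith
  -- pointwise bound on |u'| for y ≥ x
  have hu'pt : ∀ y, x ≤ y → |c.u' y| ≤ KD * Real.exp (-((c.γ - c.ε) * c.φ y)) := by
    intro y hy
    have hy0 : 0 < y := lt_of_lt_of_le hx0 hy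
    have hVy : c.Cl < c.V y := c.hVgt_of_ge hx0 hx hy
    have := c.deriv_bound D1 D2 D3 c1r hD1 hD2 hD3 hc1 hy0 hVy hβ'0 hβ'ε
    rw [← hC2, ← hKD] at this
    exact this
  -- uniform integral bound for |u'|
  have hKey : ∀ R, x ≤ R → (∫ y in x..R, |c.u' y|) ≤ KD * c0r * Φ := by
    intro R hxR
    have hsub : Icc x R ⊆ Ioi (0:ℝ) := fun y hy => lt_of_lt_of_le hx0 hy.1
    have hφc := c.hφcont.mono hsub
    have hu'c := c.hu'cont.mono hsub
    have h1 : (∫ y in x..R, |c.u' y|)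
        ≤ ∫ y in x..R, (KD * Φ) * Real.exp (-(2*c.ε*c.φ y)) := by
      apply intervalIntegral.integral_mono_on hxR
      · apply ContinuousOn.intervalIntegrable; rw [uIcc_of_le hxR]; exact hu'c.abs
      · apply ContinuousOn.intervalIntegrable; rw [uIcc_of_le hxR]
        exact continuousOn_const.mul (Real.continuous_exp.comp_continuousOn
          ((continuousOn_const.mul hφc).neg))
      · intro y hy
        have hb := hu'pt y hy.1
        have hφy : c.φ x ≤ c.φ y := c.hφmono hx0 hy.1
        have hφy0 : 0 ≤ c.φ y := le_trans hφx hφy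
        have hexpcmp : Real.exp (-((c.γ - c.ε) * c.φ y))
            ≤ Φ * Real.exp (-(2*c.ε*c.φ y)) := by
          rw [hΦ, ← Real.exp_add]
          apply Real.exp_le_exp.mpr
          nlinarith [hφy, hφy0, hφx, hβ0, c.hε0.le, hβε]
        calc |c.u' y| ≤ KD * Real.exp (-((c.γ - c.ε) * c.φ y)) := hb
          _ ≤ KD * (Φ * Real.exp (-(2*c.ε*c.φ y))) :=
              mul_le_mul_of_nonneg_left hexpcmp hKDnn
          _ = (KD * Φ) * Real.exp (-(2*c.ε*c.φ y)) := by ring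
    rw [intervalIntegral.integral_const_mul] at h1
    have h2 := hc0 x R hxC.le hxR
    have hKΦ : 0 ≤ KD * Φ := by positivity
    calc (∫ y in x..R, |c.u' y|) ≤ (KD * Φ) * ∫ y in x..R, Real.exp (-(2*c.ε*c.φ y)) := h1
      _ ≤ (KD * Φ) * c0r := mul_le_mul_of_nonneg_left h2 hKΦ
      _ = KD * c0r * Φ := by ring
  obtain ⟨L, hLt, hLb⟩ := rep_bound hx0 c.hu c.hu'cont hKey
  have hL0 : L = 0 := tendsto_nhds_unique hLt c.hlim
  rw [hL0, sub_zero] at hLb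
  calc |c.u x| ≤ KD * c0r * Φ := hLb
    _ = (Real.sqrt C2 + 1) * Real.sqrt (c1r * (D1+D2+D3)) * c0r * Φ := by rw [hKD]

end Ctx
end PAgmon

open MeasureTheory Filter Set intervalIntegral

namespace PAgmon

/-- Bound an interval integral of a nonnegative continuous function
by the `toReal` of a dominating lintegral. -/
lemma interval_le_toReal {f : ℝ → ℝ} {p q : ℝ} {S : Set ℝ} (hpq : p ≤ q)
    (hsub : Ioo p q ⊆ S) (hcont : ContinuousOn f (Icc p q))
    (hnn : ∀ y ∈ Ioo p q, 0 ≤ f y) {T : ENNReal}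
    (hle : (∫⁻ y in S, ENNReal.ofReal (f y)) ≤ T) (hTtop : T ≠ ⊤) :
    (∫ y in p..q, f y) ≤ T.toReal := by
  have hInt : IntegrableOn f (Ioo p q) volume :=
    (hcont.integrableOn_compact isCompact_Icc).mono_set Ioo_subset_Icc_self
  have hJ : (∫ y in p..q, f y) = ∫ y in Ioo p q, f y := by
    rw [intervalIntegral.integral_of_le hpq, integral_Ioc_eq_integral_Ioo]
  have hofReal : ENNReal.ofReal (∫ y in Ioo p q, f y)
      = ∫⁻ y in Ioo p q, ENNReal.ofReal (f y) := by
    apply ofReal_integral_eq_lintegral_ofReal hInt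
    rw [EventuallyLE, ae_restrict_iff' measurableSet_Ioo]
    exact Eventually.of_forall (fun y hy => hnn y hy)
  have hmono : (∫⁻ y in Ioo p q, ENNReal.ofReal (f y)) ≤ ∫⁻ y in S, ENNReal.ofReal (f y) :=
    lintegral_mono_set hsub
  have h1 : ENNReal.ofReal (∫ y in Ioo p q, f y) ≤ T := by
    rw [hofReal]; exact le_trans hmono hle
  have h2 := ENNReal.toReal_mono hTtop h1
  rw [ENNReal.toReal_ofReal_eq_iff.mpr] at h2
  · rwa [hJ]
  · exact setIntegral_nonneg measurableSet_Ioo hnn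

/-- positivity of a lintegral of a positive continuous function over `Ioi p` -/
lemma lint_pos {f : ℝ → ℝ} {p : ℝ} (hf : ContinuousOn f (Ioi p))
    (hpos : ∀ y ∈ Ioi p, 0 < f y) :
    0 < ∫⁻ y in Ioi p, ENNReal.ofReal (f y) := by
  rw [pos_iff_ne_zero]
  intro h0
  have haem : AEMeasurable (fun y => ENNReal.ofReal (f y)) (volume.restrict (Ioi p)) :=
    ENNReal.measurable_ofReal.comp_aemeasurable (hf.aemeasurable measurableSet_Ioi)
  have hae := (lintegral_eq_zero_iff' haem).mp h0
  have hset : (volume.restrict (Ioi p)) {y | ¬ (ENNReal.ofReal (f y) = 0)} = 0 := by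
    have := hae
    rw [EventuallyEq, ae_iff] at this
    simpa using this
  have hsub : Ioi p ⊆ {y | ¬ (ENNReal.ofReal (f y) = 0)} := by
    intro y hy
    simp only [mem_setOf_eq]
    exact (ENNReal.ofReal_pos.mpr (hpos y hy)).ne'
  have h1 : (volume.restrict (Ioi p)) (Ioi p) ≤ 0 := hset ▸ measure_mono hsub
  rw [Measure.restrict_apply_self] at h1
  rw [Real.volume_Ioi] at h1
  simp at h1

namespace Ctx
variable (c : Ctx)

/-- When all data vanish, `u` and `u'` vanish beyond `x_C`. -/
lemma zero_case
    (hD1 : ∀ R, c.xB ≤ R → (∫ y in c.xB..R, c.W y * c.w y^2 / c.V y) ≤ 0)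
    (hD2 : (∫ y in c.a..c.xB, c.w y^2 / c.V y) ≤ 0)
    (hD3 : (∫ y in c.a..c.xB, c.u y^2) / (c.xB - c.xA)^2 ≤ 0)
    {x : ℝ} (hx0 : 0 < x) (hx : c.Cl < c.V x) : c.u x = 0 ∧ c.u' x = 0 := by
  have hxC : c.xC < x := c.hxC_lt hx0 hx
  have hxB : c.xB < x := lt_trans c.hxBC hxC
  have hax : c.a < x := lt_trans c.haB hxB
  have hH0 : ∀ R, c.a ≤ R → (∫ y in c.a..R, c.G y) = 0 := by
    intro R hR
    have hub := c.energy_mono 0 0 0 hD1 hD2 hD3 le_rfl hR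
    have hlb : 0 ≤ ∫ y in c.a..R, c.G y :=
      intervalIntegral.integral_nonneg hR (fun y hy => c.hGnonneg hy.1)
    have : (16384/(3*(1-c.γ)^2) : ℝ) * (0 + 0 + 0) = 0 := by ring
    rw [this] at hub
    linarith
  have hder : HasDerivAt (fun R => ∫ y in c.a..R, c.G y) (c.G x) x := by
    apply intervalIntegral.integral_hasDerivAt_right
    · apply ContinuousOn.intervalIntegrable
      apply c.hGcont.mono
      intro y hy
      rcases le_total c.a x with h | h
      · rw [uIcc_of_le h] at hy; exact lt_of_lt_of_le c.ha0 hy.1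
      · rw [uIcc_of_ge h] at hy; exact lt_of_lt_of_le hx0 hy.1
    · exact ContinuousOn.stronglyMeasurableAtFilter isOpen_Ioi c.hGcont x hx0
    · exact (c.hGcont x hx0).continuousAt (Ioi_mem_nhds hx0)
  have hloc : (fun R => ∫ y in c.a..R, c.G y) =ᶠ[nhds x] (fun _ => (0:ℝ)) := by
    filter_upwards [Ioi_mem_nhds hax] with R hR
    exact hH0 R (le_of_lt hR)
  have hder0 : HasDerivAt (fun _ : ℝ => (0:ℝ)) (c.G x) x := hder.congr_of_eventuallyEq hloc.symm
  have hGx : c.G x = 0 := by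
    have h1 := (hasDerivAt_const x (0:ℝ)).unique hder0
    exact h1.symm
  have hχx : c.χ x = 1 := c.hχ1 hxB.le
  have hWx := c.Wpos x
  have hVx := c.hVpos hax.le
  unfold G at hGx
  rw [hχx] at hGx
  have hsum : c.u' x^2 + c.V x * c.u x^2 = 0 := by
    have : c.W x * 1^2 * (c.u' x^2 + c.V x * c.u x^2) = 0 := hGx
    nlinarith [hWx]
  constructor
  · have h1 : c.u x^2 ≤ 0 := by nlinarith [sq_nonneg (c.u' x), hVx]
    exact sq_eq_zero_iff.mp (le_antisymm h1 (sq_nonneg _))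
  · have h1 : c.u' x^2 ≤ 0 := by nlinarith [sq_nonneg (c.u x), mul_nonneg hVx.le (sq_nonneg (c.u x))]
    exact sq_eq_zero_iff.mp (le_antisymm h1 (sq_nonneg _))

end Ctx
end PAgmon

open MeasureTheory Filter Set intervalIntegral

namespace PAgmon

lemma mul4_top (a b c d : ENNReal) (ha : a ≠ 0) (hb : b ≠ 0) (hc : c ≠ 0) (hd : d ≠ 0)
    (h : a = ⊤ ∨ b = ⊤ ∨ c = ⊤ ∨ d = ⊤) : a * b * c * d = ⊤ := by
  rcases h with h | h | h | h <;>
    simp [ENNReal.mul_eq_top, ha, hb, hc, hd, h]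

namespace Ctx
variable (c : Ctx)

lemma WwV_cont {s t : ℝ} (hs : c.a ≤ s) :
    ContinuousOn (fun y => c.W y * c.w y^2 / c.V y) (Icc s t) := by
  have hsub : Icc s t ⊆ Ioi (0:ℝ) := fun y hy => lt_of_lt_of_le c.ha0 (le_trans hs hy.1)
  exact ((c.hWcont.mono hsub).mul ((c.hw.mono hsub).pow 2)).div (c.hV.mono hsub)
    (fun y hy => (c.hVpos (le_trans hs hy.1)).ne')

lemma expV_cont {S : Set ℝ} (hS : S ⊆ Ioi (0:ℝ)) :
    ContinuousOn (fun y => Real.exp (-(2*c.ε*c.φ y)) * c.V y) S :=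
  ((Real.continuous_exp.comp_continuousOn
    ((continuousOn_const.mul (c.hφcont.mono hS)).neg)).mul (c.hV.mono hS))

lemma exp_cont {S : Set ℝ} (hS : S ⊆ Ioi (0:ℝ)) :
    ContinuousOn (fun y => Real.exp (-(2*c.ε*c.φ y))) S :=
  Real.continuous_exp.comp_continuousOn
    ((continuousOn_const.mul (c.hφcont.mono hS)).neg)

lemma wV_cont {s t : ℝ} (hs : c.a ≤ s) :
    ContinuousOn (fun y => c.w y^2 / c.V y) (Icc s t) := by
  have hsub : Icc s t ⊆ Ioi (0:ℝ) := fun y hy => lt_of_lt_of_le c.ha0 (le_trans hs hy.1)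
  exact ((c.hw.mono hsub).pow 2).div (c.hV.mono hsub)
    (fun y hy => (c.hVpos (le_trans hs hy.1)).ne')

lemma u2_cont {s t : ℝ} (hs : c.a ≤ s) :
    ContinuousOn (fun y => c.u y^2) (Icc s t) := by
  have hsub : Icc s t ⊆ Ioi (0:ℝ) := fun y hy => lt_of_lt_of_le c.ha0 (le_trans hs hy.1)
  exact (c.hucont.mono hsub).pow 2

end Ctx
end PAgmon

open PAgmon

/-- Pointwise Agmon bounds.  With `V` continuous and strictly increasing on `(0,∞)`, `w`
continuous, `u ∈ C²((0,∞))` solving `−u″ + Vu = w` with `u → 0` at `+∞`, values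
`0 ≤ A < B < Cl` of `V`, `V(x_B) = B`, and `ε, γ ∈ (0,1)`, there is `K = K(γ)` such that for
all `x` with `V(x) > Cl` and all `β ≥ 0`: if `β + ε ≤ γ` then
`|u′(x)| ≤ K(𝔠₁𝔇)^{1/2}exp(−β∫_{x_B}^x √V)`, and if moreover `β + 3ε ≤ γ` then
`|u(x)| ≤ K𝔠₀(𝔠₁𝔇)^{1/2}exp(−β∫_{x_B}^x √V)`. -/
theorem pointwise_agmon (γ : ℝ) (hγ0 : 0 < γ) (hγ1 : γ < 1) :
    ∃ K : ℝ, 0 < K ∧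
      ∀ V w u u' u'' : ℝ → ℝ, ∀ A B Cl xB ε : ℝ,
        ContinuousOn V (Ioi 0) → StrictMonoOn V (Ioi 0) →
        ContinuousOn w (Ioi 0) →
        (∀ x ∈ Ioi (0 : ℝ), HasDerivAt u (u' x) x) →
        (∀ x ∈ Ioi (0 : ℝ), HasDerivAt u' (u'' x) x) →
        ContinuousOn u'' (Ioi 0) →
        (∀ x ∈ Ioi (0 : ℝ), -u'' x + V x * u x = w x) →
        Tendsto u atTop (nhds 0) →
        0 ≤ A → A < B → B < Cl →
        (∃ xA ∈ Ioi (0 : ℝ), V xA = A) → (∃ xC ∈ Ioi (0 : ℝ), V xC = Cl) →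
        xB ∈ Ioi (0 : ℝ) → V xB = B →
        0 < ε → ε < 1 →
        let c0 : ENNReal := ∫⁻ y in {y : ℝ | 0 < y ∧ Cl < V y},
          ENNReal.ofReal (Real.exp (-(2 * ε * ∫ t in xB..y, Real.sqrt (V t))))
        let c1 : ENNReal := ∫⁻ y in {y : ℝ | 0 < y ∧ Cl < V y},
          ENNReal.ofReal (Real.exp (-(2 * ε * ∫ t in xB..y, Real.sqrt (V t))) * V y)
        let Dq : ENNReal :=
          (∫⁻ y in {y : ℝ | 0 < y ∧ B < V y},
            ENNReal.ofReal
              (Real.exp (2 * γ * ∫ t in xB..y, Real.sqrt (V t)) * w y ^ 2 / V y)) +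
          (∫⁻ y in {y : ℝ | 0 < y ∧ A < V y ∧ V y < B},
            ENNReal.ofReal (w y ^ 2 / V y)) +
          (volume {y : ℝ | 0 < y ∧ A < V y ∧ V y < B} ^ 2)⁻¹ *
            ∫⁻ y in {y : ℝ | 0 < y ∧ A < V y ∧ V y < B}, ENNReal.ofReal (u y ^ 2)
        ∀ x β : ℝ, 0 < x → Cl < V x → 0 ≤ β →
          (β + ε ≤ γ →
            ENNReal.ofReal |u' x| ≤
              ENNReal.ofReal K * (c1 * Dq) ^ ((1 : ℝ) / 2) *
                ENNReal.ofReal (Real.exp (-(β * ∫ t in xB..x, Real.sqrt (V t))))) ∧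
          (β + 3 * ε ≤ γ →
            ENNReal.ofReal |u x| ≤
              ENNReal.ofReal K * c0 * (c1 * Dq) ^ ((1 : ℝ) / 2) *
                ENNReal.ofReal (Real.exp (-(β * ∫ t in xB..x, Real.sqrt (V t))))) := by
  have hKpos : 0 < Real.sqrt (16384/(3*(1-γ)^2)) + 1 := by positivity
  refine ⟨Real.sqrt (16384/(3*(1-γ)^2)) + 1, hKpos, ?_⟩
  intro V w u u' u'' A B Cl xB ε hV hVmono hw hu hu' hu'' heq hlim hA0 hAB hBC hexA hexC
    hxBmem hVxB hε0 hε1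
  obtain ⟨xA, hxAmem, hVxA⟩ := hexA
  obtain ⟨xC, hxCmem, hVxC⟩ := hexC
  intro c0 c1 Dq x β hx0 hx hβ0
  set c : Ctx := ⟨V, w, u, u', u'', A, B, Cl, xA, xB, xC, ε, γ, hV, hVmono, hw, hu, hu',
    hu'', heq, hlim, hA0, hAB, hBC, hxAmem, hVxA, hxCmem, hVxC, hxBmem, hVxB, hε0, hε1,
    hγ0, hγ1⟩ with hc
  have hsetC : {y : ℝ | 0 < y ∧ Cl < V y} = Ioi xC := c.setC_eq
  have hsetB : {y : ℝ | 0 < y ∧ B < V y} = Ioi xB := c.setB_eq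
  have hsetS : {y : ℝ | 0 < y ∧ A < V y ∧ V y < B} = Ioo xA xB := c.setS_eq
  have hc1eq : c1 = ∫⁻ y in Ioi xC,
      ENNReal.ofReal (Real.exp (-(2 * ε * ∫ t in xB..y, Real.sqrt (V t))) * V y) := by
    show (∫⁻ y in {y : ℝ | 0 < y ∧ Cl < V y},
      ENNReal.ofReal (Real.exp (-(2 * ε * ∫ t in xB..y, Real.sqrt (V t))) * V y)) = _
    rw [hsetC]
  have hc0eq : c0 = ∫⁻ y in Ioi xC,
      ENNReal.ofReal (Real.exp (-(2 * ε * ∫ t in xB..y, Real.sqrt (V t)))) := by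
    show (∫⁻ y in {y : ℝ | 0 < y ∧ Cl < V y},
      ENNReal.ofReal (Real.exp (-(2 * ε * ∫ t in xB..y, Real.sqrt (V t))))) = _
    rw [hsetC]
  set T1 : ENNReal := ∫⁻ y in Ioi xB,
    ENNReal.ofReal (Real.exp (2 * γ * ∫ t in xB..y, Real.sqrt (V t)) * w y ^ 2 / V y)
    with hT1def
  set T2 : ENNReal := ∫⁻ y in Ioo xA xB, ENNReal.ofReal (w y ^ 2 / V y) with hT2def
  set U : ENNReal := ∫⁻ y in Ioo xA xB, ENNReal.ofReal (u y ^ 2) with hUdef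
  set T3 : ENNReal := (volume (Ioo xA xB) ^ 2)⁻¹ * U with hT3def
  have hDqeq : Dq = T1 + T2 + T3 := by
    show ((∫⁻ y in {y : ℝ | 0 < y ∧ B < V y},
        ENNReal.ofReal (Real.exp (2 * γ * ∫ t in xB..y, Real.sqrt (V t)) * w y ^ 2 / V y)) +
      (∫⁻ y in {y : ℝ | 0 < y ∧ A < V y ∧ V y < B}, ENNReal.ofReal (w y ^ 2 / V y)) +
      (volume {y : ℝ | 0 < y ∧ A < V y ∧ V y < B} ^ 2)⁻¹ *
        ∫⁻ y in {y : ℝ | 0 < y ∧ A < V y ∧ V y < B}, ENNReal.ofReal (u y ^ 2)) = _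
    rw [hsetB, hsetS]
  have hxA0 : (0:ℝ) < xA := hxAmem
  have hxB0 : (0:ℝ) < xB := hxBmem
  have hxC0 : (0:ℝ) < xC := hxCmem
  have hd0 : (0:ℝ) < xB - xA := sub_pos.mpr c.hxAB
  have hvol : volume (Ioo xA xB) = ENNReal.ofReal (xB - xA) := Real.volume_Ioo
  have hvolT : volume (Ioo xA xB) ≠ ⊤ := by rw [hvol]; exact ENNReal.ofReal_ne_top
  have hinvne : ((volume (Ioo xA xB)) ^ 2)⁻¹ ≠ 0 := by
    simp only [ne_eq, ENNReal.inv_eq_zero]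
    exact ENNReal.pow_ne_top hvolT
  have hVposC : ∀ y ∈ Ioi xC, 0 < V y := by
    intro y hy
    have h1 : c.Cl < c.V y := by
      have := c.hVmono c.hxC (mem_Ioi.mpr (lt_trans hxC0 hy)) hy
      rw [c.hVxC] at this; exact this
    have h2 : (0:ℝ) < Cl := lt_of_le_of_lt hA0 (lt_trans hAB hBC)
    exact lt_trans h2 h1
  have hc1pos : 0 < c1 := by
    rw [hc1eq]
    apply lint_pos (f := fun y => Real.exp (-(2*c.ε*c.φ y)) * c.V y)
    · exact c.expV_cont (fun y hy => lt_trans hxC0 hy)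
    · intro y hy
      exact mul_pos (Real.exp_pos _) (hVposC y hy)
  have hc0pos : 0 < c0 := by
    rw [hc0eq]
    apply lint_pos (f := fun y => Real.exp (-(2*c.ε*c.φ y)))
    · exact c.exp_cont (fun y hy => lt_trans hxC0 hy)
    · intro y _
      exact Real.exp_pos _
  have hIooSub : Ioo c.a xB ⊆ Ioo xA xB := Ioo_subset_Ioo c.haA.le le_rfl
  have hKne : ENNReal.ofReal (Real.sqrt (16384/(3*(1-γ)^2)) + 1) ≠ 0 :=
    (ENNReal.ofReal_pos.mpr hKpos).ne'
  have hexpne : ENNReal.ofReal (Real.exp (-(β * ∫ t in xB..x, Real.sqrt (V t)))) ≠ 0 :=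
    (ENNReal.ofReal_pos.mpr (Real.exp_pos _)).ne'
  -- zero case, shared
  have hzero : Dq = 0 → c.u x = 0 ∧ c.u' x = 0 := by
    intro hDq0
    have hT123 : T1 = 0 ∧ T2 = 0 ∧ T3 = 0 := by
      rw [hDqeq] at hDq0
      rcases add_eq_zero.mp hDq0 with ⟨h12, h3⟩
      rcases add_eq_zero.mp h12 with ⟨h1, h2⟩
      exact ⟨h1, h2, h3⟩
    have hU0 : U = 0 := by
      have h := hT123.2.2
      rw [hT3def] at h
      rcases mul_eq_zero.mp h with h' | h'
      · exact absurd h' hinvne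
      · exact h'
    have hD1 : ∀ R, c.xB ≤ R → (∫ y in c.xB..R, c.W y * c.w y^2 / c.V y) ≤ 0 := by
      intro R hR
      have h := interval_le_toReal (f := fun y => c.W y * c.w y^2 / c.V y)
        (S := Ioi xB) (T := T1) hR Ioo_subset_Ioi_self (c.WwV_cont c.haB.le)
        (fun y hy => by
          have hVy := c.hVpos (le_trans c.haB.le hy.1.le)
          have hW := c.Wpos y
          positivity)
        le_rfl (by rw [hT123.1]; exact ENNReal.zero_ne_top)
      rw [hT123.1, ENNReal.toReal_zero] at h
      exact h
    have hD2 : (∫ y in c.a..c.xB, c.w y^2 / c.V y) ≤ 0 := by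
      have h := interval_le_toReal (f := fun y => c.w y^2 / c.V y)
        (S := Ioo xA xB) (T := T2) c.haB.le hIooSub (c.wV_cont le_rfl)
        (fun y hy => by
          have hVy := c.hVpos hy.1.le
          positivity)
        le_rfl (by rw [hT123.2.1]; exact ENNReal.zero_ne_top)
      rw [hT123.2.1, ENNReal.toReal_zero] at h
      exact h
    have hD3 : (∫ y in c.a..c.xB, c.u y^2) / (c.xB - c.xA)^2 ≤ 0 := by
      have h := interval_le_toReal (f := fun y => c.u y^2)
        (S := Ioo xA xB) (T := U) c.haB.le hIooSub (c.u2_cont le_rfl)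
        (fun y _ => sq_nonneg _)
        le_rfl (by rw [hU0]; exact ENNReal.zero_ne_top)
      rw [hU0, ENNReal.toReal_zero] at h
      exact div_nonpos_iff.mpr (Or.inr ⟨h, sq_nonneg _⟩)
    exact c.zero_case hD1 hD2 hD3 hx0 hx
  -- finite data, shared
  have hOfDqT : Dq ≠ ⊤ → T1 ≠ ⊤ ∧ T2 ≠ ⊤ ∧ T3 ≠ ⊤ ∧ U ≠ ⊤ := by
    intro hDqT
    have hT1T : T1 ≠ ⊤ := by
      intro h; rw [hDqeq] at hDqT; rw [h] at hDqT; simp at hDqT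
    have hT2T : T2 ≠ ⊤ := by
      intro h; rw [hDqeq] at hDqT; rw [h] at hDqT; simp at hDqT
    have hT3T : T3 ≠ ⊤ := by
      intro h; rw [hDqeq] at hDqT; rw [h] at hDqT; simp at hDqT
    have hUT : U ≠ ⊤ := by
      intro h
      rw [hT3def, h, ENNReal.mul_top hinvne] at hT3T
      exact hT3T rfl
    exact ⟨hT1T, hT2T, hT3T, hUT⟩
  have hmain : Dq ≠ ⊤ → c1 ≠ ⊤ → β + ε ≤ γ →
      (|c.u' x| ≤ (Real.sqrt (16384/(3*(1-γ)^2)) + 1)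
        * Real.sqrt (c1.toReal * Dq.toReal)
        * Real.exp (-(β * ∫ t in xB..x, Real.sqrt (V t))))
      ∧ ((β + 3 * ε ≤ γ) → c0 ≠ ⊤ →
        |c.u x| ≤ (Real.sqrt (16384/(3*(1-γ)^2)) + 1)
          * Real.sqrt (c1.toReal * Dq.toReal) * c0.toReal
          * Real.exp (-(β * ∫ t in xB..x, Real.sqrt (V t)))) := by
    intro hDqT hc1T hβε
    obtain ⟨hT1T, hT2T, hT3T, hUT⟩ := hOfDqT hDqT
    have hD1 : ∀ R, c.xB ≤ R →
        (∫ y in c.xB..R, c.W y * c.w y^2 / c.V y) ≤ T1.toReal := by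
      intro R hR
      exact interval_le_toReal (f := fun y => c.W y * c.w y^2 / c.V y)
        (S := Ioi xB) (T := T1) hR Ioo_subset_Ioi_self (c.WwV_cont c.haB.le)
        (fun y hy => by
          have hVy := c.hVpos (le_trans c.haB.le hy.1.le)
          have hW := c.Wpos y
          positivity)
        le_rfl hT1T
    have hD2 : (∫ y in c.a..c.xB, c.w y^2 / c.V y) ≤ T2.toReal :=
      interval_le_toReal (f := fun y => c.w y^2 / c.V y)
        (S := Ioo xA xB) (T := T2) c.haB.le hIooSub (c.wV_cont le_rfl)
        (fun y hy => by
          have hVy := c.hVpos hy.1.le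
          positivity)
        le_rfl hT2T
    have hD3 : (∫ y in c.a..c.xB, c.u y^2) / (c.xB - c.xA)^2 ≤ T3.toReal := by
      have hJ : (∫ y in c.a..c.xB, c.u y^2) ≤ U.toReal :=
        interval_le_toReal (f := fun y => c.u y^2)
          (S := Ioo xA xB) (T := U) c.haB.le hIooSub (c.u2_cont le_rfl)
          (fun y _ => sq_nonneg _) le_rfl hUT
      have hT3r : T3.toReal = U.toReal / (xB - xA)^2 := by
        rw [hT3def, ENNReal.toReal_mul, ENNReal.toReal_inv, ENNReal.toReal_pow, hvol,
          ENNReal.toReal_ofReal hd0.le]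
        ring
      rw [hT3r]
      show (∫ y in c.a..c.xB, c.u y^2) / (xB - xA)^2 ≤ U.toReal / (xB - xA)^2
      have hpow : (0:ℝ) < (xB - xA)^2 := by positivity
      exact (div_le_div_iff_of_pos_right hpow).mpr hJ
    have hc1b : ∀ p q, c.xC ≤ p → p ≤ q →
        (∫ y in p..q, Real.exp (-(2*c.ε*c.φ y)) * c.V y) ≤ c1.toReal := by
      intro p q hp hpq
      have hp0 : (0:ℝ) < p := lt_of_lt_of_le hxC0 hp
      exact interval_le_toReal (f := fun y => Real.exp (-(2*c.ε*c.φ y)) * c.V y)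
        (S := Ioi xC) (T := c1) hpq
        (fun y hy => lt_of_le_of_lt hp hy.1)
        (c.expV_cont (fun y hy => lt_of_lt_of_le hp0 hy.1))
        (fun y hy => by
          have hVy := hVposC y (lt_of_le_of_lt hp hy.1)
          positivity)
        hc1eq.ge hc1T
    have hsum : T1.toReal + T2.toReal + T3.toReal = Dq.toReal := by
      rw [hDqeq, ENNReal.toReal_add (ENNReal.add_ne_top.mpr ⟨hT1T, hT2T⟩) hT3T,
        ENNReal.toReal_add hT1T hT2T]
    constructor
    · have hbd := c.deriv_bound T1.toReal T2.toReal T3.toReal c1.toReal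
        hD1 hD2 hD3 hc1b hx0 hx hβ0 hβε
      rw [hsum] at hbd
      exact hbd
    · intro hβ3 hc0T
      have hc0b : ∀ p q, c.xC ≤ p → p ≤ q →
          (∫ y in p..q, Real.exp (-(2*c.ε*c.φ y))) ≤ c0.toReal := by
        intro p q hp hpq
        have hp0 : (0:ℝ) < p := lt_of_lt_of_le hxC0 hp
        exact interval_le_toReal (f := fun y => Real.exp (-(2*c.ε*c.φ y)))
          (S := Ioi xC) (T := c0) hpq
          (fun y hy => lt_of_le_of_lt hp hy.1)
          (c.exp_cont (fun y hy => lt_of_lt_of_le hp0 hy.1))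
          (fun y _ => (Real.exp_pos _).le)
          hc0eq.ge hc0T
      have hbd := c.value_bound T1.toReal T2.toReal T3.toReal c1.toReal c0.toReal
        hD1 hD2 hD3 hc1b hc0b hx0 hx hβ0 hβ3
      rw [hsum] at hbd
      exact hbd
  have hmid : c1 ≠ ⊤ → Dq ≠ ⊤ →
      ENNReal.ofReal (Real.sqrt (c1.toReal * Dq.toReal)) = (c1 * Dq) ^ ((1:ℝ)/2) := by
    intro hc1T hDqT
    rw [← ENNReal.toReal_mul, Real.sqrt_eq_rpow, ENNReal.toReal_rpow,
      ENNReal.ofReal_toReal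
        (ENNReal.rpow_ne_top_of_nonneg (by norm_num) (ENNReal.mul_ne_top hc1T hDqT))]
  constructor
  · -- derivative bound
    intro hβε
    by_cases hDq0 : Dq = 0
    · have h0 : u' x = 0 := (hzero hDq0).2
      rw [h0]
      simp
    · by_cases hfin : c1 ≠ ⊤ ∧ Dq ≠ ⊤
      · obtain ⟨hc1T, hDqT⟩ := hfin
        have hbd := (hmain hDqT hc1T hβε).1
        refine le_trans (ENNReal.ofReal_le_ofReal hbd) ?_
        rw [ENNReal.ofReal_mul (by positivity), ENNReal.ofReal_mul (by positivity),
          hmid hc1T hDqT]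
      · have hor : c1 = ⊤ ∨ Dq = ⊤ := by
          by_contra hh
          push_neg at hh
          exact hfin ⟨hh.1, hh.2⟩
        have hprod : c1 * Dq = ⊤ := by
          rcases hor with h | h
          · rw [h]; exact ENNReal.top_mul hDq0
          · rw [h]; exact ENNReal.mul_top hc1pos.ne'
        have hrp : (c1 * Dq) ^ ((1:ℝ)/2) = (⊤ : ENNReal) := by
          rw [hprod]; exact ENNReal.top_rpow_of_pos (by norm_num)
        rw [hrp, ENNReal.mul_top hKne, ENNReal.top_mul hexpne]
        exact le_top
  · intro hβ3
    have hβε : β + ε ≤ γ := by have := hε0; linarith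
    by_cases hDq0 : Dq = 0
    · have h0 : u x = 0 := (hzero hDq0).1
      rw [h0]
      simp
    · by_cases hfin : c0 ≠ ⊤ ∧ c1 ≠ ⊤ ∧ Dq ≠ ⊤
      · obtain ⟨hc0T, hc1T, hDqT⟩ := hfin
        have hbd := (hmain hDqT hc1T hβε).2 hβ3 hc0T
        refine le_trans (ENNReal.ofReal_le_ofReal hbd) ?_
        rw [ENNReal.ofReal_mul (by positivity), ENNReal.ofReal_mul (by positivity),
          ENNReal.ofReal_mul (by positivity), hmid hc1T hDqT, ENNReal.ofReal_toReal hc0T]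
        have hcomm : ENNReal.ofReal (Real.sqrt (16384/(3*(1-γ)^2)) + 1)
            * ((c1 * Dq) ^ ((1:ℝ)/2)) * c0
            * ENNReal.ofReal (Real.exp (-(β * ∫ t in xB..x, Real.sqrt (V t))))
            = ENNReal.ofReal (Real.sqrt (16384/(3*(1-γ)^2)) + 1) * c0
            * ((c1 * Dq) ^ ((1:ℝ)/2))
            * ENNReal.ofReal (Real.exp (-(β * ∫ t in xB..x, Real.sqrt (V t)))) := by
          ring
        rw [hcomm]
      · have hor : c0 = ⊤ ∨ c1 = ⊤ ∨ Dq = ⊤ := by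
          by_contra hh
          push_neg at hh
          exact hfin ⟨hh.1, hh.2.1, hh.2.2⟩
        have hccne : (c1 * Dq) ^ ((1:ℝ)/2) ≠ 0 := by
          intro h
          rcases ENNReal.rpow_eq_zero_iff.mp h with ⟨h1, _⟩ | ⟨_, h2⟩
          · exact (mul_ne_zero hc1pos.ne' hDq0) h1
          · norm_num at h2
        have hrtop : c1 = ⊤ ∨ Dq = ⊤ → (c1 * Dq) ^ ((1:ℝ)/2) = (⊤ : ENNReal) := by
          intro hor2
          have hprod : c1 * Dq = ⊤ := by
            rcases hor2 with h | h
            · rw [h]; exact ENNReal.top_mul hDq0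
            · rw [h]; exact ENNReal.mul_top hc1pos.ne'
          rw [hprod]; exact ENNReal.top_rpow_of_pos (by norm_num)
        have htop : ENNReal.ofReal (Real.sqrt (16384/(3*(1-γ)^2)) + 1) * c0
            * ((c1 * Dq) ^ ((1:ℝ)/2))
            * ENNReal.ofReal (Real.exp (-(β * ∫ t in xB..x, Real.sqrt (V t)))) = ⊤ := by
          apply mul4_top _ _ _ _ hKne hc0pos.ne' hccne hexpne
          rcases hor with h | h | h
          · exact Or.inr (Or.inl h)
          · exact Or.inr (Or.inr (Or.inl (hrtop (Or.inl h))))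
          · exact Or.inr (Or.inr (Or.inl (hrtop (Or.inr h))))
        rw [htop]
        exact le_top
end

section
/- Let V : (0,∞) → (0,∞) be continuous and strictly increasing with V(x) → 0 as x → 0⁺ and V(x) → +∞ as x → +∞. Let E > 0 and set δ = E · |{x > 0 : E < V(x) < 2E}|². Let u ∈ C²((0,∞);ℝ) solve −u″ + Vu = Eu on (0,∞) with limsup_{x→+∞}|u(x)| < +∞. Then there is a universal constant C such that ∫_{{V≥2E}} V u² ≤ C δ^{−1} E ∫_{{E<V<2E}} u² and ∫_{{V≥2E}} u² ≤ C δ^{−1} ∫_{{E<V<2E}} u². -/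
open MeasureTheory Filter Set
open scoped ENNReal

lemma helper_lintegral {a B : ℝ} {f : ℝ → ℝ} (hf : ContinuousOn f (Ici a))
    (hf0 : ∀ x ∈ Ici a, 0 ≤ f x)
    (hB : ∀ n : ℕ, ∫ x in a..(a + (n : ℝ)), f x ≤ B) :
    ∫⁻ x in Ici a, ENNReal.ofReal (f x) ≤ ENNReal.ofReal B := by
  have hmeas : AEMeasurable (fun x => ENNReal.ofReal (f x)) (volume.restrict (Ici a)) :=
    ENNReal.measurable_ofReal.comp_aemeasurable (hf.aemeasurable measurableSet_Ici)
  set g : ℕ → ℝ → ℝ≥0∞ :=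
    fun n => (Icc a (a + (n : ℝ))).indicator (fun x => ENNReal.ofReal (f x)) with hg
  have hgmeas : ∀ n, AEMeasurable (g n) (volume.restrict (Ici a)) := fun n =>
    hmeas.indicator measurableSet_Icc
  have hgmono : ∀ x, Monotone (fun n => g n x) := by
    intro x n m hnm
    exact indicator_le_indicator_of_subset
      (Icc_subset_Icc_right (show a + (n:ℝ) ≤ a + (m:ℝ) by linarith [(by exact_mod_cast hnm : (n:ℝ) ≤ m)]))
      (fun _ => zero_le) x
  have hsup : ∀ x ∈ Ici a, (⨆ n, g n x) = ENNReal.ofReal (f x) := by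
    intro x hx
    refine le_antisymm (iSup_le fun n => indicator_le_self _ _ x) ?_
    refine le_iSup_of_le ⌈x - a⌉₊ ?_
    have hxm : x ∈ Icc a (a + (⌈x - a⌉₊ : ℝ)) := ⟨hx, by linarith [Nat.le_ceil (x - a)]⟩
    simp only [hg]
    rw [indicator_of_mem hxm]
  calc ∫⁻ x in Ici a, ENNReal.ofReal (f x)
      = ∫⁻ x in Ici a, ⨆ n, g n x :=
        lintegral_congr_ae
          ((ae_restrict_mem measurableSet_Ici).mono fun x hx => (hsup x hx).symm)
    _ = ⨆ n, ∫⁻ x in Ici a, g n x :=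
        lintegral_iSup' hgmeas (ae_of_all _ fun x => hgmono x)
    _ ≤ ENNReal.ofReal B := by
        refine iSup_le fun n => ?_
        have hsub : Icc a (a + (n : ℝ)) ⊆ Ici a := Icc_subset_Ici_self
        simp only [hg]
        rw [lintegral_indicator measurableSet_Icc _,
          Measure.restrict_restrict measurableSet_Icc,
          inter_eq_self_of_subset_left hsub]
        have hint : IntegrableOn f (Icc a (a + (n : ℝ))) :=
          (hf.mono hsub).integrableOn_Icc
        rw [← ofReal_integral_eq_lintegral_ofReal hint
          ((ae_restrict_mem measurableSet_Icc).mono fun x hx => hf0 x (hsub hx))]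
        apply ENNReal.ofReal_le_ofReal
        rw [MeasureTheory.integral_Icc_eq_integral_Ioc,
          ← intervalIntegral.integral_of_le (by linarith [Nat.cast_nonneg (α := ℝ) n])]
        exact hB n
/-- Let `V : (0,∞) → (0,∞)` be continuous and strictly increasing with `V → 0` at `0⁺` and
`V → +∞` at `+∞`, let `E > 0` and `δ = E·|{E < V < 2E}|²`, and let `u ∈ C²((0,∞))` solve
`−u″ + Vu = Eu` with `limsup_{x→+∞}|u| < ∞`.  Then, with a universal constant `C`:
`∫_{V≥2E} V u² ≤ C δ⁻¹ E ∫_{E<V<2E} u²` and `∫_{V≥2E} u² ≤ C δ⁻¹ ∫_{E<V<2E} u²`. -/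
theorem agmon_energy_corollary :
    ∃ C : ℝ, 0 < C ∧
      ∀ V u u' u'' : ℝ → ℝ, ∀ E : ℝ,
        ContinuousOn V (Ioi 0) → StrictMonoOn V (Ioi 0) → (∀ x ∈ Ioi (0 : ℝ), 0 < V x) →
        Tendsto V (nhdsWithin 0 (Ioi 0)) (nhds 0) →
        Tendsto V atTop atTop →
        0 < E →
        (∀ x ∈ Ioi (0 : ℝ), HasDerivAt u (u' x) x) →
        (∀ x ∈ Ioi (0 : ℝ), HasDerivAt u' (u'' x) x) →
        ContinuousOn u'' (Ioi 0) →
        (∀ x ∈ Ioi (0 : ℝ), -u'' x + V x * u x = E * u x) →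
        (∃ M : ℝ, ∀ᶠ x in atTop, |u x| ≤ M) →
        (∫⁻ x in {x : ℝ | 0 < x ∧ 2 * E ≤ V x}, ENNReal.ofReal (V x * u x ^ 2)) ≤
          ENNReal.ofReal
              (C * (E * (volume {x : ℝ | 0 < x ∧ E < V x ∧ V x < 2 * E}).toReal ^ 2)⁻¹ * E) *
            (∫⁻ x in {x : ℝ | 0 < x ∧ E < V x ∧ V x < 2 * E}, ENNReal.ofReal (u x ^ 2)) ∧
        (∫⁻ x in {x : ℝ | 0 < x ∧ 2 * E ≤ V x}, ENNReal.ofReal (u x ^ 2)) ≤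
          ENNReal.ofReal
              (C * (E * (volume {x : ℝ | 0 < x ∧ E < V x ∧ V x < 2 * E}).toReal ^ 2)⁻¹) *
            (∫⁻ x in {x : ℝ | 0 < x ∧ E < V x ∧ V x < 2 * E}, ENNReal.ofReal (u x ^ 2)) := by
  refine ⟨2, by norm_num, ?_⟩
  intro V u u' u'' E hVc hVmono hVpos hV0 hVtop hE hu hu' hu''c hode hbdd
  -- continuity of u, u'
  have hucont : ContinuousOn u (Ioi 0) := fun x hx => (hu x hx).continuousAt.continuousWithinAt
  have hu'cont : ContinuousOn u' (Ioi 0) := fun x hx => (hu' x hx).continuousAt.continuousWithinAt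
  -- find points a, b with V b = E, V a = 2E
  obtain ⟨x₁, hx₁E, hx₁0⟩ : ∃ x₁, V x₁ < E ∧ x₁ ∈ Ioi (0:ℝ) :=
    ((hV0.eventually_lt_const hE).and self_mem_nhdsWithin).exists
  obtain ⟨x₂, hx₂E, hx₁₂⟩ : ∃ x₂, 2 * E < V x₂ ∧ x₁ < x₂ :=
    ((hVtop.eventually_gt_atTop (2 * E)).and (eventually_gt_atTop x₁)).exists
  have hsub₁ : Icc x₁ x₂ ⊆ Ioi 0 := fun x hx => lt_of_lt_of_le hx₁0 hx.1
  have hIVT := intermediate_value_Icc (le_of_lt hx₁₂) (hVc.mono hsub₁)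
  obtain ⟨b, hbmem, hVb⟩ : ∃ b ∈ Icc x₁ x₂, V b = E := hIVT ⟨hx₁E.le, by linarith⟩
  obtain ⟨a, hamem, hVa⟩ : ∃ a ∈ Icc x₁ x₂, V a = 2 * E := hIVT ⟨by linarith, hx₂E.le⟩
  have hb0 : (0:ℝ) < b := lt_of_lt_of_le hx₁0 hbmem.1
  have ha0 : (0:ℝ) < a := lt_of_lt_of_le hx₁0 hamem.1
  have hbI : b ∈ Ioi (0:ℝ) := hb0
  have haI : a ∈ Ioi (0:ℝ) := ha0
  have hba : b < a := (hVmono.lt_iff_lt hbI haI).mp (by rw [hVb, hVa]; linarith)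
  -- pointwise values of V
  have hVge : ∀ x, a ≤ x → 2 * E ≤ V x := by
    intro x hx
    rcases hx.eq_or_lt with h | h
    · rw [← h, hVa]
    · have := hVmono haI (mem_Ioi.mpr (ha0.trans h)) h
      linarith [hVa]
  have hVgtb : ∀ x, b < x → E < V x := by
    intro x hx
    have := hVmono hbI (mem_Ioi.mpr (hb0.trans hx)) hx
    linarith [hVb]
  -- set identifications
  have hset1 : {x : ℝ | 0 < x ∧ 2 * E ≤ V x} = Ici a := by
    ext x
    simp only [mem_setOf_eq, mem_Ici]
    constructor
    · rintro ⟨hx0, hVx⟩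
      by_contra h
      push_neg at h
      have := hVmono (mem_Ioi.mpr hx0) haI h
      rw [hVa] at this; linarith
    · intro h
      exact ⟨lt_of_lt_of_le ha0 h, hVge x h⟩
  have hset2 : {x : ℝ | 0 < x ∧ E < V x ∧ V x < 2 * E} = Ioo b a := by
    ext x
    simp only [mem_setOf_eq, mem_Ioo]
    constructor
    · rintro ⟨hx0, h1, h2⟩
      constructor
      · by_contra h
        push_neg at h
        have := (hVmono.le_iff_le (mem_Ioi.mpr hx0) hbI).mpr h
        rw [hVb] at this
        linarith
      · by_contra h
        push_neg at h
        have := hVge x h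
        linarith
    · rintro ⟨h1, h2⟩
      refine ⟨hb0.trans h1, hVgtb x h1, ?_⟩
      have := hVmono (mem_Ioi.mpr (hb0.trans h1)) haI h2
      rw [hVa] at this; exact this
  have hvol : (volume (Ioo b a)).toReal = a - b := by
    rw [Real.volume_Ioo, ENNReal.toReal_ofReal (by linarith)]
  -- g = u u'
  set g : ℝ → ℝ := fun x => u x * u' x with hgdef
  have hderivg : ∀ x ∈ Ioi (0:ℝ), HasDerivAt g (u' x ^ 2 + (V x - E) * u x ^ 2) x := by
    intro x hx
    have h1 := (hu x hx).mul (hu' x hx)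
    have h2 : u'' x = (V x - E) * u x := by linear_combination -(hode x hx)
    have h3 : u' x ^ 2 + (V x - E) * u x ^ 2 = u' x * u' x + u x * u'' x := by
      rw [h2]; ring
    rw [h3]; exact h1
  have hgcont : ContinuousOn g (Ioi 0) := hucont.mul hu'cont
  -- g monotone on Ici b
  have hgmono : MonotoneOn g (Ici b) := by
    have hIb : Ici b ⊆ Ioi (0:ℝ) := fun x hx => lt_of_lt_of_le hb0 hx
    apply monotoneOn_of_deriv_nonneg (convex_Ici b) (hgcont.mono hIb)
    · rw [interior_Ici]
      exact fun x hx => ((hderivg x (hb0.trans hx)).differentiableAt).differentiableWithinAt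
    · rw [interior_Ici]
      intro x hx
      rw [(hderivg x (mem_Ioi.mpr (hb0.trans hx))).deriv]
      have := hVgtb x hx
      nlinarith [sq_nonneg (u' x), sq_nonneg (u x)]
  -- growth lemma
  have key_growth : ∀ x₀, b ≤ x₀ → ∀ y, x₀ ≤ y →
      u x₀ ^ 2 + 2 * g x₀ * (y - x₀) ≤ u y ^ 2 := by
    intro x₀ hbx₀ y hy
    have hx₀0 : (0:ℝ) < x₀ := hb0.trans_le hbx₀
    set φ : ℝ → ℝ := fun z => u z ^ 2 - 2 * g x₀ * z with hφ
    have hderivφ : ∀ z ∈ Ioi (0:ℝ), HasDerivAt φ (2 * g z - 2 * g x₀) z := by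
      intro z hz
      have h1 : HasDerivAt (fun y => u y ^ 2) (2 * g z) z := by
        have := (hu z hz).mul (hu z hz)
        have h2 : HasDerivAt (fun y => u y * u y) (2 * g z) z := by
          exact this.congr_deriv (by show u' z * u z + u z * u' z = 2 * (u z * u' z); ring)
        have h3 : (fun y => u y ^ 2) = fun y => u y * u y := by funext y; ring
        rw [h3]; exact h2
      exact h1.sub ((hasDerivAt_id z).const_mul (2 * g x₀) |>.congr_deriv (by ring))
    have hIx : Ici x₀ ⊆ Ioi (0:ℝ) := fun z hz => lt_of_lt_of_le hx₀0 hz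
    have hφmono : MonotoneOn φ (Ici x₀) := by
      apply monotoneOn_of_deriv_nonneg (convex_Ici x₀)
      · exact fun z hz => ((hderivφ z (hIx hz)).continuousAt).continuousWithinAt
      · rw [interior_Ici]
        exact fun z hz => ((hderivφ z (hIx (mem_Ici.mpr (le_of_lt hz)))).differentiableAt).differentiableWithinAt
      · rw [interior_Ici]
        intro z hz
        rw [(hderivφ z (hIx (mem_Ici.mpr (le_of_lt hz)))).deriv]
        have := hgmono (mem_Ici.mpr hbx₀) (mem_Ici.mpr (hbx₀.trans hz.le)) hz.le
        linarith
    have := hφmono (self_mem_Ici) (mem_Ici.mpr hy) hy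
    simp only [hφ] at this
    linarith
  -- g ≤ 0 on Ici b
  have hgnonpos : ∀ x, b ≤ x → g x ≤ 0 := by
    intro x₀ hbx₀
    by_contra h
    push_neg at h
    obtain ⟨M, hM⟩ := hbdd
    obtain ⟨y, hyM, hy⟩ :=
      (hM.and (eventually_ge_atTop (max x₀ (x₀ + (M ^ 2 + 1 - u x₀ ^ 2) / (2 * g x₀))))).exists
    have hyx₀ : x₀ ≤ y := le_trans (le_max_left _ _) hy
    have h2g : 0 < 2 * g x₀ := by linarith
    have hgrow := key_growth x₀ hbx₀ y hyx₀
    have hdiv : (M ^ 2 + 1 - u x₀ ^ 2) / (2 * g x₀) ≤ y - x₀ := by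
      have := le_trans (le_max_right x₀ _) hy; linarith
    have h5 : M ^ 2 + 1 - u x₀ ^ 2 ≤ (y - x₀) * (2 * g x₀) := (div_le_iff₀ h2g).mp hdiv
    have h6 : u y ^ 2 ≤ M ^ 2 := by
      rcases abs_le.mp hyM with ⟨h7, h8⟩
      nlinarith
    nlinarith
  set K : ℝ := -g a with hKdef
  have hK0 : 0 ≤ K := by have := hgnonpos a hba.le; simp only [hKdef]; linarith
  -- energy identity
  have henergy : ∀ R, a ≤ R →
      ∫ x in a..R, (u' x ^ 2 + (V x - E) * u x ^ 2) = g R - g a := by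
    intro R hR
    apply intervalIntegral.integral_eq_sub_of_hasDerivAt
    · intro x hx
      rw [uIcc_of_le hR] at hx
      exact hderivg x (mem_Ioi.mpr (lt_of_lt_of_le ha0 hx.1))
    · apply ContinuousOn.intervalIntegrable
      rw [uIcc_of_le hR]
      have hsub : Icc a R ⊆ Ioi 0 := fun x hx => lt_of_lt_of_le ha0 hx.1
      exact ((hu'cont.mono hsub).pow 2).add
        (((hVc.mono hsub).sub continuousOn_const).mul ((hucont.mono hsub).pow 2))
  -- bound 1
  have bound1 : ∀ n : ℕ, ∫ x in a..(a + (n:ℝ)), V x * u x ^ 2 ≤ 2 * K := by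
    intro n
    have hR : a ≤ a + (n:ℝ) := le_add_of_nonneg_right (Nat.cast_nonneg n)
    have hsub : Icc a (a + (n:ℝ)) ⊆ Ioi 0 := fun x hx => lt_of_lt_of_le ha0 hx.1
    have hint₁ : IntervalIntegrable (fun x => V x * u x ^ 2) volume a (a + (n:ℝ)) := by
      apply ContinuousOn.intervalIntegrable
      rw [uIcc_of_le hR]
      exact (hVc.mono hsub).mul ((hucont.mono hsub).pow 2)
    have hint₂ : IntervalIntegrable
        (fun x => 2 * (u' x ^ 2 + (V x - E) * u x ^ 2)) volume a (a + (n:ℝ)) := by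
      apply ContinuousOn.intervalIntegrable
      rw [uIcc_of_le hR]
      exact continuousOn_const.mul (((hu'cont.mono hsub).pow 2).add
        (((hVc.mono hsub).sub continuousOn_const).mul ((hucont.mono hsub).pow 2)))
    have hmono := intervalIntegral.integral_mono_on hR hint₁ hint₂ ?_
    · have h2 : ∫ x in a..(a + (n:ℝ)), 2 * (u' x ^ 2 + (V x - E) * u x ^ 2)
          = 2 * (g (a + (n:ℝ)) - g a) := by
        rw [intervalIntegral.integral_const_mul, henergy _ hR]
      have h3 := hgnonpos (a + (n:ℝ)) (le_trans hba.le hR)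
      simp only [hKdef]
      rw [h2] at hmono
      linarith
    · intro x hx
      have h2E := hVge x hx.1
      nlinarith [sq_nonneg (u' x), sq_nonneg (u x)]
  -- bound 2
  have bound2 : ∀ n : ℕ, ∫ x in a..(a + (n:ℝ)), u x ^ 2 ≤ E⁻¹ * K := by
    intro n
    have hR : a ≤ a + (n:ℝ) := le_add_of_nonneg_right (Nat.cast_nonneg n)
    have hsub : Icc a (a + (n:ℝ)) ⊆ Ioi 0 := fun x hx => lt_of_lt_of_le ha0 hx.1
    have hint₁ : IntervalIntegrable (fun x => E * u x ^ 2) volume a (a + (n:ℝ)) := by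
      apply ContinuousOn.intervalIntegrable
      rw [uIcc_of_le hR]
      exact continuousOn_const.mul ((hucont.mono hsub).pow 2)
    have hint₂ : IntervalIntegrable
        (fun x => u' x ^ 2 + (V x - E) * u x ^ 2) volume a (a + (n:ℝ)) := by
      apply ContinuousOn.intervalIntegrable
      rw [uIcc_of_le hR]
      exact ((hu'cont.mono hsub).pow 2).add
        (((hVc.mono hsub).sub continuousOn_const).mul ((hucont.mono hsub).pow 2))
    have hmono := intervalIntegral.integral_mono_on hR hint₁ hint₂ ?_
    · rw [intervalIntegral.integral_const_mul, henergy _ hR] at hmono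
      have h3 := hgnonpos (a + (n:ℝ)) (le_trans hba.le hR)
      have h4 : E * ∫ x in a..(a + (n:ℝ)), u x ^ 2 ≤ K := by
        simp only [hKdef]; linarith
      rw [← mul_le_mul_iff_right₀ hE]
      calc E * ∫ x in a..(a + (n:ℝ)), u x ^ 2 ≤ K := h4
        _ = E * (E⁻¹ * K) := by field_simp
    · intro x hx
      have h2E := hVge x hx.1
      nlinarith [sq_nonneg (u' x), sq_nonneg (u x)]
  -- lower bound on middle region
  have key_lower : ∀ x ∈ Icc b a, 2 * K * (a - x) ≤ u x ^ 2 := by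
    intro x hx
    set H : ℝ → ℝ := fun z => u z ^ 2 - 2 * g a * z with hH
    have hderivH : ∀ z ∈ Ioi (0:ℝ), HasDerivAt H (2 * g z - 2 * g a) z := by
      intro z hz
      have h1 : HasDerivAt (fun y => u y ^ 2) (2 * g z) z := by
        have := (hu z hz).mul (hu z hz)
        have h2 : HasDerivAt (fun y => u y * u y) (2 * g z) z := by
          exact this.congr_deriv (by show u' z * u z + u z * u' z = 2 * (u z * u' z); ring)
        have h3 : (fun y => u y ^ 2) = fun y => u y * u y := by funext y; ring
        rw [h3]; exact h2
      exact h1.sub ((hasDerivAt_id z).const_mul (2 * g a) |>.congr_deriv (by ring))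
    have hsub : Icc b a ⊆ Ioi (0:ℝ) := fun z hz => lt_of_lt_of_le hb0 hz.1
    have hHanti : AntitoneOn H (Icc b a) := by
      apply antitoneOn_of_deriv_nonpos (convex_Icc b a)
      · exact fun z hz => ((hderivH z (hsub hz)).continuousAt).continuousWithinAt
      · rw [interior_Icc]
        exact fun z hz =>
          ((hderivH z (mem_Ioi.mpr (hb0.trans hz.1))).differentiableAt).differentiableWithinAt
      · rw [interior_Icc]
        intro z hz
        rw [(hderivH z (mem_Ioi.mpr (hb0.trans hz.1))).deriv]
        have := hgmono (mem_Ici.mpr hz.1.le) (mem_Ici.mpr hba.le) hz.2.le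
        linarith
    have := hHanti hx (right_mem_Icc.mpr hba.le) hx.2
    simp only [hH] at this
    simp only [hKdef]
    nlinarith [sq_nonneg (u a)]
  -- J and its lower bound
  set J : ℝ := ∫ x in b..a, u x ^ 2 with hJdef
  have hJlow : K * (a - b) ^ 2 ≤ J := by
    have hsub : Icc b a ⊆ Ioi (0:ℝ) := fun z hz => lt_of_lt_of_le hb0 hz.1
    have hint₁ : IntervalIntegrable (fun x => 2 * K * (a - x)) volume b a :=
      (continuous_const.mul (continuous_const.sub continuous_id)).intervalIntegrable _ _
    have hint₂ : IntervalIntegrable (fun x => u x ^ 2) volume b a := by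
      apply ContinuousOn.intervalIntegrable
      rw [uIcc_of_le hba.le]
      exact (hucont.mono hsub).pow 2
    have hmono := intervalIntegral.integral_mono_on hba.le hint₁ hint₂ key_lower
    have hcalc : ∫ x in b..a, 2 * K * (a - x) = K * (a - b) ^ 2 := by
      rw [intervalIntegral.integral_const_mul, intervalIntegral.integral_sub
        intervalIntegrable_const intervalIntegral.intervalIntegrable_id,
        intervalIntegral.integral_const, integral_id]
      simp only [smul_eq_mul]
      ring
    rw [hcalc] at hmono
    exact hmono
  have hJ0 : 0 ≤ J := le_trans (by positivity) hJlow
  -- RHS lintegral value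
  have hIoosub : Ioo b a ⊆ Ioi (0:ℝ) := fun z hz => hb0.trans hz.1
  have hRHSval : (∫⁻ x in Ioo b a, ENNReal.ofReal (u x ^ 2)) = ENNReal.ofReal J := by
    have hint : IntegrableOn (fun x => u x ^ 2) (Ioo b a) := by
      apply IntegrableOn.mono_set _ Ioo_subset_Icc_self
      exact (((hucont.mono (fun z hz => lt_of_lt_of_le hb0 hz.1)).pow 2).integrableOn_Icc)
    rw [← ofReal_integral_eq_lintegral_ofReal hint (ae_of_all _ fun x => sq_nonneg (u x))]
    congr 1
    rw [hJdef, intervalIntegral.integral_of_le hba.le, MeasureTheory.integral_Ioc_eq_integral_Ioo]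
  -- LHS continuity hypotheses for helper
  have hIcisub : Ici a ⊆ Ioi (0:ℝ) := fun z hz => lt_of_lt_of_le ha0 hz
  constructor
  · -- first inequality
    rw [hset1, hset2, hvol]
    have hL : (∫⁻ x in Ici a, ENNReal.ofReal (V x * u x ^ 2)) ≤ ENNReal.ofReal (2 * K) := by
      apply helper_lintegral
      · exact (hVc.mono hIcisub).mul ((hucont.mono hIcisub).pow 2)
      · intro x hx
        exact mul_nonneg (by linarith [hVge x hx]) (sq_nonneg _)
      · exact bound1
    refine le_trans hL ?_
    rw [hRHSval]
    have hcnn : (0:ℝ) ≤ 2 * (E * (a - b) ^ 2)⁻¹ * E :=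
      mul_nonneg (mul_nonneg (by norm_num)
        (inv_nonneg.mpr (mul_nonneg hE.le (sq_nonneg _)))) hE.le
    rw [← ENNReal.ofReal_mul hcnn]
    apply ENNReal.ofReal_le_ofReal
    have hab' : a - b ≠ 0 := by linarith
    have hE' : E ≠ 0 := hE.ne'
    have hab2 : (0:ℝ) < (a - b) ^ 2 := pow_pos (by linarith) 2
    have hc : 2 * (E * (a - b) ^ 2)⁻¹ * E = 2 / (a - b) ^ 2 := by
      rw [mul_inv]
      field_simp
    rw [hc]
    calc 2 * K = 2 / (a - b) ^ 2 * (K * (a - b) ^ 2) := by field_simp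
      _ ≤ 2 / (a - b) ^ 2 * J := by
          apply mul_le_mul_of_nonneg_left hJlow (by positivity)

  · -- second inequality
    rw [hset1, hset2, hvol]
    have hL : (∫⁻ x in Ici a, ENNReal.ofReal (u x ^ 2)) ≤ ENNReal.ofReal (E⁻¹ * K) := by
      apply helper_lintegral
      · exact (hucont.mono hIcisub).pow 2
      · exact fun x _ => sq_nonneg _
      · exact bound2
    refine le_trans hL ?_
    rw [hRHSval]
    have hcnn : (0:ℝ) ≤ 2 * (E * (a - b) ^ 2)⁻¹ :=
      mul_nonneg (by norm_num) (inv_nonneg.mpr (mul_nonneg hE.le (sq_nonneg _)))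
    rw [← ENNReal.ofReal_mul hcnn]
    apply ENNReal.ofReal_le_ofReal
    have hab' : a - b ≠ 0 := by linarith
    have hE' : E ≠ 0 := hE.ne'
    have hab2 : (0:ℝ) < (a - b) ^ 2 := pow_pos (by linarith) 2
    calc E⁻¹ * K ≤ 2 * (E * (a - b) ^ 2)⁻¹ * (K * (a - b) ^ 2) := by
          rw [mul_inv]
          have h1 : 2 * (E⁻¹ * ((a - b) ^ 2)⁻¹) * (K * (a - b) ^ 2)
              = 2 * (E⁻¹ * K) := by field_simp
          rw [h1]
          nlinarith [mul_nonneg (inv_nonneg.mpr hE.le) hK0]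
      _ ≤ 2 * (E * (a - b) ^ 2)⁻¹ * J :=
          mul_le_mul_of_nonneg_left hJlow hcnn
end

section
/- Let V : (0,∞) → ℝ be continuous, E ∈ ℝ, and let u ∈ C²((0,∞);ℝ) solve −u″ + Vu = Eu on (0,∞) and be recessive at +∞. (i) If a > 0, ∫_a^∞ u² < ∞ and ∫_a^∞ |V|u² < ∞, then ∫_a^∞ (u′)² < ∞ and ∫_a^∞ (u′)² + ∫_a^∞ V u² = E ∫_a^∞ u² − u(a)u′(a). (ii) If moreover V ∈ C¹((0,∞)), V(x)u(x)² → 0 as x → +∞, and ∫_a^∞ |V′|u² < ∞, then (E − V(a)) u(a)² + u′(a)² = ∫_a^∞ V′ u². -/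
open MeasureTheory Filter Set

/-- Elementary identities for recessive solutions.  Let `V : (0,∞) → ℝ` be continuous,
`E ∈ ℝ`, and let `u ∈ C²((0,∞))` solve `−u″ + Vu = Eu` with `u(x) → 0` and `u′(x) → 0` as
`x → +∞`.  (i) If `a > 0` and `u²` and `|V|u²` are integrable on `(a,∞)`, then `(u′)²` is
integrable on `(a,∞)` and `∫_a^∞ (u′)² + ∫_a^∞ V u² = E∫_a^∞ u² − u(a)u′(a)`.
(ii) If moreover `V ∈ C¹((0,∞))`, `V(x)u(x)² → 0` at `+∞` and `|V′|u²` is integrable on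
`(a,∞)`, then `(E − V(a))u(a)² + u′(a)² = ∫_a^∞ V′ u²`. -/
theorem elementary_identities
    (V : ℝ → ℝ) (hV : ContinuousOn V (Ioi 0)) (E : ℝ)
    (u u' u'' : ℝ → ℝ)
    (hu' : ∀ x ∈ Ioi (0 : ℝ), HasDerivAt u (u' x) x)
    (hu'' : ∀ x ∈ Ioi (0 : ℝ), HasDerivAt u' (u'' x) x)
    (hu''c : ContinuousOn u'' (Ioi 0))
    (heq : ∀ x ∈ Ioi (0 : ℝ), -u'' x + V x * u x = E * u x)
    (hu0 : Tendsto u atTop (nhds 0)) (hu'0 : Tendsto u' atTop (nhds 0))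
    (a : ℝ) (ha : 0 < a) :
    ((IntegrableOn (fun x => u x ^ 2) (Ioi a) ∧
        IntegrableOn (fun x => |V x| * u x ^ 2) (Ioi a)) →
      IntegrableOn (fun x => u' x ^ 2) (Ioi a) ∧
        (∫ x in Ioi a, u' x ^ 2) + (∫ x in Ioi a, V x * u x ^ 2) =
          E * (∫ x in Ioi a, u x ^ 2) - u a * u' a) ∧
    (∀ V' : ℝ → ℝ,
      (∀ x ∈ Ioi (0 : ℝ), HasDerivAt V (V' x) x) → ContinuousOn V' (Ioi 0) →
      Tendsto (fun x => V x * u x ^ 2) atTop (nhds 0) →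
      IntegrableOn (fun x => u x ^ 2) (Ioi a) →
      IntegrableOn (fun x => |V x| * u x ^ 2) (Ioi a) →
      IntegrableOn (fun x => |V' x| * u x ^ 2) (Ioi a) →
      (E - V a) * u a ^ 2 + u' a ^ 2 = ∫ x in Ioi a, V' x * u x ^ 2) := by
  have hsub : Ioi a ⊆ Ioi (0 : ℝ) := fun x hx => lt_trans ha hx
  have hIccsub : ∀ b : ℝ, a ≤ b → Icc a b ⊆ Ioi (0 : ℝ) := fun b hab x hx =>
    lt_of_lt_of_le ha hx.1
  have hucont : ContinuousOn u (Ioi 0) := fun x hx =>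
    ((hu' x hx).continuousAt).continuousWithinAt
  have hu'cont : ContinuousOn u' (Ioi 0) := fun x hx =>
    ((hu'' x hx).continuousAt).continuousWithinAt
  have hu''eq : ∀ x ∈ Ioi (0 : ℝ), u'' x = (V x - E) * u x := by
    intro x hx
    have h := heq x hx
    have h2 : (V x - E) * u x = V x * u x - E * u x := by ring
    linarith
  -- FTC helper
  have FTC : ∀ (f f' : ℝ → ℝ), (∀ x ∈ Ioi (0 : ℝ), HasDerivAt f (f' x) x) →
      ContinuousOn f' (Ioi 0) → ∀ b : ℝ, a ≤ b → (∫ x in a..b, f' x) = f b - f a := by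
    intro f f' hf hf'c b hab
    apply intervalIntegral.integral_eq_sub_of_hasDerivAt
    · intro x hx
      rw [uIcc_of_le hab] at hx
      exact hf x (hIccsub b hab hx)
    · apply ContinuousOn.intervalIntegrable
      exact hf'c.mono (by rw [uIcc_of_le hab]; exact hIccsub b hab)
  have II : ∀ (f : ℝ → ℝ), ContinuousOn f (Ioi 0) → ∀ b : ℝ, a ≤ b →
      IntervalIntegrable f volume a b := by
    intro f hf b hab
    apply ContinuousOn.intervalIntegrable
    exact hf.mono (by rw [uIcc_of_le hab]; exact hIccsub b hab)
  have hu2cont : ContinuousOn (fun x => u x ^ 2) (Ioi 0) := hucont.pow 2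
  have hu'2cont : ContinuousOn (fun x => u' x ^ 2) (Ioi 0) := hu'cont.pow 2
  have hVu2cont : ContinuousOn (fun x => V x * u x ^ 2) (Ioi 0) := hV.mul hu2cont
  -- FTC identity for part (i)
  have key1 : ∀ b : ℝ, a ≤ b →
      (∫ x in a..b, u' x ^ 2) =
        u b * u' b - u a * u' a - (∫ x in a..b, V x * u x ^ 2) +
          E * ∫ x in a..b, u x ^ 2 := by
    intro b hab
    have hderiv : ∀ x ∈ Ioi (0 : ℝ),
        HasDerivAt (fun y => u y * u' y) (u' x ^ 2 + (V x * u x ^ 2 - E * u x ^ 2)) x := by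
      intro x hx
      have H := (hu' x hx).mul (hu'' x hx)
      convert H using 1
      · rfl
      · rfl
      · rfl
      rw [hu''eq x hx]; ring
    have hdc : ContinuousOn (fun x => u' x ^ 2 + (V x * u x ^ 2 - E * u x ^ 2)) (Ioi 0) :=
      hu'2cont.add (hVu2cont.sub ((continuousOn_const (c := E)).mul hu2cont))
    have H := FTC _ _ hderiv hdc b hab
    have hEint : IntervalIntegrable (fun x => E * u x ^ 2) volume a b :=
      II _ ((continuousOn_const (c := E)).mul hu2cont) b hab
    rw [intervalIntegral.integral_add (II _ hu'2cont b hab)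
        ((II _ hVu2cont b hab).sub hEint),
      intervalIntegral.integral_sub (II _ hVu2cont b hab) hEint,
      intervalIntegral.integral_const_mul] at H
    linarith
  constructor
  · rintro ⟨hu2int, hVau2int⟩
    have hVu2int : IntegrableOn (fun x => V x * u x ^ 2) (Ioi a) := by
      refine Integrable.mono' hVau2int
        ((hVu2cont.mono hsub).aestronglyMeasurable measurableSet_Ioi) ?_
      filter_upwards with x
      rw [Real.norm_eq_abs, abs_mul, abs_of_nonneg (sq_nonneg (u x))]
    have tVu2 := MeasureTheory.intervalIntegral_tendsto_integral_Ioi a hVu2int tendsto_id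
    have tu2 := MeasureTheory.intervalIntegral_tendsto_integral_Ioi a hu2int tendsto_id
    have tuu' : Tendsto (fun b => u b * u' b) atTop (nhds 0) := by
      simpa using hu0.mul hu'0
    set L : ℝ := 0 - u a * u' a - (∫ x in Ioi a, V x * u x ^ 2) +
      E * ∫ x in Ioi a, u x ^ 2 with hL
    have tF : Tendsto (fun b => ∫ x in a..b, u' x ^ 2) atTop (nhds L) := by
      have h := ((tuu'.sub (tendsto_const_nhds (x := u a * u' a))).sub tVu2).add (tu2.const_mul E)
      refine Tendsto.congr' ?_ h
      filter_upwards [eventually_ge_atTop a] with b hab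
      simp only [id_eq]
      rw [key1 b hab]
    have hu'2int : IntegrableOn (fun x => u' x ^ 2) (Ioi a) := by
      refine MeasureTheory.integrableOn_Ioi_of_intervalIntegral_norm_tendsto L a
        (fun b => ?_) (tendsto_id (α := ℝ)) ?_
      · simp only [id_eq]
        rcases le_or_gt a b with hab | hab
        · exact ((hu'2cont.mono (hIccsub b hab)).integrableOn_Icc).mono_set Ioc_subset_Icc_self
        · rw [Set.Ioc_eq_empty (not_lt.mpr hab.le)]
          exact integrableOn_empty
      · refine tF.congr fun b => ?_
        congr 1
        funext x
        rw [Real.norm_eq_abs, abs_of_nonneg (sq_nonneg _)]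
    refine ⟨hu'2int, ?_⟩
    have := tendsto_nhds_unique
      (MeasureTheory.intervalIntegral_tendsto_integral_Ioi a hu'2int tendsto_id) tF
    rw [this, hL]; ring
  · intro V' hV' hV'c hVu20 _ _ hV'u2int
    have hV'u2cont : ContinuousOn (fun x => V' x * u x ^ 2) (Ioi 0) := hV'c.mul hu2cont
    have hV'u2Int : IntegrableOn (fun x => V' x * u x ^ 2) (Ioi a) := by
      refine Integrable.mono' hV'u2int
        ((hV'u2cont.mono hsub).aestronglyMeasurable measurableSet_Ioi) ?_
      filter_upwards with x
      rw [Real.norm_eq_abs, abs_mul, abs_of_nonneg (sq_nonneg (u x))]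
    set w : ℝ → ℝ := fun x => u' x ^ 2 + (E - V x) * u x ^ 2 with hw
    have hwderiv : ∀ x ∈ Ioi (0 : ℝ), HasDerivAt w (-(V' x * u x ^ 2)) x := by
      intro x hx
      have H := ((hu'' x hx).pow 2).add
        (((hasDerivAt_const x E).sub (hV' x hx)).mul ((hu' x hx).pow 2))
      convert H using 1
      · rfl
      · rfl
      · rfl
      simp only [Pi.pow_apply, Pi.sub_apply]
      rw [hu''eq x hx]; ring
    have hwc : ContinuousOn (fun x => -(V' x * u x ^ 2)) (Ioi 0) := hV'u2cont.neg
    have key2 : ∀ b : ℝ, a ≤ b → (∫ x in a..b, V' x * u x ^ 2) = w a - w b := by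
      intro b hab
      have H := FTC w _ hwderiv hwc b hab
      rw [intervalIntegral.integral_neg] at H
      linarith
    have tw : Tendsto w atTop (nhds 0) := by
      have t1 : Tendsto (fun b => u' b ^ 2) atTop (nhds 0) := by
        simpa [pow_two] using hu'0.mul hu'0
      have t2 : Tendsto (fun b => E * u b ^ 2) atTop (nhds 0) := by
        simpa [pow_two, mul_assoc] using (hu0.mul hu0).const_mul E
      have h := t1.add (t2.sub hVu20)
      simp only [add_zero, sub_zero, zero_add, zero_sub, neg_zero] at h
      refine h.congr fun b => ?_
      rw [hw]; ring
    have tInt := MeasureTheory.intervalIntegral_tendsto_integral_Ioi a hV'u2Int tendsto_id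
    have tF : Tendsto (fun b => ∫ x in a..b, V' x * u x ^ 2) atTop (nhds (w a - 0)) := by
      refine Tendsto.congr' ?_ ((tendsto_const_nhds (x := w a)).sub tw)
      filter_upwards [eventually_ge_atTop a] with b hab
      rw [key2 b hab]
    have := tendsto_nhds_unique tInt tF
    rw [this, hw]; ring
end

section
/- Let x₀ ∈ ℝ, I = [x₀,∞), V : I → ℝ continuous, and α ≥ 0 with K_α := (∫_I (1+|V(x)|) e^{−2αx} dx)^{1/2} < ∞. Let u ∈ C²(I;ℝ) be such that N(u) := sup_I |u| + sup_I |u″|/(1+|V|) + (∫_I e^{2αx}(1+|V|)u²)^{1/2} + (∫_I e^{2αx} u″²/(1+|V|))^{1/2} is finite. Then u′(x) → 0 as x → +∞. Moreover, for every β ∈ (0,α) with K_{α−β} := (∫_I (1+|V(x)|) e^{−2(α−β)x} dx)^{1/2} < ∞, one has |u(x)| ≤ β^{−1} K_{α−β} N(u) e^{−βx} and |u′(x)| ≤ K_{α−β} N(u) e^{−βx} for all x ∈ I. -/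
open MeasureTheory Filter Set
open scoped Topology ENNReal

lemma cs_bound_aux {x₀ : ℝ} {V w : ℝ → ℝ} (hV : ContinuousOn V (Ici x₀))
    (hw : ContinuousOn w (Ici x₀)) (α : ℝ) {x : ℝ} (hx : x₀ ≤ x) :
    (∫⁻ t in Ici x, ENNReal.ofReal |w t|) ≤
      (∫⁻ t in Ici x₀, ENNReal.ofReal (Real.exp (2*α*t) * w t ^ 2 / (1 + |V t|))) ^ ((1:ℝ)/2) *
      (∫⁻ t in Ici x, ENNReal.ofReal ((1 + |V t|) * Real.exp (-(2*α*t)))) ^ ((1:ℝ)/2) := by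
  have h1V : ∀ t : ℝ, (0:ℝ) < 1 + |V t| := fun t => by positivity
  set A : ℝ → ℝ := fun t => Real.exp (2*α*t) * w t ^ 2 / (1 + |V t|) with hA
  set B : ℝ → ℝ := fun t => (1 + |V t|) * Real.exp (-(2*α*t)) with hB
  have hA0 : ∀ t, 0 ≤ A t := fun t => by
    have := h1V t; positivity
  have hB0 : ∀ t, 0 ≤ B t := fun t => by
    have := h1V t; positivity
  set f : ℝ → ENNReal := fun t => ENNReal.ofReal (Real.sqrt (A t)) with hf
  set g : ℝ → ENNReal := fun t => ENNReal.ofReal (Real.sqrt (B t)) with hg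
  have hVm : AEMeasurable V (volume.restrict (Ici x)) :=
    (hV.mono (Ici_subset_Ici.2 hx)).aemeasurable measurableSet_Ici
  have hwm : AEMeasurable w (volume.restrict (Ici x)) :=
    (hw.mono (Ici_subset_Ici.2 hx)).aemeasurable measurableSet_Ici
  have hAm : AEMeasurable A (volume.restrict (Ici x)) := by
    apply AEMeasurable.div
    · exact ((Real.measurable_exp.comp (measurable_const.mul measurable_id)).aemeasurable).mul
        (hwm.pow aemeasurable_const)
    · exact aemeasurable_const.add (continuous_abs.measurable.comp_aemeasurable hVm)
  have hBm : AEMeasurable B (volume.restrict (Ici x)) := by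
    apply AEMeasurable.mul
    · exact aemeasurable_const.add (continuous_abs.measurable.comp_aemeasurable hVm)
    · exact (Real.measurable_exp.comp ((measurable_const.mul measurable_id).neg)).aemeasurable
  have hfm : AEMeasurable f (volume.restrict (Ici x)) :=
    (Real.continuous_sqrt.measurable.comp_aemeasurable hAm).ennreal_ofReal
  have hgm : AEMeasurable g (volume.restrict (Ici x)) :=
    (Real.continuous_sqrt.measurable.comp_aemeasurable hBm).ennreal_ofReal
  have key := ENNReal.lintegral_mul_le_Lp_mul_Lq (volume.restrict (Ici x))
    (p := 2) (q := 2) Real.HolderConjugate.two_two hfm hgm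
  have hfg : ∀ t, ENNReal.ofReal |w t| = (f * g) t := by
    intro t
    have h1 : A t * B t = w t ^ 2 := by
      simp only [hA, hB]
      rw [Real.exp_neg]
      field_simp
    simp only [Pi.mul_apply, hf, hg]
    rw [← ENNReal.ofReal_mul (Real.sqrt_nonneg _), ← Real.sqrt_mul (hA0 t), h1,
      Real.sqrt_sq_eq_abs]
  have hf2 : ∀ t, f t ^ (2:ℝ) = ENNReal.ofReal (A t) := by
    intro t
    show ENNReal.ofReal (Real.sqrt (A t)) ^ (2:ℝ) = ENNReal.ofReal (A t)
    rw [ENNReal.ofReal_rpow_of_nonneg (Real.sqrt_nonneg _) (by norm_num : (0:ℝ) ≤ 2)]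
    congr 1
    rw [show ((2:ℝ)) = ((2:ℕ):ℝ) by norm_num, Real.rpow_natCast]
    exact Real.sq_sqrt (hA0 t)
  have hg2 : ∀ t, g t ^ (2:ℝ) = ENNReal.ofReal (B t) := by
    intro t
    show ENNReal.ofReal (Real.sqrt (B t)) ^ (2:ℝ) = ENNReal.ofReal (B t)
    rw [ENNReal.ofReal_rpow_of_nonneg (Real.sqrt_nonneg _) (by norm_num : (0:ℝ) ≤ 2)]
    congr 1
    rw [show ((2:ℝ)) = ((2:ℕ):ℝ) by norm_num, Real.rpow_natCast]
    exact Real.sq_sqrt (hB0 t)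
  calc (∫⁻ t in Ici x, ENNReal.ofReal |w t|) = ∫⁻ t in Ici x, (f*g) t := lintegral_congr hfg
    _ ≤ (∫⁻ t in Ici x, f t ^ (2:ℝ)) ^ ((1:ℝ)/2) * (∫⁻ t in Ici x, g t ^ (2:ℝ)) ^ ((1:ℝ)/2) := by
        simpa using key
    _ = (∫⁻ t in Ici x, ENNReal.ofReal (A t)) ^ ((1:ℝ)/2) *
        (∫⁻ t in Ici x, ENNReal.ofReal (B t)) ^ ((1:ℝ)/2) := by
        rw [lintegral_congr hf2, lintegral_congr hg2]
    _ ≤ _ := by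
        refine mul_le_mul_left (ENNReal.rpow_le_rpow ?_ (by norm_num)) _
        exact lintegral_mono' (Measure.restrict_mono (Ici_subset_Ici.2 hx) le_rfl) le_rfl

lemma sqrt_dance {r : ℝ} (hr : 0 ≤ r) : (ENNReal.ofReal (r^2)) ^ ((1:ℝ)/2) = ENNReal.ofReal r := by
  rw [ENNReal.ofReal_pow hr, ← ENNReal.rpow_natCast, ← ENNReal.rpow_mul]
  norm_num

/-- Let `I = [x₀,∞)`, `V : I → ℝ` continuous, and `α ≥ 0` with
`K_α = (∫_I (1+|V|)e^{−2αx})^{1/2} < ∞`.  If `u ∈ C²(I)` has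
`N(u) = sup_I|u| + sup_I |u″|/(1+|V|) + (∫_I e^{2αx}(1+|V|)u²)^{1/2}
 + (∫_I e^{2αx}u″²/(1+|V|))^{1/2} < ∞`, then `u′(x) → 0` at `+∞`; moreover for every
`β ∈ (0,α)` with `K_{α−β} < ∞` one has `|u(x)| ≤ β⁻¹K_{α−β}N(u)e^{−βx}` and
`|u′(x)| ≤ K_{α−β}N(u)e^{−βx}` on `I`. -/
theorem decay_from_weighted_bounds
    (x₀ : ℝ) (V : ℝ → ℝ) (hV : ContinuousOn V (Ici x₀)) (α : ℝ) (hα : 0 ≤ α)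
    (hKα : (∫⁻ x in Ici x₀, ENNReal.ofReal ((1 + |V x|) * Real.exp (-(2 * α * x)))) < ⊤)
    (u u' u'' : ℝ → ℝ)
    (hu' : ∀ x ∈ Ici x₀, HasDerivWithinAt u (u' x) (Ici x₀) x)
    (hu'' : ∀ x ∈ Ici x₀, HasDerivWithinAt u' (u'' x) (Ici x₀) x)
    (hu''c : ContinuousOn u'' (Ici x₀))
    (N₁ N₂ N₃ N₄ : ℝ)
    (hN₁ : IsLUB ((fun x => |u x|) '' Ici x₀) N₁)
    (hN₂ : IsLUB ((fun x => |u'' x| / (1 + |V x|)) '' Ici x₀) N₂)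
    (hN₃ : 0 ≤ N₃)
    (hN₃' : (∫⁻ x in Ici x₀, ENNReal.ofReal (Real.exp (2 * α * x) * (1 + |V x|) * u x ^ 2)) =
      ENNReal.ofReal (N₃ ^ 2))
    (hN₄ : 0 ≤ N₄)
    (hN₄' : (∫⁻ x in Ici x₀,
        ENNReal.ofReal (Real.exp (2 * α * x) * u'' x ^ 2 / (1 + |V x|))) =
      ENNReal.ofReal (N₄ ^ 2)) :
    Tendsto u' atTop (nhds 0) ∧
    ∀ β K' : ℝ, 0 < β → β < α → 0 ≤ K' →
      (∫⁻ x in Ici x₀, ENNReal.ofReal ((1 + |V x|) * Real.exp (-(2 * (α - β) * x)))) =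
        ENNReal.ofReal (K' ^ 2) →
      ∀ x ∈ Ici x₀,
        |u x| ≤ β⁻¹ * K' * (N₁ + N₂ + N₃ + N₄) * Real.exp (-(β * x)) ∧
        |u' x| ≤ K' * (N₁ + N₂ + N₃ + N₄) * Real.exp (-(β * x)) := by
  have h1V : ∀ t : ℝ, (0:ℝ) < 1 + |V t| := fun t => by positivity
  have hN₁bd : ∀ t ∈ Ici x₀, |u t| ≤ N₁ := fun t ht => hN₁.1 ⟨t, ht, rfl⟩
  have hN₁0 : 0 ≤ N₁ := (abs_nonneg _).trans (hN₁bd x₀ self_mem_Ici)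
  have hN₂0 : 0 ≤ N₂ := le_trans (by positivity) (hN₂.1 ⟨x₀, self_mem_Ici, rfl⟩)
  have hNsum : N₄ ≤ N₁ + N₂ + N₃ + N₄ := by linarith
  have hu'c : ContinuousOn u' (Ici x₀) := fun x hx => (hu'' x hx).continuousWithinAt
  have huc : ContinuousOn u (Ici x₀) := fun x hx => (hu' x hx).continuousWithinAt
  -- integrability of u'' on [x₀, ∞)
  have hfin : ∀ x, x₀ ≤ x → (∫⁻ t in Ici x, ENNReal.ofReal |u'' t|) < ⊤ := by
    intro x hx
    refine lt_of_le_of_lt (cs_bound_aux hV hu''c α hx) ?_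
    apply ENNReal.mul_lt_top
    · rw [hN₄']
      exact ENNReal.rpow_lt_top_of_nonneg (by norm_num) ENNReal.ofReal_ne_top
    · refine ENNReal.rpow_lt_top_of_nonneg (by norm_num) ?_
      exact (lt_of_le_of_lt
        (lintegral_mono' (Measure.restrict_mono (Ici_subset_Ici.2 hx) le_rfl) le_rfl) hKα).ne
  have hu''int : IntegrableOn u'' (Ioi x₀) := by
    constructor
    · exact (hu''c.mono Ioi_subset_Ici_self).aestronglyMeasurable measurableSet_Ioi
    · rw [hasFiniteIntegral_iff_norm]
      refine lt_of_le_of_lt ?_ (hfin x₀ le_rfl)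
      simp only [Real.norm_eq_abs]
      exact lintegral_mono' (Measure.restrict_mono Ioi_subset_Ici_self le_rfl) le_rfl
  have hdAt : ∀ x ∈ Ioi x₀, HasDerivAt u' (u'' x) x :=
    fun x hx => (hu'' x (mem_Ici.2 (le_of_lt hx))).hasDerivAt (Ici_mem_nhds hx)
  have hL : Tendsto u' atTop (𝓝 (limUnder atTop u')) :=
    tendsto_limUnder_of_hasDerivAt_of_integrableOn_Ioi hdAt hu''int
  -- the limit of u' is zero
  have hc : ∀ n : ℕ, ∃ c ∈ Ioo (x₀ + n) (x₀ + n + 1),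
      u' c = (u (x₀ + n + 1) - u (x₀ + n)) / ((x₀ + n + 1) - (x₀ + n)) := by
    intro n
    refine exists_hasDerivAt_eq_slope u u' (by linarith) ?_ ?_
    · refine huc.mono fun t ht => ?_
      have : (0:ℝ) ≤ n := Nat.cast_nonneg n
      exact le_trans (by linarith) ht.1
    · intro t ht
      have hn : (0:ℝ) ≤ n := Nat.cast_nonneg n
      have ht0 : x₀ < t := lt_of_le_of_lt (by linarith) ht.1
      exact (hu' t ht0.le).hasDerivAt (Ici_mem_nhds ht0)
  choose c hc1 hc2 using hc
  have hcat : Tendsto c atTop atTop := by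
    apply tendsto_atTop_mono (fun n => (hc1 n).1.le)
    exact tendsto_atTop_add_const_left _ x₀ tendsto_natCast_atTop_atTop
  have hd : Tendsto (fun n : ℕ => u (x₀ + n + 1) - u (x₀ + n)) atTop (𝓝 (limUnder atTop u')) := by
    refine (hL.comp hcat).congr fun n => ?_
    simp only [Function.comp_apply]
    rw [hc2 n, show (x₀ + (n:ℝ) + 1) - (x₀ + n) = 1 by ring, div_one]
  have htel : ∀ n : ℕ, ∑ i ∈ Finset.range n, (u (x₀ + i + 1) - u (x₀ + i))
      = u (x₀ + n) - u x₀ := by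
    intro n
    have h := Finset.sum_range_sub (fun i : ℕ => u (x₀ + i)) n
    simp only [Nat.cast_add, Nat.cast_one, ← add_assoc] at h
    simpa using h
  have hzero : Tendsto (fun n : ℕ => (n:ℝ)⁻¹ * (u (x₀ + n) - u x₀)) atTop (𝓝 0) := by
    apply squeeze_zero_norm (a := fun n : ℕ => (n:ℝ)⁻¹ * (2 * N₁))
    · intro n
      have h1 : |u (x₀ + n)| ≤ N₁ := hN₁bd _ (by simp [Nat.cast_nonneg n, le_add_of_nonneg_right])
      have h2 : |u x₀| ≤ N₁ := hN₁bd _ self_mem_Ici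
      rw [norm_mul, Real.norm_eq_abs, Real.norm_eq_abs]
      have hinv : (0:ℝ) ≤ |(n:ℝ)⁻¹| := abs_nonneg _
      have : |u (x₀ + n) - u x₀| ≤ 2 * N₁ := (abs_sub _ _).trans (by linarith)
      calc |(n:ℝ)⁻¹| * |u (x₀ + n) - u x₀| ≤ |(n:ℝ)⁻¹| * (2 * N₁) :=
            mul_le_mul_of_nonneg_left this hinv
        _ = (n:ℝ)⁻¹ * (2 * N₁) := by rw [abs_of_nonneg (by positivity)]
    · have : Tendsto (fun n : ℕ => ((n:ℝ)⁻¹)) atTop (𝓝 0) :=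
        tendsto_inv_atTop_zero.comp tendsto_natCast_atTop_atTop
      simpa using this.mul_const (2 * N₁)
  have hL0 : limUnder atTop u' = 0 := by
    have hces := hd.cesaro
    refine tendsto_nhds_unique (hces.congr fun n => ?_) hzero
    rw [htel n]
  rw [hL0] at hL
  refine ⟨hL, ?_⟩
  intro β K' hβ hβα hK'0 hK'
  -- tail bounds
  have hBtail : ∀ x, x₀ ≤ x →
      (∫⁻ t in Ici x, ENNReal.ofReal ((1 + |V t|) * Real.exp (-(2*α*t)))) ≤
        ENNReal.ofReal ((Real.exp (-(β*x)) * K')^2) := by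
    intro x hx
    have step1 : (∫⁻ t in Ici x, ENNReal.ofReal ((1 + |V t|) * Real.exp (-(2*α*t)))) ≤
        ∫⁻ t in Ici x, ENNReal.ofReal
          (Real.exp (-(2*β*x)) * ((1 + |V t|) * Real.exp (-(2*(α-β)*t)))) := by
      refine lintegral_mono_ae (ae_restrict_of_forall_mem measurableSet_Ici fun t ht => ?_)
      apply ENNReal.ofReal_le_ofReal
      have h1 : Real.exp (-(2*α*t)) = Real.exp (-(2*(α-β)*t)) * Real.exp (-(2*β*t)) := by
        rw [← Real.exp_add]; ring_nf
      have h2 : Real.exp (-(2*β*t)) ≤ Real.exp (-(2*β*x)) :=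
        Real.exp_le_exp.2 (by nlinarith [ht.out])
      have key := mul_le_mul_of_nonneg_left h2
        (show (0:ℝ) ≤ (1 + |V t|) * Real.exp (-(2*(α-β)*t)) by positivity)
      calc (1 + |V t|) * Real.exp (-(2*α*t))
          = ((1 + |V t|) * Real.exp (-(2*(α-β)*t))) * Real.exp (-(2*β*t)) := by rw [h1]; ring
        _ ≤ ((1 + |V t|) * Real.exp (-(2*(α-β)*t))) * Real.exp (-(2*β*x)) := key
        _ = Real.exp (-(2*β*x)) * ((1 + |V t|) * Real.exp (-(2*(α-β)*t))) := by ring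
    have step2 : (∫⁻ t in Ici x, ENNReal.ofReal
          (Real.exp (-(2*β*x)) * ((1 + |V t|) * Real.exp (-(2*(α-β)*t))))) =
        ENNReal.ofReal (Real.exp (-(2*β*x))) *
          ∫⁻ t in Ici x, ENNReal.ofReal ((1 + |V t|) * Real.exp (-(2*(α-β)*t))) := by
      simp_rw [ENNReal.ofReal_mul (Real.exp_nonneg _)]
      exact lintegral_const_mul' _ _ ENNReal.ofReal_ne_top
    have step3 : (∫⁻ t in Ici x, ENNReal.ofReal ((1 + |V t|) * Real.exp (-(2*(α-β)*t)))) ≤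
        ENNReal.ofReal (K' ^ 2) := by
      rw [← hK']
      exact lintegral_mono' (Measure.restrict_mono (Ici_subset_Ici.2 hx) le_rfl) le_rfl
    calc (∫⁻ t in Ici x, ENNReal.ofReal ((1 + |V t|) * Real.exp (-(2*α*t))))
        ≤ ENNReal.ofReal (Real.exp (-(2*β*x))) *
          ∫⁻ t in Ici x, ENNReal.ofReal ((1 + |V t|) * Real.exp (-(2*(α-β)*t))) := by
          rw [← step2]; exact step1
      _ ≤ ENNReal.ofReal (Real.exp (-(2*β*x))) * ENNReal.ofReal (K' ^ 2) :=
          mul_le_mul_right step3 _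
      _ = ENNReal.ofReal ((Real.exp (-(β*x)) * K')^2) := by
          rw [← ENNReal.ofReal_mul (Real.exp_nonneg _)]
          congr 1
          rw [mul_pow, ← Real.exp_nat_mul]
          congr 2
          push_cast
          ring
  have hTail : ∀ x, x₀ ≤ x → (∫⁻ t in Ici x, ENNReal.ofReal |u'' t|) ≤
      ENNReal.ofReal (N₄ * (Real.exp (-(β*x)) * K')) := by
    intro x hx
    refine (cs_bound_aux hV hu''c α hx).trans ?_
    rw [hN₄']
    calc ENNReal.ofReal (N₄ ^ 2) ^ ((1:ℝ)/2) *
          (∫⁻ t in Ici x, ENNReal.ofReal ((1 + |V t|) * Real.exp (-(2*α*t)))) ^ ((1:ℝ)/2)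
        ≤ ENNReal.ofReal (N₄ ^ 2) ^ ((1:ℝ)/2) *
          ENNReal.ofReal ((Real.exp (-(β*x)) * K')^2) ^ ((1:ℝ)/2) :=
          mul_le_mul_right (ENNReal.rpow_le_rpow (hBtail x hx) (by norm_num)) _
      _ = ENNReal.ofReal N₄ * ENNReal.ofReal (Real.exp (-(β*x)) * K') := by
          rw [sqrt_dance hN₄, sqrt_dance (by positivity)]
      _ = ENNReal.ofReal (N₄ * (Real.exp (-(β*x)) * K')) :=
          (ENNReal.ofReal_mul hN₄).symm
  -- pointwise bound on u'
  have hu'bd : ∀ x ∈ Ici x₀, |u' x| ≤ K' * (N₁ + N₂ + N₃ + N₄) * Real.exp (-(β*x)) := by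
    intro x hx
    have hFTC : ∫ t in Ioi x, u'' t = 0 - u' x :=
      integral_Ioi_of_hasDerivAt_of_tendsto
        ((hu'' x hx).continuousWithinAt.mono (Ici_subset_Ici.2 hx))
        (fun t ht => hdAt t (mem_Ioi.2 (lt_of_le_of_lt hx ht)))
        (hu''int.mono_set (Ioi_subset_Ioi hx)) hL
    have h1 : |u' x| = ‖∫ t in Ioi x, u'' t‖ := by
      rw [hFTC]; simp [Real.norm_eq_abs]
    rw [h1]
    refine le_trans (norm_integral_le_lintegral_norm _) ?_
    have hb : (∫⁻ t in Ioi x, ENNReal.ofReal ‖u'' t‖) ≤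
        ENNReal.ofReal (N₄ * (Real.exp (-(β*x)) * K')) := by
      refine le_trans ?_ (hTail x hx)
      simp only [Real.norm_eq_abs]
      exact lintegral_mono' (Measure.restrict_mono Ioi_subset_Ici_self le_rfl) le_rfl
    refine le_trans (ENNReal.toReal_le_of_le_ofReal (by positivity) hb) ?_
    calc N₄ * (Real.exp (-(β*x)) * K')
        ≤ (N₁ + N₂ + N₃ + N₄) * (Real.exp (-(β*x)) * K') :=
          mul_le_mul_of_nonneg_right hNsum (by positivity)
      _ = K' * (N₁ + N₂ + N₃ + N₄) * Real.exp (-(β*x)) := by ring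
  intro x hx
  refine ⟨?_, hu'bd x hx⟩
  -- u tends to a limit
  have hg : IntegrableOn (fun t => K' * (N₁ + N₂ + N₃ + N₄) * Real.exp (-(β*t))) (Ioi x₀) := by
    have h := (exp_neg_integrableOn_Ioi x₀ hβ).const_mul (K' * (N₁ + N₂ + N₃ + N₄))
    simp only [neg_mul] at h
    exact h
  have hu'int : IntegrableOn u' (Ioi x₀) := by
    refine Integrable.mono' hg
      ((hu'c.mono Ioi_subset_Ici_self).aestronglyMeasurable measurableSet_Ioi) ?_
    exact ae_restrict_of_forall_mem measurableSet_Ioi fun t ht => by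
      simpa [Real.norm_eq_abs] using hu'bd t (mem_Ici.2 (le_of_lt ht))
  have hdAtu : ∀ t ∈ Ioi x₀, HasDerivAt u (u' t) t :=
    fun t ht => (hu' t (mem_Ici.2 ht.le)).hasDerivAt (Ici_mem_nhds ht)
  have hM : Tendsto u atTop (𝓝 (limUnder atTop u)) :=
    tendsto_limUnder_of_hasDerivAt_of_integrableOn_Ioi hdAtu hu'int
  have hM0 : limUnder atTop u = 0 := by
    by_contra hne
    have hfin2 : (∫⁻ t in Ici x₀, ENNReal.ofReal (u t ^ 2)) < ⊤ := by
      have hpt : ∀ t ∈ Ici x₀, u t ^ 2 ≤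
          Real.exp (-(2*α*x₀)) * (Real.exp (2*α*t) * (1 + |V t|) * u t ^ 2) := by
        intro t ht
        have e1 : Real.exp (2*α*x₀) ≤ Real.exp (2*α*t) :=
          Real.exp_le_exp.2 (by nlinarith [ht.out])
        have emul : Real.exp (-(2*α*x₀)) * Real.exp (2*α*x₀) = 1 := by
          rw [← Real.exp_add]; simp
        have h1 : (1:ℝ) ≤ Real.exp (-(2*α*x₀)) * Real.exp (2*α*t) := by
          nlinarith [Real.exp_pos (-(2*α*x₀))]
        nlinarith [sq_nonneg (u t), abs_nonneg (V t), Real.exp_pos (-(2*α*x₀)),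
          Real.exp_pos (2*α*t), mul_le_mul_of_nonneg_left h1 (sq_nonneg (u t)),
          mul_nonneg (mul_nonneg (Real.exp_pos (-(2*α*x₀))).le (Real.exp_pos (2*α*t)).le)
            (mul_nonneg (abs_nonneg (V t)) (sq_nonneg (u t)))]
      calc (∫⁻ t in Ici x₀, ENNReal.ofReal (u t ^ 2))
          ≤ ∫⁻ t in Ici x₀, ENNReal.ofReal
              (Real.exp (-(2*α*x₀)) * (Real.exp (2*α*t) * (1 + |V t|) * u t ^ 2)) :=
            lintegral_mono_ae (ae_restrict_of_forall_mem measurableSet_Ici fun t ht =>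
              ENNReal.ofReal_le_ofReal (hpt t ht))
        _ = ENNReal.ofReal (Real.exp (-(2*α*x₀))) *
            ∫⁻ t in Ici x₀, ENNReal.ofReal (Real.exp (2*α*t) * (1 + |V t|) * u t ^ 2) := by
            simp_rw [ENNReal.ofReal_mul (Real.exp_nonneg _)]
            exact lintegral_const_mul' _ _ ENNReal.ofReal_ne_top
        _ = ENNReal.ofReal (Real.exp (-(2*α*x₀))) * ENNReal.ofReal (N₃ ^ 2) := by rw [hN₃']
        _ < ⊤ := ENNReal.mul_lt_top ENNReal.ofReal_lt_top ENNReal.ofReal_lt_top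
    set M := limUnder atTop u with hMdef
    have hMpos : 0 < |M| := abs_pos.2 hne
    have hev : ∀ᶠ t in atTop, |M|/2 ≤ |u t| := by
      filter_upwards [hM.eventually (Metric.ball_mem_nhds M (show (0:ℝ) < |M|/2 by positivity))]
        with t ht
      simp only [Metric.mem_ball, Real.dist_eq] at ht
      have := abs_sub_abs_le_abs_sub M (u t)
      rw [abs_sub_comm M (u t)] at this
      linarith
    obtain ⟨b, hb⟩ := eventually_atTop.1 (hev.and (eventually_ge_atTop x₀))
    have hlow : (⊤:ENNReal) ≤ ∫⁻ t in Ici b, ENNReal.ofReal (u t ^ 2) := by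
      have htop : ENNReal.ofReal ((|M|/2)^2) * volume (Ici b) = ⊤ := by
        rw [Real.volume_Ici, ENNReal.mul_top (ENNReal.ofReal_pos.2 (by positivity)).ne']
      calc (⊤:ENNReal) = ENNReal.ofReal ((|M|/2)^2) * volume (Ici b) := htop.symm
        _ = ∫⁻ _ in Ici b, ENNReal.ofReal ((|M|/2)^2) := (setLIntegral_const _ _).symm
        _ ≤ ∫⁻ t in Ici b, ENNReal.ofReal (u t ^ 2) := by
            refine lintegral_mono_ae (ae_restrict_of_forall_mem measurableSet_Ici fun t ht => ?_)
            apply ENNReal.ofReal_le_ofReal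
            have h1 := (hb t ht).1
            have : (|M|/2)^2 ≤ |u t|^2 := by nlinarith [abs_nonneg (u t)]
            rwa [sq_abs] at this
    have hcon : (∫⁻ t in Ici b, ENNReal.ofReal (u t ^ 2)) < ⊤ :=
      lt_of_le_of_lt
        (lintegral_mono' (Measure.restrict_mono (Ici_subset_Ici.2 (hb b le_rfl).2) le_rfl) le_rfl)
        hfin2
    exact absurd (lt_of_le_of_lt hlow hcon) (lt_irrefl _)
  rw [hM0] at hM
  -- FTC for u
  have hFTCu : ∫ t in Ioi x, u' t = 0 - u x :=
    integral_Ioi_of_hasDerivAt_of_tendsto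
      ((hu' x hx).continuousWithinAt.mono (Ici_subset_Ici.2 hx))
      (fun t ht => hdAtu t (mem_Ioi.2 (lt_of_le_of_lt hx ht)))
      (hu'int.mono_set (Ioi_subset_Ioi hx)) hM
  have h2 : |u x| = ‖∫ t in Ioi x, u' t‖ := by rw [hFTCu]; simp [Real.norm_eq_abs]
  rw [h2]
  refine le_trans (norm_integral_le_lintegral_norm _) ?_
  have hexpint : IntegrableOn (fun t => Real.exp (-(β*t))) (Ioi x) := by
    simpa [neg_mul] using exp_neg_integrableOn_Ioi x hβ
  have hexpval : ∫ t in Ioi x, Real.exp (-(β*t)) = β⁻¹ * Real.exp (-(β*x)) := by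
    have hder : ∀ t ∈ Ioi x, HasDerivAt (fun s => -β⁻¹ * Real.exp (-(β*s)))
        (Real.exp (-(β*t))) t := by
      intro t _
      have h1 : HasDerivAt (fun s : ℝ => -(β*s)) (-β) t := by
        have := ((hasDerivAt_id t).const_mul β).neg; rwa [mul_one] at this
      have h2 := (Real.hasDerivAt_exp (-(β*t))).comp t h1
      have h3 := h2.const_mul (-β⁻¹)
      refine h3.congr_deriv ?_
      field_simp [hβ.ne']
    have hten : Tendsto (fun s => -β⁻¹ * Real.exp (-(β*s))) atTop (𝓝 0) := by
      have h1 : Tendsto (fun s : ℝ => β * s) atTop atTop := tendsto_id.const_mul_atTop hβ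
      have h2 : Tendsto (fun s : ℝ => -(β*s)) atTop atBot := tendsto_neg_atBot_iff.2 h1
      have h3 := Real.tendsto_exp_atBot.comp h2
      simpa using h3.const_mul (-β⁻¹)
    have hcont : Continuous fun s : ℝ => -β⁻¹ * Real.exp (-(β*s)) := by fun_prop
    have := integral_Ioi_of_hasDerivAt_of_tendsto
      hcont.continuousWithinAt hder hexpint hten
    rw [this]; ring
  have hlin : (∫⁻ t in Ioi x, ENNReal.ofReal ‖u' t‖) ≤
      ENNReal.ofReal (K' * (N₁ + N₂ + N₃ + N₄) * (β⁻¹ * Real.exp (-(β*x)))) := by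
    calc (∫⁻ t in Ioi x, ENNReal.ofReal ‖u' t‖)
        ≤ ∫⁻ t in Ioi x, ENNReal.ofReal (K' * (N₁ + N₂ + N₃ + N₄) * Real.exp (-(β*t))) := by
          refine lintegral_mono_ae (ae_restrict_of_forall_mem measurableSet_Ioi fun t ht => ?_)
          exact ENNReal.ofReal_le_ofReal
            (by simpa [Real.norm_eq_abs] using hu'bd t (mem_Ici.2 (hx.trans ht.le)))
      _ = ENNReal.ofReal (∫ t in Ioi x, K' * (N₁ + N₂ + N₃ + N₄) * Real.exp (-(β*t))) :=
          (ofReal_integral_eq_lintegral_ofReal (hexpint.const_mul _)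
            (ae_of_all _ fun t => by positivity)).symm
      _ = ENNReal.ofReal (K' * (N₁ + N₂ + N₃ + N₄) * (β⁻¹ * Real.exp (-(β*x)))) := by
          rw [integral_const_mul, hexpval]
  refine le_trans (ENNReal.toReal_le_of_le_ofReal (by positivity) hlin) (le_of_eq (by ring))
end

section
/- Let 0 < d₁ ≤ d₂ and let U be a positive C¹ function on (0,∞) with d₁U(x) ≤ xU′(x) ≤ d₂U(x) for all x > 0. Let δ > 0 and E > 0 satisfy √E · |{x > 0 : U(x) ≤ E}| ≥ δ. Then for all a, b ∈ ℝ and ε > 0 there exists C = C(d₁,d₂,δ,a,b,ε) such that ∫_{{U≥E}} x^a U(x)^b e^{−ε x U(x)^{1/2}} dx ≤ C |{U≤E}|^{a+1} E^b. -/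
open MeasureTheory Set

/-- `U ∈ 𝒟(d₁,d₂)`: `U` is positive and `C¹` on `(0,∞)` with derivative `U'`, and
`d₁U(x) ≤ xU′(x) ≤ d₂U(x)` for all `x > 0`. -/
def Dclass (d₁ d₂ : ℝ) (U U' : ℝ → ℝ) : Prop :=
  (∀ x ∈ Set.Ioi (0 : ℝ), 0 < U x) ∧
  (∀ x ∈ Set.Ioi (0 : ℝ), HasDerivAt U (U' x) x) ∧
  ContinuousOn U' (Set.Ioi 0) ∧
  (∀ x ∈ Set.Ioi (0 : ℝ), d₁ * U x ≤ x * U' x ∧ x * U' x ≤ d₂ * U x)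

/-- Gronwall-type lower bound: if `d·U(x) ≤ x·U'(x)` then `U(y)(x/y)^d ≤ U(x)` for `0<y≤x`. -/
lemma gron_lower {d : ℝ} {U U' : ℝ → ℝ}
    (hU : ∀ x ∈ Set.Ioi (0:ℝ), 0 < U x)
    (hderiv : ∀ x ∈ Set.Ioi (0:ℝ), HasDerivAt U (U' x) x)
    (hle : ∀ x ∈ Set.Ioi (0:ℝ), d * U x ≤ x * U' x)
    {y x : ℝ} (hy : 0 < y) (hyx : y ≤ x) :
    U y * (x / y) ^ d ≤ U x := by
  have hx : 0 < x := hy.trans_le hyx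
  have hφ : ∀ z ∈ Set.Ioi (0:ℝ),
      HasDerivAt (fun z => Real.log (U z) - d * Real.log z) (U' z / U z - d * z⁻¹) z := by
    intro z hz
    exact ((hderiv z hz).log (hU z hz).ne').sub ((Real.hasDerivAt_log (ne_of_gt hz)).const_mul d)
  have hmono : MonotoneOn (fun z => Real.log (U z) - d * Real.log z) (Set.Ioi 0) := by
    apply monotoneOn_of_deriv_nonneg (convex_Ioi 0)
    · intro z hz; exact (hφ z hz).continuousAt.continuousWithinAt
    · rw [interior_Ioi]; intro z hz
      exact (hφ z hz).differentiableAt.differentiableWithinAt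
    · rw [interior_Ioi]; intro z hz
      rw [(hφ z hz).deriv]
      have hz' : (0:ℝ) < z := hz
      have hUz := hU z hz
      rw [sub_nonneg, ← div_eq_mul_inv, div_le_div_iff₀ hz' hUz]
      have := hle z hz
      linarith [this, mul_comm (U' z) z]
  have h := hmono (Set.mem_Ioi.mpr hy) (Set.mem_Ioi.mpr hx) hyx
  have hUy := hU y (Set.mem_Ioi.mpr hy)
  have hUx := hU x (Set.mem_Ioi.mpr hx)
  have hlog : Real.log (U y) + d * Real.log (x / y) ≤ Real.log (U x) := by
    rw [Real.log_div hx.ne' hy.ne']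
    simp only at h
    nlinarith [h]
  have h2 := Real.exp_le_exp.mpr hlog
  rw [Real.exp_add, Real.exp_log hUy, Real.exp_log hUx, mul_comm d] at h2
  rwa [Real.rpow_def_of_pos (div_pos hx hy)]

/-- Gronwall-type upper bound: if `x·U'(x) ≤ d·U(x)` then `U(x) ≤ U(y)(x/y)^d` for `0<y≤x`. -/
lemma gron_upper {d : ℝ} {U U' : ℝ → ℝ}
    (hU : ∀ x ∈ Set.Ioi (0:ℝ), 0 < U x)
    (hderiv : ∀ x ∈ Set.Ioi (0:ℝ), HasDerivAt U (U' x) x)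
    (hge : ∀ x ∈ Set.Ioi (0:ℝ), x * U' x ≤ d * U x)
    {y x : ℝ} (hy : 0 < y) (hyx : y ≤ x) :
    U x ≤ U y * (x / y) ^ d := by
  have hx : 0 < x := hy.trans_le hyx
  have hφ : ∀ z ∈ Set.Ioi (0:ℝ),
      HasDerivAt (fun z => Real.log (U z) - d * Real.log z) (U' z / U z - d * z⁻¹) z := by
    intro z hz
    exact ((hderiv z hz).log (hU z hz).ne').sub ((Real.hasDerivAt_log (ne_of_gt hz)).const_mul d)
  have hmono : AntitoneOn (fun z => Real.log (U z) - d * Real.log z) (Set.Ioi 0) := by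
    apply antitoneOn_of_deriv_nonpos (convex_Ioi 0)
    · intro z hz; exact (hφ z hz).continuousAt.continuousWithinAt
    · rw [interior_Ioi]; intro z hz
      exact (hφ z hz).differentiableAt.differentiableWithinAt
    · rw [interior_Ioi]; intro z hz
      rw [(hφ z hz).deriv]
      have hz' : (0:ℝ) < z := hz
      have hUz := hU z hz
      rw [sub_nonpos, ← div_eq_mul_inv, div_le_div_iff₀ hUz hz']
      have := hge z hz
      linarith [this, mul_comm (U' z) z]
  have h := hmono (Set.mem_Ioi.mpr hy) (Set.mem_Ioi.mpr hx) hyx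
  have hUy := hU y (Set.mem_Ioi.mpr hy)
  have hUx := hU x (Set.mem_Ioi.mpr hx)
  have hlog : Real.log (U x) ≤ Real.log (U y) + d * Real.log (x / y) := by
    rw [Real.log_div hx.ne' hy.ne']
    simp only at h
    nlinarith [h]
  have h2 := Real.exp_le_exp.mpr hlog
  rw [Real.exp_add, Real.exp_log hUy, Real.exp_log hUx, mul_comm d] at h2
  rwa [Real.rpow_def_of_pos (div_pos hx hy)]

/-- Scaling for lower Lebesgue integrals on `[c,∞)`. -/
lemma lintegral_Ici_comp_div {c : ℝ} (hc : 0 < c) (F : ℝ → ENNReal) (hF : Measurable F) :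
    ∫⁻ x in Set.Ici c, F (x / c) = ENNReal.ofReal c * ∫⁻ t in Set.Ici 1, F t := by
  have hc0 : c ≠ 0 := hc.ne'
  have h1 : (volume : Measure ℝ) = ENNReal.ofReal |c| • Measure.map (c * ·) volume :=
    (Real.smul_map_volume_mul_left hc0).symm
  have hpre : (c * ·) ⁻¹' Set.Ici c = Set.Ici 1 := by
    ext t
    simp only [Set.mem_preimage, Set.mem_Ici]
    rw [le_mul_iff_one_le_right hc]
  have hmeas : Measurable fun x : ℝ => F (x / c) := hF.comp (measurable_id.div_const c)
  calc ∫⁻ x in Set.Ici c, F (x / c)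
      = ∫⁻ x in Set.Ici c, F (x / c)
          ∂(ENNReal.ofReal |c| • Measure.map (c * ·) volume) := by rw [← h1]
    _ = ENNReal.ofReal |c| *
          ∫⁻ x in Set.Ici c, F (x / c) ∂(Measure.map (c * ·) volume) := by
        rw [Measure.restrict_smul, lintegral_smul_measure, smul_eq_mul]
    _ = ENNReal.ofReal |c| *
          ∫⁻ x, F (x / c) ∂(Measure.map (c * ·) (volume.restrict (Set.Ici 1))) := by
        rw [Measure.restrict_map (measurable_const_mul c) measurableSet_Ici, hpre]
    _ = ENNReal.ofReal |c| * ∫⁻ t in Set.Ici 1, F ((c * t) / c) := by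
        rw [lintegral_map hmeas (measurable_const_mul c)]
    _ = ENNReal.ofReal c * ∫⁻ t in Set.Ici 1, F t := by
        rw [abs_of_pos hc]
        congr 1
        apply lintegral_congr
        intro t
        rw [mul_div_cancel_left₀ t hc0]

set_option maxHeartbeats 1000000 in
/-- Let `0 < d₁ ≤ d₂`, `U ∈ 𝒟(d₁,d₂)`, and `δ > 0`, `E > 0` with `√E·|{U≤E}| ≥ δ`.  Then for
all `a, b ∈ ℝ`, `ε > 0`, with a constant `C = C(d₁,d₂,δ,a,b,ε)`:
`∫_{U≥E} xᵃU(x)ᵇe^{−εx√U(x)}dx ≤ C|{U≤E}|^(a+1)Eᵇ`. -/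
theorem exponential_tail_integral (d₁ d₂ δ a b ε : ℝ)
    (hd₁ : 0 < d₁) (hd : d₁ ≤ d₂) (hδ : 0 < δ) (hε : 0 < ε) :
    ∃ C : ℝ, 0 < C ∧
      ∀ U U' : ℝ → ℝ, ∀ E : ℝ,
        Dclass d₁ d₂ U U' → 0 < E →
        δ ≤ Real.sqrt E * (volume {x : ℝ | 0 < x ∧ U x ≤ E}).toReal →
        (∫⁻ x in {x : ℝ | 0 < x ∧ E ≤ U x},
            ENNReal.ofReal (x ^ a * U x ^ b * Real.exp (-(ε * x * Real.sqrt (U x))))) ≤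
          ENNReal.ofReal
            (C * (volume {x : ℝ | 0 < x ∧ U x ≤ E}).toReal ^ (a + 1) * E ^ b) := by
  set p : ℝ := 1 + d₁ / 2 with hp_def
  set K : ℝ := ε * δ with hK_def
  set m : ℝ := |d₂ * b| with hm_def
  set q : ℝ := a + m with hq_def
  set q' : ℝ := max q 0 with hq'_def
  have hK : 0 < K := mul_pos hε hδ
  have hp1 : 1 ≤ p := by rw [hp_def]; linarith
  have hq'0 : (0:ℝ) ≤ q' := le_max_right _ _
  have hInt : IntegrableOn (fun t : ℝ => t ^ q' * Real.exp (-(K * t ^ p))) (Set.Ioi 0) := by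
    simpa [neg_mul] using
      integrableOn_rpow_mul_exp_neg_mul_rpow (by linarith : (-1:ℝ) < q') (by linarith) hK
  set C₀ : ℝ := ∫ t in Set.Ioi (0:ℝ), t ^ q' * Real.exp (-(K * t ^ p)) with hC₀_def
  have hC₀nn : 0 ≤ C₀ := by
    apply setIntegral_nonneg measurableSet_Ioi
    intro t ht
    exact mul_nonneg (Real.rpow_nonneg (le_of_lt ht) _) (Real.exp_pos _).le
  refine ⟨C₀ + 1, by linarith, ?_⟩
  rintro U U' E ⟨hU, hderiv, hU'cont, hUd⟩ hE hδE
  have hd1U : ∀ x ∈ Set.Ioi (0:ℝ), d₁ * U x ≤ x * U' x := fun x hx => (hUd x hx).1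
  have hd2U : ∀ x ∈ Set.Ioi (0:ℝ), x * U' x ≤ d₂ * U x := fun x hx => (hUd x hx).2
  set S : Set ℝ := {x : ℝ | 0 < x ∧ U x ≤ E} with hS_def
  set T : Set ℝ := {x : ℝ | 0 < x ∧ E ≤ U x} with hT_def
  -- S is nonempty
  have hSne : S.Nonempty := by
    by_contra h
    rw [Set.not_nonempty_iff_eq_empty] at h
    rw [h] at hδE
    simp at hδE
    linarith
  obtain ⟨y₀, hy₀⟩ := hSne
  have hy₀pos : 0 < y₀ := hy₀.1
  have hUy₀ : 0 < U y₀ := hU y₀ hy₀.1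
  -- S is bounded above
  have hbdd : BddAbove S := by
    refine ⟨y₀ * (E / U y₀) ^ (d₁⁻¹), ?_⟩
    intro x hx
    by_contra hlt
    push_neg at hlt
    have hB1 : (1:ℝ) ≤ (E / U y₀) ^ (d₁⁻¹) := by
      have h1 : (1:ℝ) ≤ E / U y₀ := (one_le_div hUy₀).mpr hy₀.2
      have := Real.rpow_le_rpow zero_le_one h1 (inv_nonneg.mpr hd₁.le)
      rwa [Real.one_rpow] at this
    have hy₀x : y₀ ≤ x := by nlinarith
    have hg : U y₀ * (x / y₀) ^ d₁ ≤ U x := gron_lower hU hderiv hd1U hy₀pos hy₀x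
    have hBx : (E / U y₀) ^ (d₁⁻¹) < x / y₀ := by
      rw [lt_div_iff₀ hy₀pos]
      nlinarith
    have h2 : E / U y₀ < (x / y₀) ^ d₁ := by
      have := Real.rpow_lt_rpow (Real.rpow_nonneg (by positivity) _) hBx hd₁
      rwa [← Real.rpow_mul (by positivity), inv_mul_cancel₀ hd₁.ne', Real.rpow_one] at this
    have h3 : U y₀ * (E / U y₀) = E := by field_simp
    nlinarith [hx.2, mul_lt_mul_of_pos_left h2 hUy₀]
  set c : ℝ := sSup S with hc_def
  have hy₀c : y₀ ≤ c := le_csSup hbdd hy₀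
  have hc : 0 < c := lt_of_lt_of_le hy₀pos hy₀c
  have hIooS : Set.Ioo 0 c ⊆ S := by
    intro z hz
    obtain ⟨s, hsS, hzs⟩ := exists_lt_of_lt_csSup ⟨y₀, hy₀⟩ hz.2
    refine ⟨hz.1, ?_⟩
    have h1 : U z * (s / z) ^ d₁ ≤ U s := gron_lower hU hderiv hd1U hz.1 hzs.le
    have hUz : 0 < U z := hU z hz.1
    have hone : (1:ℝ) ≤ (s / z) ^ d₁ := by
      have h2 : (1:ℝ) ≤ s / z := (one_le_div hz.1).mpr hzs.le
      have := Real.rpow_le_rpow zero_le_one h2 hd₁.le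
      rwa [Real.one_rpow] at this
    nlinarith [hsS.2]
  have hSIoc : S ⊆ Set.Ioc 0 c := fun x hx => ⟨hx.1, le_csSup hbdd hx⟩
  have hvolS : volume S = ENNReal.ofReal c := by
    apply le_antisymm
    · calc volume S ≤ volume (Set.Ioc 0 c) := measure_mono hSIoc
        _ = ENNReal.ofReal c := by rw [Real.volume_Ioc, sub_zero]
    · calc ENNReal.ofReal c = volume (Set.Ioo 0 c) := by rw [Real.volume_Ioo, sub_zero]
        _ ≤ volume S := measure_mono hIooS
  have hvolS' : (volume S).toReal = c := by rw [hvolS, ENNReal.toReal_ofReal hc.le]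
  rw [hvolS'] at hδE ⊢
  -- U c ≥ E and U c ≤ E
  have hUc_ge : E ≤ U c := by
    have h1 : Filter.Tendsto U (nhdsWithin c (Set.Ioi c)) (nhds (U c)) :=
      ((hderiv c hc).continuousAt).continuousWithinAt.tendsto
    refine ge_of_tendsto h1 ?_
    filter_upwards [self_mem_nhdsWithin] with x hx
    have hxc : c < x := hx
    have hxS : x ∉ S := fun hxS => absurd (le_csSup hbdd hxS) (not_le.mpr hxc)
    by_contra hcon
    push_neg at hcon
    exact hxS ⟨hc.trans hxc, hcon.le⟩
  have hUc_le : U c ≤ E := by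
    have h1 : Filter.Tendsto U (nhdsWithin c (Set.Iio c)) (nhds (U c)) :=
      ((hderiv c hc).continuousAt).continuousWithinAt.tendsto
    refine le_of_tendsto h1 ?_
    filter_upwards [Ioo_mem_nhdsLT_of_mem ⟨hc, le_refl c⟩] with x hx
    exact (hIooS hx).2
  -- T ⊆ [c, ∞)
  have hTsub : T ⊆ Set.Ici c := by
    intro x hx
    by_contra hlt
    rw [Set.mem_Ici] at hlt
    push_neg at hlt
    obtain ⟨s, hsS, hxs⟩ := exists_lt_of_lt_csSup ⟨y₀, hy₀⟩ hlt
    have hx0 : 0 < x := hx.1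
    have h1 : U x * (s / x) ^ d₁ ≤ U s := gron_lower hU hderiv hd1U hx0 hxs.le
    have hUx : 0 < U x := hU x hx0
    have h2 : 1 < (s / x) ^ d₁ := by
      have hsx : 1 < s / x := (one_lt_div hx0).mpr hxs
      exact Real.one_lt_rpow_iff_of_pos (by positivity) |>.mpr (Or.inl ⟨hsx, hd₁⟩)
    nlinarith [hx.2, hsS.2, mul_pos hUx (by linarith : (0:ℝ) < (s / x) ^ d₁ - 1)]
  -- key pointwise bound on [c, ∞)
  have key : ∀ x ∈ Set.Ici c, x ^ a * U x ^ b * Real.exp (-(ε * x * Real.sqrt (U x)))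
      ≤ (c ^ a * E ^ b) * ((x / c) ^ q * Real.exp (-(K * (x / c) ^ p))) := by
    intro x hx
    have hcx : c ≤ x := hx
    have hx0 : 0 < x := hc.trans_le hcx
    have hr0 : 0 < x / c := div_pos hx0 hc
    have hr1 : (1:ℝ) ≤ x / c := (one_le_div hc).mpr hcx
    have hUx : 0 < U x := hU x hx0
    have hglow : U c * (x / c) ^ d₁ ≤ U x := gron_lower hU hderiv hd1U hc hcx
    have hgup : U x ≤ U c * (x / c) ^ d₂ := gron_upper hU hderiv hd2U hc hcx
    have hrd₁ : (0:ℝ) < (x / c) ^ d₁ := Real.rpow_pos_of_pos hr0 _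
    have hrd₂ : (0:ℝ) < (x / c) ^ d₂ := Real.rpow_pos_of_pos hr0 _
    have hlow : E * (x / c) ^ d₁ ≤ U x :=
      le_trans (mul_le_mul_of_nonneg_right hUc_ge hrd₁.le) hglow
    have hup : U x ≤ E * (x / c) ^ d₂ :=
      le_trans hgup (mul_le_mul_of_nonneg_right hUc_le hrd₂.le)
    have hone_d₁ : (1:ℝ) ≤ (x / c) ^ d₁ := by
      have := Real.rpow_le_rpow zero_le_one hr1 hd₁.le
      rwa [Real.one_rpow] at this
    have hEUx : E ≤ U x :=
      le_trans (le_mul_of_one_le_right hE.le hone_d₁) hlow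
    have hA : x ^ a = c ^ a * (x / c) ^ a := by
      rw [Real.div_rpow hx0.le hc.le]
      field_simp
    have hB : U x ^ b ≤ E ^ b * (x / c) ^ m := by
      rcases le_or_gt 0 b with hb | hb
      · calc U x ^ b ≤ (E * (x / c) ^ d₂) ^ b := Real.rpow_le_rpow hUx.le hup hb
          _ = E ^ b * ((x / c) ^ d₂) ^ b :=
              Real.mul_rpow hE.le (Real.rpow_nonneg hr0.le _)
          _ = E ^ b * (x / c) ^ (d₂ * b) := by rw [← Real.rpow_mul hr0.le]
          _ ≤ E ^ b * (x / c) ^ m := by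
              have h1 := Real.rpow_le_rpow_of_exponent_le hr1 (le_abs_self (d₂ * b))
              have h2 : (0:ℝ) ≤ E ^ b := (Real.rpow_pos_of_pos hE b).le
              rw [hm_def]
              nlinarith
      · have h1 : U x ^ b ≤ E ^ b := Real.rpow_le_rpow_of_nonpos hE hEUx hb.le
        have h2 : (1:ℝ) ≤ (x / c) ^ m := by
          have := Real.rpow_le_rpow_of_exponent_le hr1 (abs_nonneg (d₂ * b))
          rwa [Real.rpow_zero] at this
        nlinarith [Real.rpow_pos_of_pos hE b]
    have hC : Real.exp (-(ε * x * Real.sqrt (U x))) ≤ Real.exp (-(K * (x / c) ^ p)) := by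
      rw [Real.exp_le_exp, neg_le_neg_iff]
      have hsq : Real.sqrt E * (x / c) ^ (d₁ / 2) ≤ Real.sqrt (U x) := by
        have h1 : Real.sqrt (E * (x / c) ^ d₁) ≤ Real.sqrt (U x) := Real.sqrt_le_sqrt hlow
        rw [Real.sqrt_mul hE.le] at h1
        have h2 : Real.sqrt ((x / c) ^ d₁) = (x / c) ^ (d₁ / 2) := by
          rw [Real.sqrt_eq_rpow, ← Real.rpow_mul hr0.le]
          congr 1
          ring
        rwa [h2] at h1
      have hrp : (x / c) ^ p = (x / c) * (x / c) ^ (d₁ / 2) := by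
        rw [hp_def, Real.rpow_add hr0, Real.rpow_one]
      have hxc : c * (x / c) = x := by field_simp
      have hrppos : (0:ℝ) < (x / c) ^ p := Real.rpow_pos_of_pos hr0 _
      calc K * (x / c) ^ p = ε * δ * (x / c) ^ p := by rw [hK_def]
        _ ≤ ε * (Real.sqrt E * c) * (x / c) ^ p := by
            apply mul_le_mul_of_nonneg_right _ hrppos.le
            exact mul_le_mul_of_nonneg_left hδE hε.le
        _ = (ε * (c * (x / c))) * (Real.sqrt E * (x / c) ^ (d₁ / 2)) := by
            rw [hrp]; ring
        _ ≤ (ε * (c * (x / c))) * Real.sqrt (U x) := by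
            apply mul_le_mul_of_nonneg_left hsq
            exact mul_nonneg hε.le (mul_nonneg hc.le hr0.le)
        _ = ε * x * Real.sqrt (U x) := by rw [hxc]
    have hq_split : (x / c) ^ q = (x / c) ^ a * (x / c) ^ m := by
      rw [hq_def, Real.rpow_add hr0]
    rw [hA, hq_split]
    have h1 : U x ^ b * Real.exp (-(ε * x * Real.sqrt (U x)))
        ≤ (E ^ b * (x / c) ^ m) * Real.exp (-(K * (x / c) ^ p)) := by
      apply mul_le_mul hB hC (Real.exp_pos _).le
      positivity
    calc c ^ a * (x / c) ^ a * U x ^ b * Real.exp (-(ε * x * Real.sqrt (U x)))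
        = (c ^ a * (x / c) ^ a) *
          (U x ^ b * Real.exp (-(ε * x * Real.sqrt (U x)))) := by ring
      _ ≤ (c ^ a * (x / c) ^ a) *
          ((E ^ b * (x / c) ^ m) * Real.exp (-(K * (x / c) ^ p))) := by
          apply mul_le_mul_of_nonneg_left h1
          positivity
      _ = (c ^ a * E ^ b) *
          ((x / c) ^ a * (x / c) ^ m * Real.exp (-(K * (x / c) ^ p))) := by ring
  -- measurability
  have hmeasG0 : Measurable fun t : ℝ => t ^ q * Real.exp (-(K * t ^ p)) := by
    apply Measurable.mul
    · exact (measurable_id.pow_const q : Measurable fun t : ℝ => t ^ q)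
    · exact Real.measurable_exp.comp ((measurable_const.mul (measurable_id.pow_const p)).neg)
  have hmeasG0' : Measurable fun t : ℝ => t ^ q' * Real.exp (-(K * t ^ p)) := by
    apply Measurable.mul
    · exact (measurable_id.pow_const q' : Measurable fun t : ℝ => t ^ q')
    · exact Real.measurable_exp.comp ((measurable_const.mul (measurable_id.pow_const p)).neg)
  have hmeasG : Measurable fun t : ℝ => ENNReal.ofReal (t ^ q * Real.exp (-(K * t ^ p))) :=
    hmeasG0.ennreal_ofReal
  -- tail integral bound over [1,∞)
  have hfin : (∫⁻ t in Set.Ici 1, ENNReal.ofReal (t ^ q * Real.exp (-(K * t ^ p))))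
      ≤ ENNReal.ofReal C₀ := by
    have hstep : (∫⁻ t in Set.Ici 1, ENNReal.ofReal (t ^ q * Real.exp (-(K * t ^ p))))
        ≤ ∫⁻ t in Set.Ici 1, ENNReal.ofReal (t ^ q' * Real.exp (-(K * t ^ p))) := by
      apply setLIntegral_mono hmeasG0'.ennreal_ofReal
      intro t ht
      apply ENNReal.ofReal_le_ofReal
      have h1 : t ^ q ≤ t ^ q' := Real.rpow_le_rpow_of_exponent_le ht (le_max_left _ _)
      have h2 : (0:ℝ) < Real.exp (-(K * t ^ p)) := Real.exp_pos _
      nlinarith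
    refine hstep.trans ?_
    have hsub : Set.Ici (1:ℝ) ⊆ Set.Ioi 0 := fun t ht => (lt_of_lt_of_le one_pos ht : (0:ℝ) < t)
    refine (lintegral_mono_set hsub).trans ?_
    have hnn : 0 ≤ᵐ[volume.restrict (Set.Ioi (0:ℝ))]
        fun t : ℝ => t ^ q' * Real.exp (-(K * t ^ p)) :=
      (ae_restrict_iff' measurableSet_Ioi).mpr (Filter.Eventually.of_forall fun t ht =>
        mul_nonneg (Real.rpow_nonneg (le_of_lt ht) _) (Real.exp_pos _).le)
    exact le_of_eq (ofReal_integral_eq_lintegral_ofReal hInt hnn).symm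
  -- main chain
  calc (∫⁻ x in T, ENNReal.ofReal (x ^ a * U x ^ b * Real.exp (-(ε * x * Real.sqrt (U x)))))
      ≤ ∫⁻ x in Set.Ici c,
          ENNReal.ofReal (x ^ a * U x ^ b * Real.exp (-(ε * x * Real.sqrt (U x)))) :=
        lintegral_mono_set hTsub
    _ ≤ ∫⁻ x in Set.Ici c, ENNReal.ofReal
          ((c ^ a * E ^ b) * ((x / c) ^ q * Real.exp (-(K * (x / c) ^ p)))) := by
        apply setLIntegral_mono
          ((measurable_const.mul (hmeasG0.comp (measurable_id.div_const c))).ennreal_ofReal)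
        intro x hx
        exact ENNReal.ofReal_le_ofReal (key x hx)
    _ = ENNReal.ofReal (c ^ a * E ^ b) *
          ∫⁻ x in Set.Ici c, ENNReal.ofReal ((x / c) ^ q * Real.exp (-(K * (x / c) ^ p))) := by
        simp_rw [ENNReal.ofReal_mul (by positivity : (0:ℝ) ≤ c ^ a * E ^ b)]
        rw [lintegral_const_mul' _ _ ENNReal.ofReal_ne_top]
    _ = ENNReal.ofReal (c ^ a * E ^ b) * (ENNReal.ofReal c *
          ∫⁻ t in Set.Ici 1, ENNReal.ofReal (t ^ q * Real.exp (-(K * t ^ p)))) := by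
        rw [lintegral_Ici_comp_div hc _ hmeasG]
    _ ≤ ENNReal.ofReal (c ^ a * E ^ b) * (ENNReal.ofReal c * ENNReal.ofReal C₀) :=
        mul_le_mul_right (mul_le_mul_right hfin _) _
    _ ≤ ENNReal.ofReal ((C₀ + 1) * c ^ (a + 1) * E ^ b) := by
        rw [← ENNReal.ofReal_mul hc.le, ← ENNReal.ofReal_mul (by positivity)]
        apply ENNReal.ofReal_le_ofReal
        have hca : c ^ (a + 1) = c ^ a * c := Real.rpow_add_one hc.ne' a
        rw [hca]
        have h1 : (0:ℝ) ≤ c ^ a * c * E ^ b := by positivity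
        nlinarith
end

section
/- Let 0 < d₁ ≤ d₂ and let U be a positive C¹ function on (0,∞) with d₁U(x) ≤ xU′(x) ≤ d₂U(x) for all x > 0. Then for every E > 0 and c ∈ (0,1): c^{1/d₁}|{U≤E}| ≤ |{U≤cE}| ≤ c^{1/d₂}|{U≤E}|; and for every E > 0, c ∈ (0,1) and T ≥ 1: |{cE ≤ U ≤ E}| ≥ (1 − c^{1/d₂}) T^{−1/d₁} |{U ≤ TE}|. -/
open MeasureTheory Set

/-- If `d U ≤ x U'` on `(0,∞)` then `x ↦ U x * x^(-d)` is monotone on `(0,∞)`. -/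
lemma Dclass_ratio_mono {d : ℝ} {U U' : ℝ → ℝ}
    (hderiv : ∀ x ∈ Set.Ioi (0 : ℝ), HasDerivAt U (U' x) x)
    (hineq : ∀ x ∈ Set.Ioi (0 : ℝ), d * U x ≤ x * U' x) :
    MonotoneOn (fun x => U x * x ^ (-d)) (Set.Ioi (0 : ℝ)) := by
  have hC : ContinuousOn U (Set.Ioi (0 : ℝ)) :=
    fun x hx => ((hderiv x hx).continuousAt).continuousWithinAt
  have key : ∀ x ∈ Set.Ioi (0 : ℝ),
      HasDerivAt (fun x => U x * x ^ (-d)) (x ^ (-d - 1) * (x * U' x - d * U x)) x := by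
    intro x hx
    have hx0 : (0 : ℝ) < x := hx
    have h1 : HasDerivAt (fun x : ℝ => x ^ (-d)) (-d * x ^ (-d - 1)) x :=
      Real.hasDerivAt_rpow_const (Or.inl hx0.ne')
    have h2 := (hderiv x hx).mul h1
    refine h2.congr_deriv ?_
    have hpow : x ^ (-d) = x ^ (-d - 1) * x := by
      rw [← Real.rpow_add_one hx0.ne']; ring_nf
    rw [hpow]; ring
  apply monotoneOn_of_deriv_nonneg (convex_Ioi 0)
  · exact hC.mul (ContinuousOn.rpow_const continuousOn_id
      (fun x hx => Or.inl (ne_of_gt hx)))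
  · intro x hx
    rw [interior_Ioi] at hx
    exact (key x hx).differentiableAt.differentiableWithinAt
  · intro x hx
    rw [interior_Ioi] at hx
    rw [(key x hx).deriv]
    have h := hineq x hx
    have hp : (0 : ℝ) ≤ x ^ (-d - 1) := (Real.rpow_pos_of_pos hx _).le
    nlinarith

/-- Let `0 < d₁ ≤ d₂` and `U ∈ 𝒟(d₁,d₂)`.  Then for all `E > 0` and `c ∈ (0,1)`:
`c^{1/d₁}|{U≤E}| ≤ |{U≤cE}| ≤ c^{1/d₂}|{U≤E}|`; and for all `E > 0`, `c ∈ (0,1)`, `T ≥ 1`: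
`|{cE ≤ U ≤ E}| ≥ (1 − c^{1/d₂})T^{−1/d₁}|{U≤TE}|`. -/
theorem sublevel_measure_doubling (d₁ d₂ : ℝ) (hd₁ : 0 < d₁) (hd : d₁ ≤ d₂)
    (U U' : ℝ → ℝ) (hU : Dclass d₁ d₂ U U') :
    (∀ E c : ℝ, 0 < E → 0 < c → c < 1 →
      c ^ (1 / d₁) * (volume {x : ℝ | 0 < x ∧ U x ≤ E}).toReal ≤
          (volume {x : ℝ | 0 < x ∧ U x ≤ c * E}).toReal ∧
        (volume {x : ℝ | 0 < x ∧ U x ≤ c * E}).toReal ≤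
          c ^ (1 / d₂) * (volume {x : ℝ | 0 < x ∧ U x ≤ E}).toReal) ∧
    (∀ E c T : ℝ, 0 < E → 0 < c → c < 1 → 1 ≤ T →
      (1 - c ^ (1 / d₂)) * T ^ (-(1 / d₁)) *
          (volume {x : ℝ | 0 < x ∧ U x ≤ T * E}).toReal ≤
        (volume {x : ℝ | 0 < x ∧ c * E ≤ U x ∧ U x ≤ E}).toReal) := by
  obtain ⟨hpos, hderiv, hcont, hbnd⟩ := hU
  have hd₂ : 0 < d₂ := lt_of_lt_of_le hd₁ hd
  have hC : ContinuousOn U (Set.Ioi (0 : ℝ)) :=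
    fun x hx => ((hderiv x hx).continuousAt).continuousWithinAt
  -- monotonicity of the two ratios
  have mono1 : MonotoneOn (fun x => U x * x ^ (-d₁)) (Set.Ioi (0 : ℝ)) :=
    Dclass_ratio_mono hderiv (fun x hx => (hbnd x hx).1)
  have mono2 : MonotoneOn (fun x => (-U x) * x ^ (-d₂)) (Set.Ioi (0 : ℝ)) := by
    apply Dclass_ratio_mono (U' := fun x => -U' x)
    · exact fun x hx => (hderiv x hx).neg
    · intro x hx
      have := (hbnd x hx).2
      nlinarith
  -- strict monotonicity of U
  have hsm : StrictMonoOn U (Set.Ioi (0 : ℝ)) := by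
    apply strictMonoOn_of_deriv_pos (convex_Ioi 0) hC
    intro x hx
    rw [interior_Ioi] at hx
    rw [(hderiv x hx).deriv]
    have h := (hbnd x hx).1
    have hU := hpos x hx
    have hx0 : (0 : ℝ) < x := hx
    nlinarith
  -- cross-multiplied forms
  have ratio1 : ∀ y A : ℝ, 0 < y → y ≤ A → U y * A ^ d₁ ≤ U A * y ^ d₁ := by
    intro y A hy hyA
    have hA : (0 : ℝ) < A := lt_of_lt_of_le hy hyA
    have h := mono1 (mem_Ioi.mpr hy) (mem_Ioi.mpr hA) hyA
    simp only [Real.rpow_neg hy.le, Real.rpow_neg hA.le] at h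
    rw [← div_eq_mul_inv, ← div_eq_mul_inv,
      div_le_div_iff₀ (Real.rpow_pos_of_pos hy _) (Real.rpow_pos_of_pos hA _)] at h
    linarith
  have ratio2 : ∀ y A : ℝ, 0 < y → y ≤ A → U A * y ^ d₂ ≤ U y * A ^ d₂ := by
    intro y A hy hyA
    have hA : (0 : ℝ) < A := lt_of_lt_of_le hy hyA
    have h := mono2 (mem_Ioi.mpr hy) (mem_Ioi.mpr hA) hyA
    simp only [Real.rpow_neg hy.le, Real.rpow_neg hA.le] at h
    rw [← div_eq_mul_inv, ← div_eq_mul_inv, div_le_div_iff₀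
      (Real.rpow_pos_of_pos hy _) (Real.rpow_pos_of_pos hA _)] at h
    nlinarith
  -- rpow cancellation helper
  have rpc : ∀ c d : ℝ, 0 ≤ c → d ≠ 0 → (c ^ (1 / d)) ^ d = c := by
    intro c d hc hdne
    rw [← Real.rpow_mul hc, one_div, inv_mul_cancel₀ hdne, Real.rpow_one]
  -- existence of roots
  have hU1 : 0 < U 1 := hpos 1 (mem_Ioi.mpr one_pos)
  have root : ∀ E : ℝ, 0 < E → ∃ a, 0 < a ∧ U a = E := by
    intro E hE
    set y : ℝ := min 1 ((E / (2 * U 1)) ^ (1 / d₁)) with hy_def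
    have hq : (0:ℝ) < E / (2 * U 1) := by positivity
    have hy0 : 0 < y := lt_min one_pos (Real.rpow_pos_of_pos hq _)
    have hy1 : y ≤ 1 := min_le_left _ _
    set z : ℝ := max 1 ((2 * E / U 1) ^ (1 / d₁)) with hz_def
    have hz1 : (1:ℝ) ≤ z := le_max_left _ _
    have hz0 : (0:ℝ) < z := lt_of_lt_of_le one_pos hz1
    -- U y ≤ E/2
    have hyd : y ^ d₁ ≤ E / (2 * U 1) := by
      calc y ^ d₁ ≤ ((E / (2 * U 1)) ^ (1 / d₁)) ^ d₁ :=
            Real.rpow_le_rpow hy0.le (min_le_right _ _) hd₁.le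
        _ = E / (2 * U 1) := rpc _ _ hq.le hd₁.ne'
    have hUy : U y ≤ E / 2 := by
      have h := ratio1 y 1 hy0 hy1
      rw [Real.one_rpow] at h
      have h2 : U y ≤ U 1 * y ^ d₁ := by linarith
      have h3 : U 1 * y ^ d₁ ≤ U 1 * (E / (2 * U 1)) :=
        mul_le_mul_of_nonneg_left hyd hU1.le
      have h4 : U 1 * (E / (2 * U 1)) = E / 2 := by field_simp
      linarith
    -- U z ≥ 2E
    have hzd : 2 * E / U 1 ≤ z ^ d₁ := by
      calc (2 * E / U 1) = ((2 * E / U 1) ^ (1 / d₁)) ^ d₁ :=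
            (rpc _ _ (by positivity) hd₁.ne').symm
        _ ≤ z ^ d₁ := Real.rpow_le_rpow (by positivity) (le_max_right _ _) hd₁.le
    have hUz : 2 * E ≤ U z := by
      have h := ratio1 1 z one_pos hz1
      rw [Real.one_rpow, mul_one] at h
      have h3 : U 1 * (2 * E / U 1) ≤ U 1 * z ^ d₁ :=
        mul_le_mul_of_nonneg_left hzd hU1.le
      have h4 : U 1 * (2 * E / U 1) = 2 * E := by field_simp
      linarith
    have hyz : y ≤ z := le_trans hy1 hz1
    have hsub : Set.Icc y z ⊆ Set.Ioi (0:ℝ) := fun t ht => lt_of_lt_of_le hy0 ht.1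
    have := intermediate_value_Icc hyz (hC.mono hsub)
    have hmem : E ∈ Set.Icc (U y) (U z) := ⟨by linarith, by linarith⟩
    obtain ⟨a, ha, haE⟩ := this hmem
    exact ⟨a, lt_of_lt_of_le hy0 ha.1, haE⟩
  -- measure of sublevel sets
  have hmeas : ∀ E a : ℝ, 0 < a → U a = E →
      (volume {x : ℝ | 0 < x ∧ U x ≤ E}).toReal = a := by
    intro E a ha hae
    have hset : {x : ℝ | 0 < x ∧ U x ≤ E} = Set.Ioc 0 a := by
      ext x
      simp only [mem_setOf_eq, mem_Ioc]
      constructor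
      · rintro ⟨hx, hxe⟩
        refine ⟨hx, ?_⟩
        by_contra h
        push_neg at h
        have := hsm (mem_Ioi.mpr ha) (mem_Ioi.mpr hx) h
        rw [hae] at this
        linarith
      · rintro ⟨hx, hxa⟩
        refine ⟨hx, ?_⟩
        rw [← hae]
        exact hsm.monotoneOn (mem_Ioi.mpr hx) (mem_Ioi.mpr ha) hxa
    rw [hset, Real.volume_Ioc, ENNReal.toReal_ofReal (by linarith)]
    ring
  -- key root comparison facts
  have rootA : ∀ E : ℝ, 0 < E → ∀ a, 0 < a → U a = E → ∀ c : ℝ, 0 < c → c ≤ 1 →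
      ∀ b, 0 < b → U b = c * E → c ^ (1/d₁) * a ≤ b ∧ b ≤ c ^ (1/d₂) * a := by
    intro E hE a ha haE c hc hc1 b hb hbE
    constructor
    · -- c^{1/d₁} a ≤ b
      set y : ℝ := c ^ (1/d₁) * a with hy_def
      have hcp : (0:ℝ) < c ^ (1/d₁) := Real.rpow_pos_of_pos hc _
      have hy0 : 0 < y := mul_pos hcp ha
      have hyle : y ≤ a := by
        have : c ^ (1/d₁) ≤ 1 := Real.rpow_le_one hc.le hc1 (by positivity)
        nlinarith
      have h := ratio1 y a hy0 hyle
      have hyd : y ^ d₁ = c * a ^ d₁ := by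
        rw [hy_def, Real.mul_rpow hcp.le ha.le, rpc _ _ hc.le hd₁.ne']
      rw [hyd, haE] at h
      -- U y * a^d₁ ≤ E * (c * a^d₁)  ⇒ U y ≤ c E
      have had : (0:ℝ) < a ^ d₁ := Real.rpow_pos_of_pos ha _
      have hUy : U y ≤ c * E := by nlinarith
      rw [← hbE] at hUy
      exact (hsm.le_iff_le (mem_Ioi.mpr hy0) (mem_Ioi.mpr hb)).mp hUy
    · -- b ≤ c^{1/d₂} a
      set y : ℝ := c ^ (1/d₂) * a with hy_def
      have hcp : (0:ℝ) < c ^ (1/d₂) := Real.rpow_pos_of_pos hc _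
      have hy0 : 0 < y := mul_pos hcp ha
      have hyle : y ≤ a := by
        have : c ^ (1/d₂) ≤ 1 := Real.rpow_le_one hc.le hc1 (by positivity)
        nlinarith
      have h := ratio2 y a hy0 hyle
      have hyd : y ^ d₂ = c * a ^ d₂ := by
        rw [hy_def, Real.mul_rpow hcp.le ha.le, rpc _ _ hc.le hd₂.ne']
      rw [hyd, haE] at h
      have had : (0:ℝ) < a ^ d₂ := Real.rpow_pos_of_pos ha _
      have hUy : c * E ≤ U y := by nlinarith
      rw [← hbE] at hUy
      exact (hsm.le_iff_le (mem_Ioi.mpr hb) (mem_Ioi.mpr hy0)).mp hUy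
  have rootT : ∀ E : ℝ, 0 < E → ∀ a, 0 < a → U a = E → ∀ T : ℝ, 1 ≤ T →
      ∀ cc, 0 < cc → U cc = T * E → cc ≤ T ^ (1/d₁) * a := by
    intro E hE a ha haE T hT cc hcc hccE
    set x : ℝ := T ^ (1/d₁) * a with hx_def
    have hT0 : (0:ℝ) < T := lt_of_lt_of_le one_pos hT
    have hTp : (1:ℝ) ≤ T ^ (1/d₁) := by
      calc (1:ℝ) = (1:ℝ) ^ (1/d₁) := (Real.one_rpow _).symm
        _ ≤ T ^ (1/d₁) := Real.rpow_le_rpow zero_le_one hT (by positivity)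
    have hax : a ≤ x := by nlinarith
    have hx0 : 0 < x := lt_of_lt_of_le ha hax
    have h := ratio1 a x ha hax
    have hxd : x ^ d₁ = T * a ^ d₁ := by
      rw [hx_def, Real.mul_rpow (by positivity) ha.le, rpc _ _ hT0.le hd₁.ne']
    rw [hxd, haE] at h
    have had : (0:ℝ) < a ^ d₁ := Real.rpow_pos_of_pos ha _
    have hUx : T * E ≤ U x := by nlinarith
    rw [← hccE] at hUx
    exact (hsm.le_iff_le (mem_Ioi.mpr hcc) (mem_Ioi.mpr hx0)).mp hUx
  constructor
  · -- part 1
    intro E c hE hc hc1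
    obtain ⟨a, ha, haE⟩ := root E hE
    obtain ⟨b, hb, hbE⟩ := root (c * E) (by positivity)
    rw [hmeas E a ha haE, hmeas (c * E) b hb hbE]
    exact rootA E hE a ha haE c hc hc1.le b hb hbE
  · -- part 2
    intro E c T hE hc hc1 hT
    obtain ⟨a, ha, haE⟩ := root E hE
    obtain ⟨b, hb, hbE⟩ := root (c * E) (by positivity)
    obtain ⟨cc, hcc, hccE⟩ := root (T * E) (by positivity)
    have hT0 : (0:ℝ) < T := lt_of_lt_of_le one_pos hT
    obtain ⟨h1, h2⟩ := rootA E hE a ha haE c hc hc1.le b hb hbE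
    have h3 := rootT E hE a ha haE T hT cc hcc hccE
    rw [hmeas (T * E) cc hcc hccE]
    -- middle set is Icc b a
    have hba : b ≤ a := by
      have : U b ≤ U a := by rw [haE, hbE]; nlinarith
      exact (hsm.le_iff_le (mem_Ioi.mpr hb) (mem_Ioi.mpr ha)).mp this
    have hset : {x : ℝ | 0 < x ∧ c * E ≤ U x ∧ U x ≤ E} = Set.Icc b a := by
      ext x
      simp only [mem_setOf_eq, mem_Icc]
      constructor
      · rintro ⟨hx, hcx, hxE⟩
        constructor
        · have : U b ≤ U x := by rw [hbE]; exact hcx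
          exact (hsm.le_iff_le (mem_Ioi.mpr hb) (mem_Ioi.mpr hx)).mp this
        · have : U x ≤ U a := by rw [haE]; exact hxE
          exact (hsm.le_iff_le (mem_Ioi.mpr hx) (mem_Ioi.mpr ha)).mp this
      · rintro ⟨hbx, hxa⟩
        have hx : 0 < x := lt_of_lt_of_le hb hbx
        refine ⟨hx, ?_, ?_⟩
        · rw [← hbE]
          exact hsm.monotoneOn (mem_Ioi.mpr hb) (mem_Ioi.mpr hx) hbx
        · rw [← haE]
          exact hsm.monotoneOn (mem_Ioi.mpr hx) (mem_Ioi.mpr ha) hxa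
    rw [hset, Real.volume_Icc, ENNReal.toReal_ofReal (by linarith)]
    -- numeric conclusion
    have hcd2 : c ^ (1/d₂) ≤ 1 := Real.rpow_le_one hc.le hc1.le (by positivity)
    have hTn : (0:ℝ) < T ^ (-(1/d₁)) := Real.rpow_pos_of_pos hT0 _
    have hTc : T ^ (-(1/d₁)) * T ^ (1/d₁) = 1 := by
      rw [Real.rpow_neg hT0.le, inv_mul_cancel₀ (Real.rpow_pos_of_pos hT0 _).ne']
    have hstep : T ^ (-(1/d₁)) * cc ≤ a := by
      have := mul_le_mul_of_nonneg_left h3 hTn.le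
      rw [← mul_assoc, hTc, one_mul] at this
      exact this
    -- (1 - c^{1/d₂}) * T^{-(1/d₁)} * cc ≤ (1 - c^{1/d₂}) * a ≤ a - b
    have hfin : (1 - c ^ (1/d₂)) * (T ^ (-(1/d₁)) * cc) ≤ (1 - c ^ (1/d₂)) * a :=
      mul_le_mul_of_nonneg_left hstep (by linarith)
    nlinarith
end
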